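/- arXiv:1602.01879 — 10 statements merged into one kernel-verified Lean document; each statement's English description precedes it below -/
import Mathlib

section
/- Let (V, ‖·‖) be a Minkowski plane and let x, y ∈ S be linearly independent unit vectors. Let T : V → V be the linear map determined by T(x) = x and T(y) = −y. Then the following three statements are equivalent: (a) the bisector bis(−x, x) contains the line through 0 and y (i.e., {t·y : t ∈ ℝ} ⊆ bis(−x,x)); (b) x ⊣_R y; (c) the unit circle S is invariant under T, i.e., T(S) = S. -/
/-- The bisector of two points in a normed space. -/
def bisector {V : Type*} [NormedAddCommGroup V] (x y : V) : Set V :=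
  {z : V | ‖z - x‖ = ‖z - y‖}

/-- Roberts orthogonality: `‖x + t y‖ = ‖x - t y‖` for all real `t`. -/
def RobertsOrth {V : Type*} [NormedAddCommGroup V] [NormedSpace ℝ V] (x y : V) : Prop :=
  ∀ t : ℝ, ‖x + t • y‖ = ‖x - t • y‖

/-- **Theorem (characterizations of Roberts orthogonality).**
Let `(V, ‖·‖)` be a Minkowski plane and `x, y` linearly independent unit vectors, and let
`T` be the linear map with `T x = x` and `T y = -y`.  Then the following are equivalent:
(a) the bisector of `-x` and `x` contains the line through `0` and `y`;
(b) `x` is Roberts orthogonal to `y`;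
(c) the unit circle is invariant under `T`. -/
theorem roberts_orthogonality_characterizations
    (V : Type*) [NormedAddCommGroup V] [NormedSpace ℝ V]
    (hdim : Module.finrank ℝ V = 2)
    (x y : V) (hx : ‖x‖ = 1) (hy : ‖y‖ = 1)
    (hind : LinearIndependent ℝ ![x, y])
    (T : V →ₗ[ℝ] V) (hTx : T x = x) (hTy : T y = -y) :
    (({z : V | ∃ t : ℝ, z = t • y} ⊆ bisector (-x) x) ↔ RobertsOrth x y) ∧
    (RobertsOrth x y ↔ T '' (Metric.sphere (0 : V) 1) = Metric.sphere (0 : V) 1) := by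
  -- a basis from the linearly independent family
  have hcard : Fintype.card (Fin 2) = Module.finrank ℝ V := by simp [hdim]
  let b : Module.Basis (Fin 2) ℝ V := basisOfLinearIndependentOfCardEqFinrank hind hcard
  have hb : ∀ i, b i = ![x, y] i := fun i => by
    simp [b, coe_basisOfLinearIndependentOfCardEqFinrank]
  have hb0 : b 0 = x := hb 0
  have hb1 : b 1 = y := hb 1
  have hdecomp : ∀ v : V, ∃ a c : ℝ, v = a • x + c • y := by
    intro v
    refine ⟨b.repr v 0, b.repr v 1, ?_⟩
    have := b.sum_repr v
    rw [Fin.sum_univ_two, hb0, hb1] at this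
    exact this.symm
  -- T v computed on a decomposition
  have hT : ∀ a c : ℝ, T (a • x + c • y) = a • x - c • y := by
    intro a c
    simp [map_add, map_smul, hTx, hTy, smul_neg, sub_eq_add_neg]
  -- T ∘ T = id
  have hTT : ∀ v : V, T (T v) = v := by
    intro v
    obtain ⟨a, c, rfl⟩ := hdecomp v
    rw [hT, sub_eq_add_neg, ← neg_smul, hT]
    simp
  -- Roberts implies T is norm-preserving
  have hRnorm : RobertsOrth x y → ∀ v : V, ‖T v‖ = ‖v‖ := by
    intro hR v
    obtain ⟨a, c, rfl⟩ := hdecomp v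
    rw [hT]
    rcases eq_or_ne a 0 with rfl | ha
    · simp
    · have h1 : a • x + c • y = a • (x + (c / a) • y) := by
        rw [smul_add, smul_smul, mul_div_cancel₀ _ ha]
      have h2 : a • x - c • y = a • (x - (c / a) • y) := by
        rw [smul_sub, smul_smul, mul_div_cancel₀ _ ha]
      rw [h1, h2, norm_smul, norm_smul, hR (c / a)]
  constructor
  · -- (a) ↔ (b)
    constructor
    · intro h t
      have := h ⟨t, rfl⟩
      simp only [bisector, Set.mem_setOf_eq, sub_neg_eq_add] at this
      rw [← norm_neg (t • y - x)] at this
      rw [add_comm] at this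
      simpa [sub_eq_add_neg, add_comm] using this
    · intro hR z hz
      obtain ⟨t, rfl⟩ := hz
      simp only [bisector, Set.mem_setOf_eq, sub_neg_eq_add]
      rw [← norm_neg (t • y - x)]
      have := hR t
      rw [add_comm x (t • y)] at this
      simpa [sub_eq_add_neg, add_comm] using this
  · -- (b) ↔ (c)
    constructor
    · intro hR
      have hn := hRnorm hR
      ext w
      simp only [Set.mem_image, mem_sphere_iff_norm, sub_zero]
      constructor
      · rintro ⟨v, hv, rfl⟩
        rw [hn]; exact hv
      · intro hw
        exact ⟨T w, by rw [hn]; exact hw, hTT w⟩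
    · intro hS
      have hn : ∀ v : V, ‖T v‖ = ‖v‖ := by
        intro v
        rcases eq_or_ne v 0 with rfl | hv
        · simp
        · have hnv : ‖v‖ ≠ 0 := norm_ne_zero_iff.mpr hv
          have hu : ‖(‖v‖⁻¹ • v)‖ = 1 := by
            rw [norm_smul, norm_inv, norm_norm, inv_mul_cancel₀ hnv]
          have : T (‖v‖⁻¹ • v) ∈ Metric.sphere (0 : V) 1 := by
            rw [← hS]
            exact ⟨_, by simpa using hu, rfl⟩
          rw [mem_sphere_iff_norm, sub_zero, map_smul, norm_smul, norm_inv,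
            norm_norm] at this
          have := mul_left_cancel₀ (inv_ne_zero hnv)
            (this.trans (inv_mul_cancel₀ hnv).symm)
          rw [this]
      intro t
      have := hn (x + t • y)
      rw [map_add, map_smul, hTx, hTy, smul_neg, ← sub_eq_add_neg] at this
      exact this.symm
end

section
/- Let (V, ‖·‖) be a Minkowski plane. If for every pair of distinct points x, y ∈ V the bisector bis(x,y) contains an affine line, then for every pair of distinct points x, y ∈ V the bisector bis(x,y) is exactly an affine line. -/
/-- An affine line: a set of the form `{p + t v : t ∈ ℝ}` with `v ≠ 0`. -/
def IsAffineLine {V : Type*} [AddCommGroup V] [Module ℝ V] (l : Set V) : Prop :=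
  ∃ p v : V, v ≠ 0 ∧ l = {z : V | ∃ t : ℝ, z = p + t • v}

section Helpers

variable {V : Type*} [NormedAddCommGroup V] [NormedSpace ℝ V]

/-- The unit sphere contains a nontrivial segment. -/
def FlatSphere (V : Type*) [NormedAddCommGroup V] : Prop :=
  ∃ u₀ w₀ : V, ‖u₀‖ = 1 ∧ ‖w₀‖ = 1 ∧ ‖u₀ + w₀‖ = 2 ∧ u₀ ≠ w₀

/-- Convexity of `s ↦ ‖c + s • w‖`, quantitative form. -/
lemma lem3 (c w : V) {q p r : ℝ} (hqp : q < p) (hpr : p < r) :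
    (r - q) * ‖c + p • w‖ ≤ (r - p) * ‖c + q • w‖ + (p - q) * ‖c + r • w‖ := by
  have key : (r - q) • (c + p • w) = (r - p) • (c + q • w) + (p - q) • (c + r • w) := by
    module
  have h1 : ‖(r - q) • (c + p • w)‖ = (r - q) * ‖c + p • w‖ := by
    rw [norm_smul, Real.norm_eq_abs, abs_of_pos (by linarith)]
  have h2 : ‖(r - p) • (c + q • w)‖ = (r - p) * ‖c + q • w‖ := by
    rw [norm_smul, Real.norm_eq_abs, abs_of_pos (by linarith)]
  have h3 : ‖(p - q) • (c + r • w)‖ = (p - q) * ‖c + r • w‖ := by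
    rw [norm_smul, Real.norm_eq_abs, abs_of_pos (by linarith)]
  calc (r - q) * ‖c + p • w‖ = ‖(r - p) • (c + q • w) + (p - q) • (c + r • w)‖ := by
        rw [← h1, key]
    _ ≤ _ := by rw [← h2, ← h3]; exact norm_add_le _ _

/-- Monotonicity of unit increments of the convex function `s ↦ ‖c + s • w‖`. -/
lemma lem2 (c w : V) {a b : ℝ} (hab : a ≤ b) :
    ‖c + a • w‖ + ‖c + (b - 1) • w‖ ≤ ‖c + (a - 1) • w‖ + ‖c + b • w‖ := by
  rcases eq_or_lt_of_le hab with rfl | hab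
  · linarith
  · have i1 := lem3 c w (q := a - 1) (p := a) (r := b) (by linarith) hab
    have i2 := lem3 c w (q := a - 1) (p := b - 1) (r := b) (by linarith) (by linarith)
    nlinarith [norm_nonneg (c + a • w), norm_nonneg (c + (b - 1) • w)]

/-- If the unit increment vanishes at two points, it vanishes in between. -/
lemma lem4 (c w : V) {t₀ t₁ r : ℝ}
    (h₀ : ‖c + t₀ • w‖ = ‖c + (t₀ - 1) • w‖) (h₁ : ‖c + t₁ • w‖ = ‖c + (t₁ - 1) • w‖)
    (hr₀ : t₀ ≤ r) (hr₁ : r ≤ t₁) :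
    ‖c + r • w‖ = ‖c + (r - 1) • w‖ := by
  have i1 := lem2 c w (a := r) (b := t₁) hr₁
  have i2 := lem2 c w (a := t₀) (b := r) hr₀
  linarith

/-- Positive-direction case of the segment lemma. -/
lemma lemSEGpos (c w : V) (hw : w ≠ 0) {τ : ℝ} (hτ : 0 < τ)
    (h0 : ‖c‖ = ‖c - w‖) (h1 : ‖c + τ • w‖ = ‖c + (τ - 1) • w‖) : FlatSphere V := by
  set φ : ℝ → ℝ := fun s => ‖c + s • w‖ with hφ
  have hψ0 : φ 0 = φ (0 - 1) := by
    simp only [hφ, zero_smul, add_zero, zero_sub, neg_smul, one_smul]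
    rw [← sub_eq_add_neg]; exact h0
  have hψτ : φ τ = φ (τ - 1) := h1
  have hbetween : ∀ s : ℝ, 0 ≤ s → s ≤ τ → φ s = φ (s - 1) := fun s hs hs' =>
    lem4 c w hψ0 hψτ hs hs'
  have hcont : Continuous φ := (continuous_const.add (continuous_id.smul continuous_const)).norm
  obtain ⟨m, hmIcc, hmin'⟩ := (isCompact_Icc (a := (-1:ℝ)) (b := τ)).exists_isMinOn
    (Set.nonempty_Icc.mpr (by linarith)) hcont.continuousOn
  have hmin : ∀ s ∈ Set.Icc (-1:ℝ) τ, φ m ≤ φ s := fun s hs => hmin' hs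
  by_cases hA : ∃ s₀, s₀ ∈ Set.Icc (0:ℝ) τ ∧ φ s₀ = φ m
  · obtain ⟨s₀, hs₀, hfs₀⟩ := hA
    have hs₀0 : (0:ℝ) ≤ s₀ := hs₀.1
    have hs₀τ : s₀ ≤ τ := hs₀.2
    have h1' : φ (s₀ - 1) = φ m := by
      rw [← hbetween s₀ hs₀0 hs₀τ]; exact hfs₀
    have hmid : φ (s₀ - 1/2) = φ m := by
      have hle : φ (s₀ - 1/2) ≤ φ m := by
        have := lem3 c w (q := s₀ - 1) (p := s₀ - 1/2) (r := s₀) (by linarith) (by linarith)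
        simp only [show ∀ s, ‖c + s • w‖ = φ s from fun s => rfl] at this
        have e1 : φ (s₀ - 1) = φ m := h1'
        have e2 : φ s₀ = φ m := hfs₀
        nlinarith [this]
      have hge : φ m ≤ φ (s₀ - 1/2) :=
        hmin _ (Set.mem_Icc.mpr ⟨by linarith, by linarith⟩)
      linarith
    have hR : 0 < φ m := by
      rcases lt_or_eq_of_le (norm_nonneg (c + m • w)) with h | h
      · exact h
      · exfalso
        have hm0 : φ m = 0 := h.symm
        have e1 : c + s₀ • w = 0 := by
          have : φ s₀ = 0 := by rw [hfs₀, hm0]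
          exact norm_eq_zero.mp this
        have e2 : c + (s₀ - 1) • w = 0 := by
          have : φ (s₀ - 1) = 0 := by rw [h1', hm0]
          exact norm_eq_zero.mp this
        apply hw
        have : (c + s₀ • w) - (c + (s₀ - 1) • w) = w := by module
        rw [e1, e2] at this; simpa using this.symm
    refine ⟨(φ m)⁻¹ • (c + (s₀ - 1) • w), (φ m)⁻¹ • (c + s₀ • w), ?_, ?_, ?_, ?_⟩
    · rw [norm_smul, Real.norm_eq_abs, abs_of_pos (inv_pos.mpr hR)]
      rw [show ‖c + (s₀ - 1) • w‖ = φ m from h1']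
      field_simp
    · rw [norm_smul, Real.norm_eq_abs, abs_of_pos (inv_pos.mpr hR)]
      rw [show ‖c + s₀ • w‖ = φ m from hfs₀]
      field_simp
    · have key : (φ m)⁻¹ • (c + (s₀ - 1) • w) + (φ m)⁻¹ • (c + s₀ • w)
          = (φ m)⁻¹ • ((2:ℝ) • (c + (s₀ - 1/2) • w)) := by module
      rw [key, norm_smul, norm_smul, Real.norm_eq_abs, Real.norm_eq_abs,
        abs_of_pos (inv_pos.mpr hR), abs_of_pos (by norm_num : (0:ℝ) < 2)]
      rw [show ‖c + (s₀ - 1/2) • w‖ = φ m from hmid]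
      field_simp
    · intro hcontra
      have := smul_right_injective V (ne_of_gt (inv_pos.mpr hR)) hcontra
      apply hw
      have h' : (c + s₀ • w) - (c + (s₀ - 1) • w) = w := by module
      rw [← this] at h'; simpa using h'.symm
  · exfalso
    push_neg at hA
    have hstrict : ∀ s ∈ Set.Icc (0:ℝ) τ, φ m < φ s := by
      intro s hs
      have h1 : φ m ≤ φ s := hmin s (Set.mem_Icc.mpr ⟨by linarith [hs.1], hs.2⟩)
      exact lt_of_le_of_ne h1 (fun he => hA s hs he.symm)
    have hm0 : m < 0 := by
      by_contra hc
      push_neg at hc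
      exact absurd rfl (ne_of_gt (hstrict m (Set.mem_Icc.mpr ⟨hc, hmIcc.2⟩)))
    have hφ0 : φ m < φ 0 := hstrict 0 (Set.mem_Icc.mpr ⟨le_refl _, le_of_lt hτ⟩)
    have hφτ : φ m < φ τ := hstrict τ (Set.mem_Icc.mpr ⟨le_of_lt hτ, le_refl _⟩)
    have hm1 : -1 < m := by
      rcases lt_or_eq_of_le hmIcc.1 with h | h
      · exact h
      · exfalso
        have : φ m = φ 0 := by rw [← h, hψ0]; norm_num
        linarith
    rcases le_or_gt 1 τ with h1τ | h1τ
    · -- τ ≥ 1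
      have hφ1 : φ 1 = φ 0 := by
        have := hbetween 1 (by norm_num) h1τ
        rw [this]; norm_num
      have := lem3 c w (q := m) (p := 0) (r := 1) hm0 one_pos
      simp only [show ∀ s, ‖c + s • w‖ = φ s from fun s => rfl] at this
      nlinarith
    · rcases lt_trichotomy m (τ - 1) with hB1 | hB2 | hB3
      · have := lem3 c w (q := m) (p := τ - 1) (r := τ) hB1 (by linarith)
        simp only [show ∀ s, ‖c + s • w‖ = φ s from fun s => rfl] at this
        nlinarith
      · rw [← hB2] at hψτ; linarith
      · have hstep1 : φ 0 < φ τ := by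
          have := lem3 c w (q := m) (p := 0) (r := τ) hm0 hτ
          simp only [show ∀ s, ‖c + s • w‖ = φ s from fun s => rfl] at this
          nlinarith
        have hstep2 : φ (τ - 1) < φ (0 - 1) := by
          have := lem3 c w (q := -1) (p := τ - 1) (r := m) (by linarith) hB3
          simp only [show ∀ s, ‖c + s • w‖ = φ s from fun s => rfl] at this
          have hmlt : φ m < φ (τ - 1) := by rw [← hψτ]; exact hφτ
          have e : φ (0 - 1) = φ (-1) := by norm_num
          rw [e]
          nlinarith
        rw [← hψ0] at hstep2
        linarith

/-- If two points of a bisector-type configuration differ by a nonzero multiple of `w`,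
the sphere has a flat segment. -/
lemma lemSEG (c w : V) (hw : w ≠ 0) {τ : ℝ} (hτ : τ ≠ 0)
    (h0 : ‖c‖ = ‖c - w‖) (h1 : ‖c + τ • w‖ = ‖c + (τ - 1) • w‖) : FlatSphere V := by
  rcases lt_or_gt_of_ne hτ with hneg | hpos
  · apply lemSEGpos (c + τ • w) w hw (τ := -τ) (by linarith)
    · exact h1.trans (by rw [show c + (τ - 1) • w = c + τ • w - w by module])
    · rw [show c + τ • w + (-τ) • w = c by module,
        show c + τ • w + (-τ - 1) • w = c - w by module]
      exact h0
  · exact lemSEGpos c w hw hpos h0 h1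

end Helpers

section Dim2

variable {V : Type*} [NormedAddCommGroup V] [NormedSpace ℝ V]

/-- In a 2-dimensional space, two non-parallel nonzero vectors span everything. -/
lemma span_pair_all (hdim : Module.finrank ℝ V = 2) {v w' : V} (hv : v ≠ 0)
    (hind : ∀ κ : ℝ, w' ≠ κ • v) : ∀ z : V, ∃ s t : ℝ, z = s • v + t • w' := by
  have hfd : FiniteDimensional ℝ V := FiniteDimensional.of_finrank_eq_succ hdim
  have hli : LinearIndependent ℝ ![v, w'] :=
    (LinearIndependent.pair_iff' hv).mpr (fun a ha => hind a ha.symm)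
  have hsp : Submodule.span ℝ (Set.range ![v, w']) = ⊤ := by
    apply Submodule.eq_top_of_finrank_eq
    rw [finrank_span_eq_card hli]
    simpa using hdim.symm
  intro z
  have hz : z ∈ Submodule.span ℝ ({v, w'} : Set V) := by
    have : (Set.range ![v, w'] : Set V) = {v, w'} := by
      ext x
      simp [Matrix.range_cons, Matrix.range_empty]
      tauto
    rw [← this, hsp]
    trivial
  obtain ⟨s, t, hst⟩ := Submodule.mem_span_pair.mp hz
  exact ⟨s, t, hst.symm⟩

end Dim2

section Bad

variable {V : Type*} [NormedAddCommGroup V] [NormedSpace ℝ V]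

set_option maxHeartbeats 2000000 in
/-- If the sphere has a flat segment, some bisector contains no affine line. -/
lemma lemBAD (hdim : Module.finrank ℝ V = 2)
    (h : ∀ x y : V, x ≠ y → ∃ l : Set V, IsAffineLine l ∧ l ⊆ bisector x y)
    (hfl : FlatSphere V) : False := by
  obtain ⟨u₀, w₀, hu₀, hw₀, hsum, hne⟩ := hfl
  have hFD : FiniteDimensional ℝ V := FiniteDimensional.of_finrank_eq_succ hdim
  have hm₀ : u₀ + w₀ ≠ 0 := by
    intro hc; rw [hc] at hsum; simp at hsum
  obtain ⟨f, hf1, hfm⟩ := exists_dual_vector ℝ (u₀ + w₀) (norm_ne_zero_iff.mpr hm₀)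
  have hfb : ∀ z : V, f z ≤ ‖z‖ := by
    intro z
    calc f z ≤ |f z| := le_abs_self _
      _ = ‖f z‖ := (Real.norm_eq_abs _).symm
      _ ≤ ‖f‖ * ‖z‖ := f.le_opNorm z
      _ = ‖z‖ := by rw [hf1, one_mul]
  have hfm' : f (u₀ + w₀) = 2 := by
    have : f (u₀ + w₀) = ‖u₀ + w₀‖ := by exact_mod_cast hfm
    rw [this, hsum]
  have hadd : f u₀ + f w₀ = 2 := by rw [← map_add]; exact hfm'
  have hb1 := hfb u₀
  have hb2 := hfb w₀
  rw [hu₀] at hb1; rw [hw₀] at hb2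
  have hfu₀ : f u₀ = 1 := by linarith
  have hfw₀ : f w₀ = 1 := by linarith
  set d := w₀ - u₀ with hd_def
  have hd : d ≠ 0 := sub_ne_zero.mpr (Ne.symm hne)
  have hfd0 : f d = 0 := by rw [hd_def, map_sub, hfu₀, hfw₀]; ring
  -- the kernel of f is spanned by d
  have hker : ∀ ξ : V, f ξ = 0 → ∃ s : ℝ, ξ = s • d := by
    have hrange : LinearMap.range (f : V →ₗ[ℝ] ℝ) = ⊤ := by
      rw [LinearMap.range_eq_top]
      intro r
      refine ⟨r • u₀, ?_⟩
      simp [hfu₀]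
    have hsum' := LinearMap.finrank_range_add_finrank_ker (f : V →ₗ[ℝ] ℝ)
    rw [hrange, hdim] at hsum'
    have htop : Module.finrank ℝ (⊤ : Submodule ℝ ℝ) = 1 := by simp
    have hkerfin : Module.finrank ℝ (LinearMap.ker (f : V →ₗ[ℝ] ℝ)) = 1 := by omega
    have hspanle : Submodule.span ℝ {d} ≤ LinearMap.ker (f : V →ₗ[ℝ] ℝ) := by
      rw [Submodule.span_singleton_le_iff_mem]
      simpa using hfd0
    have hkereq : Submodule.span ℝ {d} = LinearMap.ker (f : V →ₗ[ℝ] ℝ) := by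
      apply Submodule.eq_of_le_of_finrank_le hspanle
      rw [hkerfin, finrank_span_singleton hd]
    intro ξ hξ
    have hmem : ξ ∈ Submodule.span ℝ ({d} : Set V) := by
      rw [hkereq]
      simpa using hξ
    obtain ⟨s, hs⟩ := Submodule.mem_span_singleton.mp hmem
    exact ⟨s, hs.symm⟩
  -- the maximal flat edge
  set S := {s : ℝ | ‖u₀ + s • d‖ ≤ 1} with hS_def
  have h0S : (0:ℝ) ∈ S := by simp [hS_def, hu₀]
  have h1S : (1:ℝ) ∈ S := by
    have e : u₀ + (1:ℝ) • d = w₀ := by rw [hd_def]; module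
    show ‖u₀ + (1:ℝ) • d‖ ≤ 1
    rw [e, hw₀]
  have hnd : 0 < ‖d‖ := norm_pos_iff.mpr hd
  have hSsub : S ⊆ Set.Icc (-(2/‖d‖)) (2/‖d‖) := by
    intro s hs
    have h1 : ‖(u₀ + s • d) - u₀‖ ≤ ‖u₀ + s • d‖ + ‖u₀‖ := norm_sub_le _ _
    have e : (u₀ + s • d) - u₀ = s • d := by module
    rw [e, norm_smul, Real.norm_eq_abs, hu₀] at h1
    have hs' : ‖u₀ + s • d‖ ≤ 1 := hs
    have h2 : |s| * ‖d‖ ≤ 2 := by linarith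
    have h3 : |s| ≤ 2/‖d‖ := by
      rw [le_div_iff₀ hnd]; exact h2
    exact abs_le.mp h3
  have hSclosed : IsClosed S := by
    have : S = (fun s : ℝ => ‖u₀ + s • d‖) ⁻¹' Set.Iic 1 := rfl
    rw [this]
    exact IsClosed.preimage
      ((continuous_const.add (continuous_id.smul continuous_const)).norm) isClosed_Iic
  have hScompact : IsCompact S :=
    (isCompact_Icc).of_isClosed_subset hSclosed hSsub
  have hSne : S.Nonempty := ⟨0, h0S⟩
  have hbddA : BddAbove S := ⟨2/‖d‖, fun x hx => (hSsub hx).2⟩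
  have hbddB : BddBelow S := ⟨-(2/‖d‖), fun x hx => (hSsub hx).1⟩
  set sP := sSup S with hsP_def
  set sM := sInf S with hsM_def
  have hsPS : sP ∈ S := hScompact.sSup_mem hSne
  have hsMS : sM ∈ S := hScompact.sInf_mem hSne
  have hsM0 : sM ≤ 0 := csInf_le hbddB h0S
  have hsP1 : 1 ≤ sP := le_csSup hbddA h1S
  have hMP : sM < sP := lt_of_le_of_lt hsM0 (lt_of_lt_of_le one_pos hsP1)
  set u := u₀ + sM • d with hu_def
  set w := u₀ + sP • d with hw_def
  have hfu' : f u = 1 := by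
    rw [hu_def]; rw [map_add, map_smul, hfd0, hfu₀]; simp
  have hfw' : f w = 1 := by
    rw [hw_def]; rw [map_add, map_smul, hfd0, hfu₀]; simp
  have hnu : ‖u‖ = 1 := le_antisymm hsMS (by rw [← hfu']; exact hfb u)
  have hnw : ‖w‖ = 1 := le_antisymm hsPS (by rw [← hfw']; exact hfb w)
  have huw : u - w ≠ 0 := by
    intro hc
    apply hd
    have e : u - w = (sM - sP) • d := by rw [hu_def, hw_def]; module
    rw [e] at hc
    rcases smul_eq_zero.mp hc with h' | h'
    · exfalso; exact (ne_of_lt hMP) (by linarith [sub_eq_zero.mp h'])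
    · exact h'
  -- coordinates w.r.t. u, w are unique
  have huniq : ∀ a b a' b' : ℝ, a • u + b • w = a' • u + b' • w → a = a' ∧ b = b' := by
    intro a b a' b' he
    have hfe : a + b = a' + b' := by
      have h1 := congrArg f he
      rw [map_add, map_add, map_smul, map_smul, map_smul, map_smul, hfu', hfw'] at h1
      simpa using h1
    have key : (a - a') • (u - w)
        = (a • u + b • w) - (a' • u + b' • w) + ((a' + b') - (a + b)) • w := by
      module
    rw [he, sub_self, zero_add, show (a' + b') - (a + b) = 0 by linarith, zero_smul] at key
    rcases smul_eq_zero.mp key with h' | h'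
    · have ha : a = a' := by linarith [sub_eq_zero.mp (by linarith [h'] : a - a' = 0)]
      exact ⟨ha, by linarith⟩
    · exact absurd h' huw
  -- the cone formula
  have hK1 : ∀ a b : ℝ, 0 ≤ a → 0 ≤ b → ‖a • u + b • w‖ = a + b := by
    intro a b ha hb
    apply le_antisymm
    · calc ‖a • u + b • w‖ ≤ ‖a • u‖ + ‖b • w‖ := norm_add_le _ _
        _ = a + b := by
          rw [norm_smul, norm_smul, hnu, hnw, Real.norm_eq_abs, Real.norm_eq_abs,
            abs_of_nonneg ha, abs_of_nonneg hb]; ring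
    · calc a + b = f (a • u + b • w) := by
            rw [map_add, map_smul, map_smul, hfu', hfw']; simp
        _ ≤ ‖a • u + b • w‖ := hfb _
  -- conversely, vectors with norm = f-value lie in the cone
  have hK2 : ∀ ζ : V, ‖ζ‖ = f ζ → ∃ a b : ℝ, 0 ≤ a ∧ 0 ≤ b ∧ ζ = a • u + b • w := by
    intro ζ hζ
    by_cases hζ0 : ζ = 0
    · exact ⟨0, 0, le_refl _, le_refl _, by simp [hζ0]⟩
    · have hr : 0 < ‖ζ‖ := norm_pos_iff.mpr hζ0
      have hfr : f (‖ζ‖⁻¹ • ζ) = 1 := by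
        rw [map_smul]
        rw [show f ζ = ‖ζ‖ from hζ.symm]
        simp [ne_of_gt hr]
      have hξ : f (‖ζ‖⁻¹ • ζ - u₀) = 0 := by rw [map_sub, hfr, hfu₀]; ring
      obtain ⟨s, hs⟩ := hker _ hξ
      have hrep : ‖ζ‖⁻¹ • ζ = u₀ + s • d := by
        rw [← hs]; module
      have hsS : s ∈ S := by
        have : ‖u₀ + s • d‖ = 1 := by
          rw [← hrep, norm_smul, Real.norm_eq_abs, abs_of_pos (inv_pos.mpr hr)]
          field_simp
        exact le_of_eq this
      have hsM' : sM ≤ s := csInf_le hbddB hsS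
      have hsP' : s ≤ sP := le_csSup hbddA hsS
      set lam := (sP - s)/(sP - sM) with hlam_def
      have hMPne : sP - sM ≠ 0 := by linarith
      have hlam0 : 0 ≤ lam := div_nonneg (by linarith) (by linarith)
      have hlam1 : lam ≤ 1 := by
        rw [hlam_def, div_le_one (by linarith)]; linarith
      have hcoef : lam * sM + (1 - lam) * sP = s := by
        rw [hlam_def]; field_simp; ring
      have hrep2 : ‖ζ‖⁻¹ • ζ = lam • u + (1 - lam) • w := by
        rw [hrep, hu_def, hw_def, ← hcoef]
        module
      refine ⟨‖ζ‖ * lam, ‖ζ‖ * (1 - lam), mul_nonneg hr.le hlam0,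
        mul_nonneg hr.le (by linarith), ?_⟩
      calc ζ = ‖ζ‖ • (‖ζ‖⁻¹ • ζ) := by
            rw [smul_smul]; rw [mul_inv_cancel₀ (ne_of_gt hr)]; simp
        _ = ‖ζ‖ • (lam • u + (1 - lam) • w) := by rw [hrep2]
        _ = (‖ζ‖ * lam) • u + (‖ζ‖ * (1 - lam)) • w := by module
  -- the bad pair
  set y' := (2:ℝ) • u + w with hy'_def
  have hfy' : f y' = 3 := by
    rw [hy'_def, map_add, map_smul, hfu', hfw']; norm_num
  have hy'0 : (0:V) ≠ y' := by
    intro hc; rw [← hc] at hfy'; simp at hfy'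
  obtain ⟨l, ⟨p, v, hv, hleq⟩, hlsub⟩ := h 0 y' hy'0
  have hbis : ∀ t : ℝ, ‖p + t • v‖ = ‖p + t • v - y'‖ := by
    intro t
    have hm : p + t • v ∈ l := by rw [hleq]; exact ⟨t, rfl⟩
    have := hlsub hm
    simpa [bisector] using this
  have hy'ne : y' ≠ 0 := Ne.symm hy'0
  have hy'pos : 0 < ‖y'‖ := norm_pos_iff.mpr hy'ne
  -- v is not parallel to y'
  have hvy : ∀ κ : ℝ, y' ≠ κ • v := by
    intro κ hκ
    have hκ0 : κ ≠ 0 := by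
      intro h0'; rw [h0', zero_smul] at hκ; exact hy'ne hκ
    have key : ∀ n : ℕ, ‖p + (n : ℝ) • y'‖ = ‖p‖ := by
      intro n
      induction n with
      | zero => simp
      | succ k ih =>
        have h1 := hbis (((k:ℝ) + 1) * κ)
        have e1 : p + (((k:ℝ) + 1) * κ) • v = p + ((k:ℝ) + 1) • y' := by
          rw [hκ]; module
        have e2 : p + (((k:ℝ) + 1) * κ) • v - y' = p + (k:ℝ) • y' := by
          rw [hκ]; module
        rw [e2, e1] at h1
        push_cast
        rw [h1, ih]
    obtain ⟨n, hn⟩ := exists_nat_gt ((2 * ‖p‖ + 1)/‖y'‖)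
    have h2 : ‖(p + (n:ℝ) • y') - p‖ ≤ ‖p + (n:ℝ) • y'‖ + ‖p‖ := norm_sub_le _ _
    have e : (p + (n:ℝ) • y') - p = (n:ℝ) • y' := by module
    rw [e, norm_smul, Real.norm_eq_abs, abs_of_nonneg (Nat.cast_nonneg n), key n] at h2
    rw [div_lt_iff₀ hy'pos] at hn
    nlinarith [norm_nonneg p]
  have hspan := span_pair_all hdim hv hvy
  -- the middle segment lies in the bisector
  have hz0bis : ∀ β : ℝ, 0 ≤ β → β ≤ 1 →
      ‖(3/2 - β) • u + β • w‖ = ‖((3/2 - β) • u + β • w) - y'‖ := by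
    intro β h0' h1'
    have e1 : ‖(3/2 - β) • u + β • w‖ = 3/2 := by
      rw [hK1 _ _ (by linarith) h0']; ring
    have e2 : ((3/2 - β) • u + β • w) - y' = -((1/2 + β) • u + (1 - β) • w) := by
      rw [hy'_def]; module
    rw [e1, e2, norm_neg, hK1 _ _ (by linarith) (by linarith)]; ring
  -- points of the middle segment lie on the line l
  have hz0l : ∀ β : ℝ, 1/4 ≤ β → β ≤ 1/2 →
      ∃ a : ℝ, (3/2 - β) • u + β • w = p + a • v := by
    intro β hβ1 hβ2
    set z₀ := (3/2 - β) • u + β • w with hz₀_def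
    obtain ⟨s, t, hst⟩ := hspan (z₀ - p)
    refine ⟨s, ?_⟩
    have hz₀eq : z₀ = p + s • v + t • y' := by
      have : z₀ = p + (s • v + t • y') := by
        rw [← hst]; module
      rw [this]; module
    by_cases ht : t = 0
    · rw [ht, zero_smul, add_zero] at hz₀eq; exact hz₀eq
    · exfalso
      have hq := hbis s
      have hψ0' : ‖z₀ + (0:ℝ) • y'‖ = ‖z₀ + ((0:ℝ) - 1) • y'‖ := by
        have e1 : z₀ + (0:ℝ) • y' = z₀ := by module
        have e2 : z₀ + ((0:ℝ) - 1) • y' = z₀ - y' := by module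
        rw [e1, e2]
        exact hz0bis β (by linarith) (by linarith)
      have hψt : ‖z₀ + (-t) • y'‖ = ‖z₀ + ((-t) - 1) • y'‖ := by
        have e1 : z₀ + (-t) • y' = p + s • v := by rw [hz₀eq]; module
        have e2 : z₀ + ((-t) - 1) • y' = p + s • v - y' := by rw [hz₀eq]; module
        rw [e1, e2]; exact hq
      have hcontr : ∀ σ : ℝ, σ ≠ 0 → -(1/8) ≤ σ → σ ≤ 1/8 →
          ‖z₀ + σ • y'‖ = ‖z₀ + (σ - 1) • y'‖ → False := by
        intro σ hσ0 hσlb hσub hσeq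
        have e1 : z₀ + σ • y' = (3/2 - β + 2*σ) • u + (β + σ) • w := by
          rw [hz₀_def, hy'_def]; module
        have e2 : z₀ + (σ - 1) • y' = -((1/2 + β - 2*σ) • u + (1 - β - σ) • w) := by
          rw [hz₀_def, hy'_def]; module
        rw [e1, e2, norm_neg, hK1 _ _ (by linarith) (by linarith),
          hK1 _ _ (by linarith) (by linarith)] at hσeq
        apply hσ0; linarith
      rcases lt_or_gt_of_ne ht with htneg | htpos
      · set σ := min (-t) (1/8) with hσ_def
        have hσpos : 0 < σ := lt_min (by linarith) (by norm_num)
        have hσle : σ ≤ 1/8 := min_le_right _ _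
        have h4 := lem4 z₀ y' hψ0' hψt (le_of_lt hσpos) (min_le_left _ _)
        exact hcontr σ (ne_of_gt hσpos) (by linarith) hσle h4
      · set σ := max (-t) (-(1/8)) with hσ_def
        have hσneg : σ < 0 := max_lt (by linarith) (by norm_num)
        have hσge : -(1/8) ≤ σ := le_max_right _ _
        have h4 := lem4 z₀ y' hψt hψ0' (le_max_left _ _) (le_of_lt hσneg)
        exact hcontr σ (ne_of_lt hσneg) hσge (by linarith) h4
  -- two specific points on the line
  obtain ⟨a, hA⟩ := hz0l (1/4) (le_refl _) (by norm_num)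
  obtain ⟨b, hB⟩ := hz0l (1/2) (by norm_num) (le_refl _)
  -- the extrapolated point is also on the line, hence in the bisector
  have hzb : (1/4 : ℝ) • u + (5/4 : ℝ) • w = p + (4*b - 3*a) • v := by
    calc (1/4 : ℝ) • u + (5/4 : ℝ) • w
        = (4:ℝ) • ((3/2 - (1/2 : ℝ)) • u + (1/2 : ℝ) • w)
          - (3:ℝ) • ((3/2 - (1/4 : ℝ)) • u + (1/4 : ℝ) • w) := by module
      _ = (4:ℝ) • (p + b • v) - (3:ℝ) • (p + a • v) := by rw [hA, hB]
      _ = p + (4*b - 3*a) • v := by module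
  have hzbbis := hbis (4*b - 3*a)
  rw [← hzb] at hzbbis
  have hn1 : ‖(1/4 : ℝ) • u + (5/4 : ℝ) • w‖ = 3/2 := by
    rw [hK1 _ _ (by norm_num) (by norm_num)]; norm_num
  have hz2 : ((1/4 : ℝ) • u + (5/4 : ℝ) • w) - y' = -((7/4 : ℝ) • u + (-(1/4) : ℝ) • w) := by
    rw [hy'_def]; module
  have hnζ : ‖(7/4 : ℝ) • u + (-(1/4) : ℝ) • w‖ = 3/2 := by
    rw [← norm_neg, ← hz2, ← hzbbis, hn1]
  have hfζ : f ((7/4 : ℝ) • u + (-(1/4) : ℝ) • w) = 3/2 := by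
    rw [map_add, map_smul, map_smul, hfu', hfw']; norm_num
  obtain ⟨a', b', ha', hb', hrep⟩ := hK2 _ (by rw [hnζ, hfζ])
  have := huniq _ _ _ _ hrep
  have hb'' : b' = -(1/4) := (this.2).symm
  rw [hb''] at hb'
  norm_num at hb'

end Bad

/-- **Lemma.** If every bisector in a Minkowski plane contains an affine line, then every
bisector is in fact an affine line. -/
theorem every_bisector_is_line_of_every_bisector_contains_line
    (V : Type*) [NormedAddCommGroup V] [NormedSpace ℝ V]
    (hdim : Module.finrank ℝ V = 2)
    (h : ∀ x y : V, x ≠ y → ∃ l : Set V, IsAffineLine l ∧ l ⊆ bisector x y) :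
    ∀ x y : V, x ≠ y → IsAffineLine (bisector x y) := by
  intro x y hxy
  obtain ⟨l, ⟨p, v, hv, hleq⟩, hsub⟩ := h x y hxy
  have hFlat : ¬ FlatSphere V := fun hf => lemBAD hdim h hf
  set w := y - x with hw_def
  have hwne : w ≠ 0 := sub_ne_zero.mpr (Ne.symm hxy)
  have hbs : ∀ t : ℝ, ‖p + t • v - x‖ = ‖p + t • v - y‖ := by
    intro t
    have hm : p + t • v ∈ l := by rw [hleq]; exact ⟨t, rfl⟩
    exact hsub hm
  have hseg : ∀ z : V, ‖z - x‖ = ‖z - y‖ → ∀ τ : ℝ, τ ≠ 0 →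
      ‖z + τ • w - x‖ = ‖z + τ • w - y‖ → False := by
    intro z hz τ hτ hz'
    apply hFlat
    apply lemSEG (z - x) w hwne hτ
    · have e : z - x - w = z - y := by rw [hw_def]; module
      rw [e]; exact hz
    · have e1 : z - x + τ • w = z + τ • w - x := by module
      have e2 : z - x + (τ - 1) • w = z + τ • w - y := by rw [hw_def]; module
      rw [e1, e2]; exact hz'
  have hvw : ∀ κ : ℝ, w ≠ κ • v := by
    intro κ hκ
    have hκ0 : κ ≠ 0 := by
      intro h0'; rw [h0', zero_smul] at hκ; exact hwne hκ
    apply hseg p ?_ κ⁻¹ (inv_ne_zero hκ0) ?_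
    · have := hbs 0; simpa using this
    · have e : p + κ⁻¹ • w = p + (1:ℝ) • v := by
        rw [hκ, smul_smul, inv_mul_cancel₀ hκ0]
      rw [e]
      exact hbs 1
  refine ⟨p, v, hv, ?_⟩
  rw [← hleq]
  apply Set.Subset.antisymm _ hsub
  intro z hz
  have hzbis : ‖z - x‖ = ‖z - y‖ := hz
  obtain ⟨s, t, hst⟩ := span_pair_all hdim hv hvw (z - p)
  have hzeq : z = p + s • v + t • w := by
    have : z = p + (s • v + t • w) := by rw [← hst]; module
    rw [this]; module
  by_cases ht : t = 0
  · rw [hleq]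
    exact ⟨s, by rw [hzeq, ht]; simp⟩
  · exfalso
    apply hseg (p + s • v) (hbs s) t ht
    have e : p + s • v + t • w = z := hzeq.symm
    rw [e]
    exact hzbis
end

section
/- Let (V, ‖·‖) be a Minkowski plane and let x, y ∈ V be distinct points. Then every affine line parallel to y − x intersects bis(x,y). Moreover, every affine line parallel to y − x intersects bis(x,y) in exactly one point if and only if (x,y) is a strict pair. In particular, (V, ‖·‖) is strictly convex if and only if for every pair of distinct points x, y ∈ V every affine line parallel to y − x intersects bis(x,y) in exactly one point. -/
open Metric

/-- The affine line through `p` with direction `v`. -/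
def lineThrough {V : Type*} [AddCommGroup V] [Module ℝ V] (p v : V) : Set V :=
  {z : V | ∃ t : ℝ, z = p + t • v}

/-- `(x, y)` is a strict pair if the unit circle contains no nondegenerate segment
parallel to `y - x`. -/
def StrictPair {V : Type*} [NormedAddCommGroup V] [NormedSpace ℝ V] (x y : V) : Prop :=
  ¬ ∃ a b : V, a ≠ b ∧ segment ℝ a b ⊆ sphere (0 : V) 1 ∧ ∃ t : ℝ, b - a = t • (y - x)

/-- A normed plane is strictly convex if the triangle inequality is strict for nonzero
vectors in distinct directions. -/
def StrictlyConvexNorm (V : Type*) [NormedAddCommGroup V] [NormedSpace ℝ V] : Prop :=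
  ∀ u v : V, u ≠ 0 → v ≠ 0 → (¬ ∃ t : ℝ, 0 < t ∧ v = t • u) → ‖u + v‖ < ‖u‖ + ‖v‖

section AuxLemmas

variable {V : Type*} [NormedAddCommGroup V] [NormedSpace ℝ V]

lemma comb_le0 (w v : V) (a b s r : ℝ) (hsr : s + r = 1) (hs : 0 ≤ s) (hr : 0 ≤ r) :
    ‖w + (s*a + r*b)•v‖ ≤ s*‖w + a•v‖ + r*‖w + b•v‖ := by
  have h : w + (s*a + r*b)•v = s•(w + a•v) + r•(w + b•v) := by
    have hrr : r = 1 - s := by linarith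
    subst hrr; module
  rw [h]
  calc ‖s•(w + a•v) + r•(w + b•v)‖ ≤ ‖s•(w + a•v)‖ + ‖r•(w + b•v)‖ := norm_add_le _ _
    _ = s*‖w + a•v‖ + r*‖w + b•v‖ := by
        rw [norm_smul, norm_smul, Real.norm_of_nonneg hs, Real.norm_of_nonneg hr]

lemma step_up (w v : V) (t : ℝ) (ht : 0 ≤ t) (hw : ‖w‖ ≤ ‖w + (t+1)•v‖) :
    ‖w + t•v‖ ≤ ‖w + (t+1)•v‖ := by
  have h1 : (0:ℝ) < t + 1 := by linarith
  have h := comb_le0 w v 0 (t+1) (1/(t+1)) (t/(t+1))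
    (by field_simp; ring) (by positivity) (by positivity)
  have e1 : (1/(t+1))*0 + (t/(t+1))*(t+1) = t := by field_simp; ring
  rw [e1] at h
  have e0 : w + (0:ℝ)•v = w := by simp
  rw [e0] at h
  have h2 : (1/(t+1)) * ‖w‖ ≤ (1/(t+1)) * ‖w + (t+1)•v‖ := by
    apply mul_le_mul_of_nonneg_left hw; positivity
  have e2 : (1/(t+1)) * ‖w + (t+1)•v‖ + (t/(t+1)) * ‖w + (t+1)•v‖ = ‖w + (t+1)•v‖ := by
    field_simp; ring
  linarith

lemma exists_mem (x y : V) (hxy : x ≠ y) (p : V) :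
    ∃ z, z ∈ lineThrough p (y - x) ∩ bisector x y := by
  have hv0 : y - x ≠ 0 := sub_ne_zero.mpr (Ne.symm hxy)
  have hvn : 0 < ‖y - x‖ := norm_pos_iff.mpr hv0
  set v : V := y - x with hv
  set w : V := p - y with hw
  set u : V := p - x with hu
  set F : ℝ → ℝ := fun t => ‖p + t•v - x‖ - ‖p + t•v - y‖ with hF
  have idx : ∀ t : ℝ, p + t•v - x = w + (t+1)•v := by
    intro t; rw [hv, hw]; module
  have idy : ∀ t : ℝ, p + t•v - y = w + t•v := by
    intro t; rw [hv, hw]; module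
  have idx' : ∀ t : ℝ, p + t•v - x = u + t•v := by
    intro t; rw [hv, hu]; module
  have idy' : ∀ t : ℝ, p + t•v - y = u + (t-1)•v := by
    intro t; rw [hv, hu]; module
  set T : ℝ := max (2*‖w‖/‖v‖) 0 with hT
  set S : ℝ := max (2*‖u‖/‖v‖) 0 with hS
  have hT0 : 0 ≤ T := le_max_right _ _
  have hS0 : 0 ≤ S := le_max_right _ _
  have hTv : 2*‖w‖ ≤ T*‖v‖ := by
    have : 2*‖w‖/‖v‖ ≤ T := le_max_left _ _
    rw [div_le_iff₀ hvn] at this; linarith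
  have hSv : 2*‖u‖ ≤ S*‖v‖ := by
    have : 2*‖u‖/‖v‖ ≤ S := le_max_left _ _
    rw [div_le_iff₀ hvn] at this; linarith
  have hFT : 0 ≤ F T := by
    have hnw : ‖w‖ ≤ ‖w + (T+1)•v‖ := by
      have h1 : ‖(T+1)•v‖ ≤ ‖w + (T+1)•v‖ + ‖w‖ := by
        have := norm_sub_le (w + (T+1)•v) w
        simpa using this
      rw [norm_smul, Real.norm_of_nonneg (by linarith : (0:ℝ) ≤ T+1)] at h1
      nlinarith [norm_nonneg w, norm_nonneg v]
    have := step_up w v T hT0 hnw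
    simp only [hF, idx, idy]; linarith
  have hFS : F (-S) ≤ 0 := by
    have hnw : ‖u‖ ≤ ‖u + (S+1)•(-v)‖ := by
      have h1 : ‖(S+1)•(-v)‖ ≤ ‖u + (S+1)•(-v)‖ + ‖u‖ := by
        have := norm_sub_le (u + (S+1)•(-v)) u
        simpa using this
      rw [norm_smul, norm_neg, Real.norm_of_nonneg (by linarith : (0:ℝ) ≤ S+1)] at h1
      nlinarith [norm_nonneg u, norm_nonneg v]
    have h2 := step_up u (-v) S hS0 hnw
    have e1 : u + S•(-v) = u + (-S)•v := by module
    have e2 : u + (S+1)•(-v) = u + ((-S)-1)•v := by module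
    rw [e1, e2] at h2
    simp only [hF, idx', idy']
    linarith
  have hcont : Continuous F := by
    apply Continuous.sub <;> fun_prop
  have hST : -S ≤ T := by linarith
  have hmem : (0:ℝ) ∈ Set.Icc (F (-S)) (F T) := ⟨hFS, hFT⟩
  obtain ⟨t, _, ht⟩ := intermediate_value_Icc hST hcont.continuousOn hmem
  refine ⟨p + t•v, ⟨t, rfl⟩, ?_⟩
  show ‖p + t•v - x‖ = ‖p + t•v - y‖
  have : F t = 0 := ht
  simp only [hF] at this
  linarith


variable {V : Type*} [NormedAddCommGroup V] [NormedSpace ℝ V]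

lemma comb_le' (w v : V) (a b s r : ℝ) (hsr : s + r = 1) (hs : 0 ≤ s) (hr : 0 ≤ r) :
    ‖w + (s*a + r*b)•v‖ ≤ s*‖w + a•v‖ + r*‖w + b•v‖ := by
  have h : w + (s*a + r*b)•v = s•(w + a•v) + r•(w + b•v) := by
    have hrr : r = 1 - s := by linarith
    subst hrr; module
  rw [h]
  calc ‖s•(w + a•v) + r•(w + b•v)‖ ≤ ‖s•(w + a•v)‖ + ‖r•(w + b•v)‖ := norm_add_le _ _
    _ = s*‖w + a•v‖ + r*‖w + b•v‖ := by
        rw [norm_smul, norm_smul, Real.norm_of_nonneg hs, Real.norm_of_nonneg hr]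

lemma comb_le (w v : V) (a b s r τ : ℝ) (hτ : τ = s*a + r*b)
    (hsr : s + r = 1) (hs : 0 ≤ s) (hr : 0 ≤ r) :
    ‖w + τ•v‖ ≤ s*‖w + a•v‖ + r*‖w + b•v‖ := by
  rw [hτ]; exact comb_le' w v a b s r hsr hs hr

lemma not_strict_of_pair (x y p : V) (hxy : x ≠ y) {t1 t2 : ℝ} (h12 : t1 < t2)
    (H1 : ‖p + t1•(y-x) - x‖ = ‖p + t1•(y-x) - y‖)
    (H2 : ‖p + t2•(y-x) - x‖ = ‖p + t2•(y-x) - y‖) :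
    ¬ StrictPair x y := by
  have hv0 : y - x ≠ 0 := sub_ne_zero.mpr (Ne.symm hxy)
  set v : V := y - x with hv
  set w : V := p - y with hw
  have idx : ∀ t : ℝ, p + t•v - x = w + (t+1)•v := by
    intro t; rw [hv, hw]; module
  have idy : ∀ t : ℝ, p + t•v - y = w + t•v := by
    intro t; rw [hv, hw]; module
  rw [idx, idy] at H1 H2
  have hd : (0:ℝ) < t2 + 1 - t1 := by linarith
  have hdd : (0:ℝ) < t2 - t1 := by linarith
  -- A ≤ B
  have hAB : ‖w + t1•v‖ ≤ ‖w + (t2+1)•v‖ := by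
    have hL : (0:ℝ) < 1/(t2+1-t1) := by positivity
    have hL1 : 1/(t2+1-t1) ≤ 1 := by
      rw [div_le_one hd]; linarith
    have h := comb_le w v t1 (t2+1) (1 - 1/(t2+1-t1)) (1/(t2+1-t1)) (t1+1)
      (by field_simp; ring) (by ring) (by linarith) (le_of_lt hL)
    rw [H1] at h
    nlinarith [h]
  have hBA : ‖w + t2•v‖ ≤ ‖w + t1•v‖ := by
    set μ : ℝ := (t2-t1)/(t2+1-t1) with hμ
    have hμ0 : 0 ≤ μ := le_of_lt (by positivity)
    have hμ1 : μ < 1 := by rw [hμ, div_lt_one hd]; linarith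
    have h := comb_le w v t1 (t2+1) (1-μ) μ t2
      (by rw [hμ]; field_simp; ring) (by ring) (by linarith) hμ0
    rw [H2] at h
    nlinarith [h]
  have hgt2 : ‖w + t2•v‖ = ‖w + t1•v‖ := le_antisymm hBA (by rw [← H2]; linarith)
  have hgt21 : ‖w + (t2+1)•v‖ = ‖w + t1•v‖ := by rw [H2, hgt2]
  have hc0 : 0 < ‖w + t1•v‖ := by
    rcases lt_or_eq_of_le (norm_nonneg (w + t1•v)) with h | h
    · exact h
    · exfalso
      have e1 : w + t1•v = 0 := by
        have := h.symm; rwa [norm_eq_zero] at this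
      have e2 : w + (t1+1)•v = 0 := by
        have h2 : ‖w + (t1+1)•v‖ = 0 := by rw [H1, ← h]
        rwa [norm_eq_zero] at h2
      apply hv0
      have e3 : (w + (t1+1)•v) - (w + t1•v) = v := by module
      rw [e1, e2] at e3; simpa using e3.symm
  set c : ℝ := ‖w + t1•v‖ with hc
  have glow : ∀ τ : ℝ, t1 ≤ τ → τ ≤ t2 → ‖w + τ•v‖ = c := by
    intro τ hτ1 hτ2
    have hup : ‖w + τ•v‖ ≤ c := by
      set r : ℝ := (τ - t1)/(t2-t1) with hr
      have hr0 : 0 ≤ r := div_nonneg (by linarith) (by linarith)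
      have hr1 : r ≤ 1 := by rw [hr, div_le_one hdd]; linarith
      have h := comb_le w v t1 t2 (1-r) r τ
        (by rw [hr]; field_simp; ring) (by ring) (by linarith) hr0
      rw [hgt2] at h; nlinarith [h]
    have hlo : c ≤ ‖w + τ•v‖ := by
      have he : (0:ℝ) < t2 + 1 - τ := by linarith
      set ν : ℝ := (t2 - τ)/(t2+1-τ) with hν
      have hν0 : 0 ≤ ν := div_nonneg (by linarith) (by linarith)
      have hν1 : ν < 1 := by rw [hν, div_lt_one he]; linarith
      have h := comb_le w v τ (t2+1) (1-ν) ν t2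
        (by rw [hν]; field_simp; ring) (by ring) (by linarith) hν0
      rw [hgt2, hgt21] at h
      nlinarith [h]
    linarith
  intro hsp
  apply hsp
  refine ⟨c⁻¹ • (w + t1•v), c⁻¹ • (w + t2•v), ?_, ?_, c⁻¹*(t2-t1), ?_⟩
  · intro heq
    have e : c⁻¹ • (w + t2•v) - c⁻¹ • (w + t1•v) = (c⁻¹*(t2-t1)) • v := by
      match_scalars <;> ring
    rw [← heq, sub_self] at e
    have hne : c⁻¹*(t2-t1) ≠ 0 := mul_ne_zero (inv_ne_zero hc0.ne') (by linarith)
    rcases smul_eq_zero.mp e.symm with h | h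
    · exact absurd h hne
    · exact hv0 h
  · rintro z ⟨s, r, hs, hr, hsr, rfl⟩
    rw [mem_sphere_zero_iff_norm]
    have e : s • (c⁻¹ • (w + t1•v)) + r • (c⁻¹ • (w + t2•v))
        = c⁻¹ • (w + (s*t1 + r*t2)•v) := by
      have hrr : r = 1 - s := by linarith
      subst hrr; match_scalars <;> ring
    rw [e, norm_smul, Real.norm_eq_abs, abs_inv, abs_of_pos hc0]
    have hτ1 : t1 ≤ s*t1 + r*t2 := by
      have h1 : s*t1 + r*t2 - t1 = r*(t2-t1) := by
        have h2 : s = 1 - r := by linarith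
        rw [h2]; ring
      have h0 : 0 ≤ r*(t2-t1) := mul_nonneg hr hdd.le
      linarith
    have hτ2 : s*t1 + r*t2 ≤ t2 := by
      have h1 : t2 - (s*t1 + r*t2) = s*(t2-t1) := by
        have h2 : r = 1 - s := by linarith
        rw [h2]; ring
      have h0 : 0 ≤ s*(t2-t1) := mul_nonneg hs hdd.le
      linarith
    rw [glow _ hτ1 hτ2]
    field_simp
  · match_scalars <;> ring


variable {V : Type*} [NormedAddCommGroup V] [NormedSpace ℝ V]

lemma seg_norms {a b : V} (hseg : segment ℝ a b ⊆ sphere (0 : V) 1) :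
    ‖a‖ = 1 ∧ ‖b‖ = 1 ∧ ‖a + b‖ = 2 := by
  have ha : ‖a‖ = 1 := by
    have := hseg (left_mem_segment ℝ a b)
    rwa [mem_sphere_zero_iff_norm] at this
  have hb : ‖b‖ = 1 := by
    have := hseg (right_mem_segment ℝ a b)
    rwa [mem_sphere_zero_iff_norm] at this
  have hm : ((1:ℝ)/2) • a + ((1:ℝ)/2) • b ∈ segment ℝ a b :=
    ⟨1/2, 1/2, by norm_num, by norm_num, by norm_num, rfl⟩
  have hm1 : ‖((1:ℝ)/2) • a + ((1:ℝ)/2) • b‖ = 1 := by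
    have := hseg hm; rwa [mem_sphere_zero_iff_norm] at this
  refine ⟨ha, hb, ?_⟩
  have e : ((1:ℝ)/2) • a + ((1:ℝ)/2) • b = ((1:ℝ)/2) • (a + b) := by module
  rw [e, norm_smul] at hm1
  norm_num at hm1
  linarith

lemma mk_two (x y a b : V) (hxy : x ≠ y) (hab : a ≠ b)
    (hseg : segment ℝ a b ⊆ sphere (0 : V) 1) (t : ℝ) (ht : 0 < t)
    (hbat : b - a = t • (y - x)) :
    ∃ p z1 z2 : V, z1 ≠ z2 ∧ z1 ∈ lineThrough p (y - x) ∩ bisector x y ∧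
      z2 ∈ lineThrough p (y - x) ∩ bisector x y := by
  obtain ⟨ha, hb, hm⟩ := seg_norms hseg
  have hyx : y - x = t⁻¹ • (b - a) := by
    rw [hbat, smul_smul, inv_mul_cancel₀ ht.ne', one_smul]
  set p : V := x + (2/t) • a with hp
  refine ⟨p, p + (1:ℝ) • (y - x), p + (2:ℝ) • (y - x), ?_, ⟨⟨1, rfl⟩, ?_⟩, ⟨⟨2, rfl⟩, ?_⟩⟩
  · intro heq
    have e : (p + (2:ℝ) • (y - x)) - (p + (1:ℝ) • (y - x)) = y - x := by module
    rw [← heq, sub_self] at e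
    exact sub_ne_zero.mpr (Ne.symm hxy) e.symm
  · show ‖p + (1:ℝ) • (y - x) - x‖ = ‖p + (1:ℝ) • (y - x) - y‖
    have e1 : p + (1:ℝ) • (y - x) - x = t⁻¹ • (a + b) := by
      rw [hp, hyx]; match_scalars <;> (field_simp; try norm_num)
    have e2 : p + (1:ℝ) • (y - x) - y = (2/t) • a := by
      rw [hp]
      have : y = x + (y - x) := by abel
      rw [this, hyx]; match_scalars <;> (field_simp; try norm_num)
    rw [e1, e2, norm_smul, norm_smul, hm, ha, Real.norm_eq_abs, Real.norm_eq_abs,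
      abs_of_pos (by positivity : (0:ℝ) < t⁻¹), abs_of_pos (by positivity : (0:ℝ) < 2/t)]
    field_simp
  · show ‖p + (2:ℝ) • (y - x) - x‖ = ‖p + (2:ℝ) • (y - x) - y‖
    have e1 : p + (2:ℝ) • (y - x) - x = (2/t) • b := by
      rw [hp, hyx]; match_scalars <;> (field_simp; try norm_num)
    have e2 : p + (2:ℝ) • (y - x) - y = t⁻¹ • (a + b) := by
      rw [hp]
      have : y = x + (y - x) := by abel
      rw [this, hyx]; match_scalars <;> (field_simp; try norm_num)
    rw [e1, e2, norm_smul, norm_smul, hm, hb, Real.norm_eq_abs, Real.norm_eq_abs,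
      abs_of_pos (by positivity : (0:ℝ) < t⁻¹), abs_of_pos (by positivity : (0:ℝ) < 2/t)]
    field_simp

lemma not_unique (x y : V) (hxy : x ≠ y) (h : ¬ StrictPair x y) :
    ∃ p, ¬ (∃! z, z ∈ lineThrough p (y - x) ∩ bisector x y) := by
  rw [StrictPair, not_not] at h
  obtain ⟨a, b, hab, hseg, t, hbat⟩ := h
  have ht0 : t ≠ 0 := by
    intro h0
    rw [h0, zero_smul, sub_eq_zero] at hbat
    exact hab hbat.symm
  have key : ∃ p z1 z2 : V, z1 ≠ z2 ∧ z1 ∈ lineThrough p (y - x) ∩ bisector x y ∧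
      z2 ∈ lineThrough p (y - x) ∩ bisector x y := by
    rcases lt_or_gt_of_ne ht0 with hneg | hpos
    · apply mk_two x y b a hxy (Ne.symm hab) (by rwa [segment_symm]) (-t) (by linarith)
      rw [neg_smul, ← hbat]; abel
    · exact mk_two x y a b hxy hab hseg t hpos hbat
  obtain ⟨p, z1, z2, hne, h1, h2⟩ := key
  refine ⟨p, ?_⟩
  rintro ⟨z, _, huniq⟩
  exact hne ((huniq z1 h1).trans (huniq z2 h2).symm)

lemma strictPair_of_sc (h : StrictlyConvexNorm V) (x y : V) : StrictPair x y := by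
  rintro ⟨a, b, hab, hseg, -⟩
  obtain ⟨ha, hb, hm⟩ := seg_norms hseg
  have ha0 : a ≠ 0 := by intro h0; rw [h0, norm_zero] at ha; norm_num at ha
  have hb0 : b ≠ 0 := by intro h0; rw [h0, norm_zero] at hb; norm_num at hb
  have hnot : ¬ ∃ t : ℝ, 0 < t ∧ b = t • a := by
    rintro ⟨t, ht, rfl⟩
    rw [norm_smul, ha, Real.norm_eq_abs, abs_of_pos ht, mul_one] at hb
    rw [hb, one_smul] at hab
    exact hab rfl
  have := h a b ha0 hb0 hnot
  rw [ha, hb, hm] at this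
  norm_num at this

lemma sc_of_allStrict (h : ∀ x y : V, x ≠ y → StrictPair x y) : StrictlyConvexNorm V := by
  intro u v hu hv hnot
  rcases lt_or_eq_of_le (norm_add_le u v) with hlt | heq
  · exact hlt
  exfalso
  have hun : 0 < ‖u‖ := norm_pos_iff.mpr hu
  have hvn : 0 < ‖v‖ := norm_pos_iff.mpr hv
  set a : V := ‖u‖⁻¹ • u with hA
  set b : V := ‖v‖⁻¹ • v with hB
  have hab : a ≠ b := by
    intro he
    apply hnot
    refine ⟨‖v‖ * ‖u‖⁻¹, by positivity, ?_⟩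
    have h1 : ‖v‖ • b = v := by rw [hB, smul_smul, mul_inv_cancel₀ hvn.ne', one_smul]
    have h2 : ‖v‖ • a = (‖v‖ * ‖u‖⁻¹) • u := by rw [hA, smul_smul]
    exact h1.symm.trans (by rw [← he, h2])
  have key : ∀ α β : ℝ, 0 ≤ α → 0 ≤ β → ‖α • u + β • v‖ = α * ‖u‖ + β * ‖v‖ := by
    intro α β hα hβ
    have h1 : ‖α • u + β • v‖ ≤ α * ‖u‖ + β * ‖v‖ := by
      calc ‖α • u + β • v‖ ≤ ‖α • u‖ + ‖β • v‖ := norm_add_le _ _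
        _ = α * ‖u‖ + β * ‖v‖ := by
            rw [norm_smul, norm_smul, Real.norm_of_nonneg hα, Real.norm_of_nonneg hβ]
    have h2 : ‖β • u + α • v‖ ≤ β * ‖u‖ + α * ‖v‖ := by
      calc ‖β • u + α • v‖ ≤ ‖β • u‖ + ‖α • v‖ := norm_add_le _ _
        _ = β * ‖u‖ + α * ‖v‖ := by
            rw [norm_smul, norm_smul, Real.norm_of_nonneg hβ, Real.norm_of_nonneg hα]
    have h3 : (α + β) * (‖u‖ + ‖v‖) ≤ ‖α • u + β • v‖ + ‖β • u + α • v‖ := by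
      have e : (α + β) • (u + v) = (α • u + β • v) + (β • u + α • v) := by module
      calc (α + β) * (‖u‖ + ‖v‖) = (α + β) * ‖u + v‖ := by rw [heq]
        _ = ‖(α + β) • (u + v)‖ := by
            rw [norm_smul, Real.norm_of_nonneg (by positivity)]
        _ = ‖(α • u + β • v) + (β • u + α • v)‖ := by rw [e]
        _ ≤ _ := norm_add_le _ _
    linarith
  have hseg : segment ℝ a b ⊆ sphere (0 : V) 1 := by
    rintro z ⟨s, r, hs, hr, hsr, rfl⟩
    rw [mem_sphere_zero_iff_norm]
    have e : s • a + r • b = (s * ‖u‖⁻¹) • u + (r * ‖v‖⁻¹) • v := by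
      rw [hA, hB, smul_smul, smul_smul]
    rw [e, key _ _ (by positivity) (by positivity)]
    field_simp
    linarith
  have hba : b - a ≠ 0 := sub_ne_zero.mpr (Ne.symm hab)
  have h0 : (0 : V) ≠ b - a := by
    intro h0; exact hba h0.symm
  exact h 0 (b - a) h0 ⟨a, b, hab, hseg, 1, by rw [one_smul, sub_zero]⟩


lemma eq_of_strict {V : Type*} [NormedAddCommGroup V] [NormedSpace ℝ V]
    (x y : V) (hxy : x ≠ y) (hsp : StrictPair x y) (p : V)
    {z1 z2 : V} (h1 : z1 ∈ lineThrough p (y - x) ∩ bisector x y)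
    (h2 : z2 ∈ lineThrough p (y - x) ∩ bisector x y) : z1 = z2 := by
  obtain ⟨⟨t1, rfl⟩, hb1⟩ := h1
  obtain ⟨⟨t2, rfl⟩, hb2⟩ := h2
  rcases lt_trichotomy t1 t2 with h | h | h
  · exact absurd hsp (not_strict_of_pair x y p hxy h hb1 hb2)
  · rw [h]
  · exact absurd hsp (not_strict_of_pair x y p hxy h hb2 hb1)

end AuxLemmas

/-- **Proposition.** For distinct `x, y`, every affine line parallel to `y - x` meets
`bis(x,y)`; it meets it in exactly one point for every such line iff `(x,y)` is a strict
pair; and the plane is strictly convex iff this happens for every pair of distinct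
points. -/
theorem lines_parallel_meet_bisector
    (V : Type*) [NormedAddCommGroup V] [NormedSpace ℝ V]
    (hdim : Module.finrank ℝ V = 2)
    (x y : V) (hxy : x ≠ y) :
    (∀ p : V, ∃ z, z ∈ lineThrough p (y - x) ∩ bisector x y) ∧
    ((∀ p : V, ∃! z, z ∈ lineThrough p (y - x) ∩ bisector x y) ↔ StrictPair x y) ∧
    (StrictlyConvexNorm V ↔
      ∀ x' y' : V, x' ≠ y' → ∀ p : V, ∃! z, z ∈ lineThrough p (y' - x') ∩ bisector x' y') := by
  have unique_of_strict : ∀ x' y' : V, x' ≠ y' → StrictPair x' y' →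
      ∀ p : V, ∃! z, z ∈ lineThrough p (y' - x') ∩ bisector x' y' := by
    intro x' y' hxy' hsp p
    obtain ⟨z, hz⟩ := exists_mem x' y' hxy' p
    exact ⟨z, hz, fun z' hz' => eq_of_strict x' y' hxy' hsp p hz' hz⟩
  refine ⟨fun p => exists_mem x y hxy p, ⟨?_, fun hsp => unique_of_strict x y hxy hsp⟩, ?_, ?_⟩
  · intro hforall
    by_contra hns
    obtain ⟨p, hp⟩ := not_unique x y hxy hns
    exact hp (hforall p)
  · intro hsc x' y' hxy' p
    exact unique_of_strict x' y' hxy' (strictPair_of_sc hsc x' y') p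
  · intro hall
    apply sc_of_allStrict
    intro x' y' h
    by_contra hns
    obtain ⟨p, hp⟩ := not_unique x' y' h hns
    exact hp (hall x' y' h p)
end

section
/- Let (V, ‖·‖) be a Minkowski plane and let x, y ∈ V be distinct points such that (x,y) is a strict pair. Then the bisector bis(x,y), equipped with the subspace topology from V, is homeomorphic to the real line ℝ. -/
open Metric

section Aux





variable {W : Type*} [NormedAddCommGroup W] [NormedSpace ℝ W]

private lemma combo_le (p q : W) {a b : ℝ} (ha : 0 ≤ a) (hb : 0 ≤ b) :
    ‖a • p + b • q‖ ≤ a * ‖p‖ + b * ‖q‖ := by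
  calc ‖a • p + b • q‖ ≤ ‖a • p‖ + ‖b • q‖ := norm_add_le _ _
    _ = a * ‖p‖ + b * ‖q‖ := by
        rw [norm_smul, norm_smul, Real.norm_of_nonneg ha, Real.norm_of_nonneg hb]

/-- If the norm is affine at one interior point of a segment, it is affine on the whole
segment. -/
private lemma norm_affine_of_eq (p q : W) {lam : ℝ} (h0 : 0 < lam) (h1 : lam < 1)
    (heq : ‖lam • p + (1 - lam) • q‖ = lam * ‖p‖ + (1 - lam) * ‖q‖)
    {mu : ℝ} (hmu0 : 0 ≤ mu) (hmu1 : mu ≤ 1) :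
    ‖mu • p + (1 - mu) • q‖ = mu * ‖p‖ + (1 - mu) * ‖q‖ := by
  refine le_antisymm (combo_le p q hmu0 (by linarith)) ?_
  rcases lt_trichotomy mu lam with hc | hc | hc
  · -- θ = (1-lam)/(1-mu)
    have hmu1' : mu < 1 := lt_trans hc h1
    set θ := (1 - lam) / (1 - mu) with hθdef
    have hθpos : 0 < θ := div_pos (by linarith) (by linarith)
    have e2 : θ * (1 - mu) = 1 - lam := div_mul_cancel₀ _ (by linarith)
    have hθle : θ ≤ 1 := by
      rw [hθdef, div_le_one (by linarith)]; linarith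
    have e1 : θ * mu = lam - (1 - θ) := by nlinarith [e2]
    have idv : lam • p + (1 - lam) • q = θ • (mu • p + (1 - mu) • q) + (1 - θ) • p := by
      have : θ • (mu • p + (1 - mu) • q) + (1 - θ) • p
          = (θ * mu + (1 - θ)) • p + (θ * (1 - mu)) • q := by module
      rw [this, e1, e2]
      congr 1
      · congr 1; ring
    have hle : lam * ‖p‖ + (1 - lam) * ‖q‖
        ≤ θ * ‖mu • p + (1 - mu) • q‖ + (1 - θ) * ‖p‖ := by
      rw [← heq, idv]
      exact combo_le _ _ (le_of_lt hθpos) (by linarith)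
    have hkey : θ * (mu * ‖p‖ + (1 - mu) * ‖q‖) ≤ θ * ‖mu • p + (1 - mu) • q‖ := by
      have expand : θ * (mu * ‖p‖ + (1 - mu) * ‖q‖)
          = (lam - (1 - θ)) * ‖p‖ + (1 - lam) * ‖q‖ := by
        linear_combination (‖p‖) * e1 + (‖q‖) * e2
      rw [expand]; ring_nf; ring_nf at hle; linarith
    exact le_of_mul_le_mul_left hkey hθpos
  · subst hc; exact le_of_eq heq.symm
  · -- θ = lam/mu
    have hmupos : 0 < mu := lt_trans h0 hc
    set θ := lam / mu with hθdef
    have hθpos : 0 < θ := div_pos h0 hmupos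
    have e1 : θ * mu = lam := div_mul_cancel₀ _ (ne_of_gt hmupos)
    have hθle : θ ≤ 1 := by
      rw [hθdef, div_le_one hmupos]; linarith
    have idv : lam • p + (1 - lam) • q = θ • (mu • p + (1 - mu) • q) + (1 - θ) • q := by
      have : θ • (mu • p + (1 - mu) • q) + (1 - θ) • q
          = (θ * mu) • p + (θ * (1 - mu) + (1 - θ)) • q := by module
      rw [this, e1]
      congr 2
      nlinarith [e1]
    have hle : lam * ‖p‖ + (1 - lam) * ‖q‖
        ≤ θ * ‖mu • p + (1 - mu) • q‖ + (1 - θ) * ‖q‖ := by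
      rw [← heq, idv]
      exact combo_le _ _ (le_of_lt hθpos) (by linarith)
    have hkey : θ * (mu * ‖p‖ + (1 - mu) * ‖q‖) ≤ θ * ‖mu • p + (1 - mu) • q‖ := by
      have expand : θ * (mu * ‖p‖ + (1 - mu) * ‖q‖)
          = lam * ‖p‖ + (θ - lam) * ‖q‖ := by
        linear_combination (‖p‖ - ‖q‖) * e1
      rw [expand]; ring_nf; ring_nf at hle; linarith
    exact le_of_mul_le_mul_left hkey hθpos


section Core
variable {W : Type*} [NormedAddCommGroup W] [NormedSpace ℝ W]

private noncomputable def ff (e d : W) (s t : ℝ) : ℝ :=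
  ‖s • e + t • d‖ - ‖s • e + (t - 1) • d‖

private lemma id1 (w d : W) {t1 t2 lam : ℝ} (h : t1 < t2)
    (hlam : lam = (t2 - t1) / (t2 - t1 + 1)) :
    w + t1 • d = lam • (w + (t1 - 1) • d) + (1 - lam) • (w + t2 • d) := by
  have hL : t2 - t1 + 1 ≠ 0 := ne_of_gt (by linarith)
  have c1 : lam * (t1 - 1) + (1 - lam) * t2 = t1 := by
    subst hlam; field_simp; ring
  have c0 : lam + (1 - lam) = 1 := by ring
  have : lam • (w + (t1 - 1) • d) + (1 - lam) • (w + t2 • d)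
      = (lam + (1 - lam)) • w + (lam * (t1 - 1) + (1 - lam) * t2) • d := by module
  rw [this, c0, c1, one_smul]

private lemma id2 (w d : W) {t1 t2 lam : ℝ} (h : t1 < t2)
    (hlam : lam = (t2 - t1) / (t2 - t1 + 1)) :
    w + (t2 - 1) • d = (1 - lam) • (w + (t1 - 1) • d) + lam • (w + t2 • d) := by
  have hL : t2 - t1 + 1 ≠ 0 := ne_of_gt (by linarith)
  have c1 : (1 - lam) * (t1 - 1) + lam * t2 = t2 - 1 := by
    subst hlam; field_simp; ring
  have c0 : (1 - lam) + lam = 1 := by ring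
  have : (1 - lam) • (w + (t1 - 1) • d) + lam • (w + t2 • d)
      = ((1 - lam) + lam) • w + ((1 - lam) * (t1 - 1) + lam * t2) • d := by module
  rw [this, c0, c1, one_smul]

private lemma combo_le' (p q : W) {a b : ℝ} (ha : 0 ≤ a) (hb : 0 ≤ b) :
    ‖a • p + b • q‖ ≤ a * ‖p‖ + b * ‖q‖ := by
  calc ‖a • p + b • q‖ ≤ ‖a • p‖ + ‖b • q‖ := norm_add_le _ _
    _ = a * ‖p‖ + b * ‖q‖ := by
        rw [norm_smul, norm_smul, Real.norm_of_nonneg ha, Real.norm_of_nonneg hb]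

private lemma ff_mono (e d : W) (s : ℝ) : Monotone (ff e d s) := by
  intro t1 t2 h
  rcases eq_or_lt_of_le h with rfl | hlt
  · exact le_refl _
  set lam := (t2 - t1) / (t2 - t1 + 1) with hlam
  have hLpos : (0:ℝ) < t2 - t1 + 1 := by linarith
  have hlam0 : 0 < lam := div_pos (by linarith) hLpos
  have hlam1 : lam < 1 := by
    rw [hlam, div_lt_one hLpos]; linarith
  set p := s • e + (t1 - 1) • d with hp
  set q := s • e + t2 • d with hq
  have i1 : ‖s • e + t1 • d‖ ≤ lam * ‖p‖ + (1 - lam) * ‖q‖ := by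
    rw [id1 (s • e) d hlt hlam]
    exact combo_le' p q (le_of_lt hlam0) (by linarith)
  have i2 : ‖s • e + (t2 - 1) • d‖ ≤ (1 - lam) * ‖p‖ + lam * ‖q‖ := by
    rw [id2 (s • e) d hlt hlam]
    exact combo_le' p q (by linarith) (le_of_lt hlam0)
  have : ‖s • e + t1 • d‖ + ‖s • e + (t2 - 1) • d‖ ≤ ‖p‖ + ‖q‖ := by linarith
  simp only [ff]
  rw [hp, hq] at this
  linarith

private lemma ff_cont (e d : W) : Continuous fun pr : ℝ × ℝ => ff e d pr.1 pr.2 := by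
  unfold ff
  fun_prop

private lemma ff_cont1 (e d : W) (s : ℝ) : Continuous (ff e d s) :=
  (ff_cont e d).comp (continuous_const.prodMk continuous_id)

private lemma ff_symm (e d : W) (s t : ℝ) : ff e d s (1 - t) = -(ff e d (-s) t) := by
  unfold ff
  have h1 : s • e + (1 - t) • d = -((-s) • e + (t - 1) • d) := by module
  have h2 : s • e + (1 - t - 1) • d = -((-s) • e + t • d) := by module
  rw [h1, h2, norm_neg, norm_neg]
  ring

private lemma ff_pos (e d : W) (hd : d ≠ 0) (s : ℝ) : ∃ t : ℝ, 0 < ff e d s t := by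
  have hdpos : 0 < ‖d‖ := norm_pos_iff.mpr hd
  obtain ⟨N, hN⟩ := exists_nat_gt (2 * ‖s • e‖ / ‖d‖)
  have hNpos : 0 < (N:ℝ) := lt_of_le_of_lt (by positivity) hN
  have hNd : 2 * ‖s • e‖ < (N:ℝ) * ‖d‖ := by
    rw [div_lt_iff₀ hdpos] at hN; linarith
  refine ⟨(N:ℝ), ?_⟩
  -- telescoping
  have tele : (∑ i ∈ Finset.range N, (‖s • e + ((i:ℝ) + 1) • d‖ - ‖s • e + (i:ℝ) • d‖))
      = ‖s • e + (N:ℝ) • d‖ - ‖s • e + (0:ℝ) • d‖ := by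
    have := Finset.sum_range_sub (fun k : ℕ => ‖s • e + (k:ℝ) • d‖) N
    simpa using this
  have hbound : ∀ i ∈ Finset.range N,
      ‖s • e + ((i:ℝ) + 1) • d‖ - ‖s • e + (i:ℝ) • d‖ ≤ ff e d s (N:ℝ) := by
    intro i hi
    have hle : (i:ℝ) + 1 ≤ (N:ℝ) := by
      have := Finset.mem_range.mp hi
      exact_mod_cast Nat.succ_le_of_lt this
    have := ff_mono e d s hle
    unfold ff at this ⊢
    have heq : (i:ℝ) + 1 - 1 = (i:ℝ) := by ring
    rw [heq] at this
    linarith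
  have hsum : ‖s • e + (N:ℝ) • d‖ - ‖s • e + (0:ℝ) • d‖ ≤ (N:ℝ) * ff e d s (N:ℝ) := by
    rw [← tele]
    have := Finset.sum_le_card_nsmul (Finset.range N)
      (fun i => ‖s • e + ((i:ℝ) + 1) • d‖ - ‖s • e + (i:ℝ) • d‖) (ff e d s (N:ℝ))
      (by intro i hi; exact hbound i hi)
    simpa [nsmul_eq_mul] using this
  have hlower : (N:ℝ) * ‖d‖ - ‖s • e‖ ≤ ‖s • e + (N:ℝ) • d‖ := by
    have h3 : (s • e + (N:ℝ) • d) - s • e = (N:ℝ) • d := by module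
    have h5 := norm_sub_le (s • e + (N:ℝ) • d) (s • e)
    rw [h3] at h5
    have h4 : ‖(N:ℝ) • d‖ = (N:ℝ) * ‖d‖ := by
      rw [norm_smul, Real.norm_of_nonneg (le_of_lt hNpos)]
    linarith
  have h0 : ‖s • e + (0:ℝ) • d‖ = ‖s • e‖ := by simp
  have hfinal : 0 < (N:ℝ) * ff e d s (N:ℝ) := by
    rw [h0] at hsum
    linarith
  rcases mul_pos_iff.mp hfinal with ⟨_, h⟩ | ⟨h, _⟩
  · exact h
  · linarith

private lemma ff_neg (e d : W) (hd : d ≠ 0) (s : ℝ) : ∃ t : ℝ, ff e d s t < 0 := by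
  obtain ⟨t, ht⟩ := ff_pos e d hd (-s)
  refine ⟨1 - t, ?_⟩
  rw [ff_symm]
  linarith

private lemma ff_exists_zero (e d : W) (hd : d ≠ 0) (s : ℝ) : ∃ t : ℝ, ff e d s t = 0 := by
  obtain ⟨a, ha⟩ := ff_neg e d hd s
  obtain ⟨b, hb⟩ := ff_pos e d hd s
  have hab : a ≤ b := by
    by_contra hc
    push_neg at hc
    have := ff_mono e d s (le_of_lt hc)
    linarith
  have := intermediate_value_Icc hab ((ff_cont1 e d s).continuousOn)
  have h0 : (0:ℝ) ∈ Set.Icc (ff e d s a) (ff e d s b) := ⟨le_of_lt ha, le_of_lt hb⟩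
  obtain ⟨t, _, ht⟩ := this h0
  exact ⟨t, ht⟩

private lemma ff_zero_unique (e d : W) (hd : d ≠ 0)
    (hstrict : ¬ ∃ a b : W, a ≠ b ∧ segment ℝ a b ⊆ sphere (0 : W) 1 ∧ ∃ t : ℝ, b - a = t • d)
    (s : ℝ) : ∀ t1 t2 : ℝ, ff e d s t1 = 0 → ff e d s t2 = 0 → t1 = t2 := by
  -- first prove it for t1 < t2, deriving a contradiction
  have key : ∀ t1 t2 : ℝ, t1 < t2 → ff e d s t1 = 0 → ff e d s t2 = 0 → False := by
    intro t1 t2 hlt h1 h2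
    set lam := (t2 - t1) / (t2 - t1 + 1) with hlam
    have hLpos : (0:ℝ) < t2 - t1 + 1 := by linarith
    have hlam0 : 0 < lam := div_pos (by linarith) hLpos
    have hlam1 : lam < 1 := by rw [hlam, div_lt_one hLpos]; linarith
    set p := s • e + (t1 - 1) • d with hp
    set q := s • e + t2 • d with hq
    have i1 : ‖s • e + t1 • d‖ ≤ lam * ‖p‖ + (1 - lam) * ‖q‖ := by
      rw [id1 (s • e) d hlt hlam]
      exact combo_le' p q (le_of_lt hlam0) (by linarith)
    have i2 : ‖s • e + (t2 - 1) • d‖ ≤ (1 - lam) * ‖p‖ + lam * ‖q‖ := by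
      rw [id2 (s • e) d hlt hlam]
      exact combo_le' p q (by linarith) (le_of_lt hlam0)
    have e1 : ‖s • e + t1 • d‖ = ‖p‖ := by
      unfold ff at h1; rw [hp]; linarith
    have e2 : ‖s • e + (t2 - 1) • d‖ = ‖q‖ := by
      unfold ff at h2; rw [hq]; linarith
    -- equality must hold in i1
    have heq : ‖lam • p + (1 - lam) • q‖ = lam * ‖p‖ + (1 - lam) * ‖q‖ := by
      rw [← id1 (s • e) d hlt hlam]
      refine le_antisymm (by rw [id1 (s • e) d hlt hlam]; exact combo_le' p q (le_of_lt hlam0) (by linarith)) ?_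
      linarith [e1, e2, i2]
    -- norms of p and q coincide
    have hpq : ‖p‖ = ‖q‖ := by
      have h5 := heq
      rw [← id1 (s • e) d hlt hlam] at h5
      rw [e1] at h5
      refine mul_left_cancel₀ (a := 1 - lam) (ne_of_gt (by linarith)) ?_
      linear_combination h5
    have hqp : q - p = (t2 - t1 + 1) • d := by rw [hp, hq]; module
    have hpneq : p ≠ q := by
      intro hpe
      have h6 : q - p = 0 := by rw [hpe, sub_self]
      rw [hqp] at h6
      exact hd (by simpa [ne_of_gt hLpos] using smul_eq_zero.mp h6)
    have hcpos : 0 < ‖p‖ := by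
      rcases (norm_nonneg p).lt_or_eq with h | h
      · exact h
      · exfalso
        have hp0 : p = 0 := norm_eq_zero.mp h.symm
        have hq0 : q = 0 := norm_eq_zero.mp (by rw [← hpq]; exact h.symm)
        exact hpneq (by rw [hp0, hq0])
    -- the segment from p/‖p‖ to q/‖p‖ lies in the unit sphere
    refine hstrict ⟨‖p‖⁻¹ • p, ‖p‖⁻¹ • q, ?_, ?_, ⟨‖p‖⁻¹ * (t2 - t1 + 1), ?_⟩⟩
    · intro hab
      exact hpneq (smul_right_injective W (inv_ne_zero (ne_of_gt hcpos)) hab)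
    · intro z hz
      obtain ⟨u, v, hu, hv, huv, rfl⟩ := hz
      have hz2 : u • ‖p‖⁻¹ • p + v • ‖p‖⁻¹ • q = ‖p‖⁻¹ • (u • p + v • q) := by module
      have hv' : v = 1 - u := by linarith
      have hu1 : u ≤ 1 := by linarith
      have hnorm : ‖u • p + v • q‖ = u * ‖p‖ + v * ‖q‖ := by
        rw [hv']
        exact norm_affine_of_eq p q hlam0 hlam1 heq hu hu1
      rw [mem_sphere_zero_iff_norm, hz2, norm_smul,
        Real.norm_of_nonneg (le_of_lt (inv_pos.mpr hcpos)), hnorm, ← hpq]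
      field_simp
      linear_combination huv
    · rw [← smul_sub, hqp, smul_smul]
  intro t1 t2 h1 h2
  rcases lt_trichotomy t1 t2 with h | h | h
  · exact absurd (key t1 t2 h h1 h2) (by simp)
  · exact h
  · exact absurd (key t2 t1 h h2 h1) (by simp)

end Core


end Aux

/-- **Proposition.** If `(x,y)` is a strict pair of distinct points in a Minkowski plane,
then `bis(x,y)` with the subspace topology is homeomorphic to the real line. -/
theorem bisector_homeomorphic_to_line
    (V : Type*) [NormedAddCommGroup V] [NormedSpace ℝ V]
    (hdim : Module.finrank ℝ V = 2)
    (x y : V) (hxy : x ≠ y) (hstrict : StrictPair x y) :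
    Nonempty (↥(bisector x y) ≃ₜ ℝ) := by
  classical
  haveI : FiniteDimensional ℝ V := FiniteDimensional.of_finrank_eq_succ hdim
  set d := y - x with hd_def
  have hd : d ≠ 0 := sub_ne_zero.mpr (Ne.symm hxy)
  -- find a vector `e` outside the span of `d`
  have hspan_ne : (Submodule.span ℝ {d}) ≠ ⊤ := by
    intro h
    have h1 : Module.finrank ℝ (Submodule.span ℝ {d}) = 1 := finrank_span_singleton hd
    rw [h, finrank_top] at h1
    rw [hdim] at h1
    omega
  obtain ⟨e, he⟩ : ∃ e, e ∉ Submodule.span ℝ {d} := by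
    by_contra h
    push_neg at h
    exact hspan_ne (eq_top_iff.mpr fun z _ => h z)
  have hli : LinearIndependent ℝ ![e, d] := by
    rw [linearIndependent_fin2]
    refine ⟨by simpa using hd, fun a ha => ?_⟩
    simp only [Matrix.cons_val_one, Matrix.head_cons, Matrix.cons_val_zero] at ha
    exact he (ha ▸ Submodule.smul_mem _ a (Submodule.mem_span_singleton_self d))
  let B : Module.Basis (Fin 2) ℝ V :=
    basisOfLinearIndependentOfCardEqFinrank hli (by simp [hdim])
  have hB : ∀ i, B i = ![e, d] i := fun i => by
    rw [show (B : Fin 2 → V) = ![e, d] from coe_basisOfLinearIndependentOfCardEqFinrank hli _]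
  have hB0 : B 0 = e := hB 0
  have hB1 : B 1 = d := hB 1
  -- the zero-level function F
  have hexu : ∀ s : ℝ, ∃ t : ℝ, ff e d s t = 0 := ff_exists_zero e d hd
  have huniq := ff_zero_unique e d hd hstrict
  set F : ℝ → ℝ := fun s => (hexu s).choose with hF_def
  have hF : ∀ s, ff e d s (F s) = 0 := fun s => (hexu s).choose_spec
  have hFu : ∀ s t, ff e d s t = 0 → t = F s := fun s t ht => huniq s t (F s) ht (hF s)
  -- strict sign away from F s
  have hsign_pos : ∀ s t, F s < t → 0 < ff e d s t := by
    intro s t h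
    rcases (ff_mono e d s (le_of_lt h)).lt_or_eq with h' | h'
    · rw [hF s] at h'; exact h'
    · exfalso
      rw [hF s] at h'
      have := hFu s t h'.symm
      linarith
  have hsign_neg : ∀ s t, t < F s → ff e d s t < 0 := by
    intro s t h
    rcases (ff_mono e d s (le_of_lt h)).lt_or_eq with h' | h'
    · rw [hF s] at h'; exact h'
    · exfalso
      rw [hF s] at h'
      have := hFu s t h'
      linarith
  -- continuity of F
  have hFcont : Continuous F := by
    rw [Metric.continuous_iff]
    intro s0 ε hε
    have hpos : 0 < ff e d s0 (F s0 + ε) := hsign_pos s0 _ (by linarith)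
    have hneg : ff e d s0 (F s0 - ε) < 0 := hsign_neg s0 _ (by linarith)
    have c1 : Continuous fun s => ff e d s (F s0 + ε) :=
      (ff_cont e d).comp (continuous_id.prodMk continuous_const)
    have c2 : Continuous fun s => ff e d s (F s0 - ε) :=
      (ff_cont e d).comp (continuous_id.prodMk continuous_const)
    have m1 : {s : ℝ | 0 < ff e d s (F s0 + ε)} ∈ nhds s0 :=
      c1.continuousAt.preimage_mem_nhds (Ioi_mem_nhds hpos)
    have m2 : {s : ℝ | ff e d s (F s0 - ε) < 0} ∈ nhds s0 :=
      c2.continuousAt.preimage_mem_nhds (Iio_mem_nhds hneg)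
    obtain ⟨δ, hδ, hball⟩ := Metric.mem_nhds_iff.mp (Filter.inter_mem m1 m2)
    refine ⟨δ, hδ, fun s hs => ?_⟩
    obtain ⟨hs1, hs2⟩ := hball hs
    have hlt1 : F s < F s0 + ε := by
      by_contra hc
      push_neg at hc
      have := ff_mono e d s hc
      rw [hF s] at this
      exact absurd (lt_of_lt_of_le hs1 this) (by simp)
    have hlt2 : F s0 - ε < F s := by
      by_contra hc
      push_neg at hc
      have := ff_mono e d s hc
      rw [hF s] at this
      exact absurd (lt_of_le_of_lt this hs2) (by simp)
    rw [Real.dist_eq, abs_lt]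
    constructor <;> linarith
  -- basis coordinate facts
  have hdecomp : ∀ z : V, (B.repr z 0) • e + (B.repr z 1) • d = z := by
    intro z
    have h := B.sum_repr z
    rwa [Fin.sum_univ_two, hB0, hB1] at h
  have hrepr0 : ∀ s t : ℝ, B.repr (s • e + t • d) 0 = s := by
    intro s t
    have h : B.repr (s • e + t • d) = s • B.repr e + t • B.repr d := by
      simp [map_add, map_smul]
    rw [h, ← hB0, ← hB1, Module.Basis.repr_self, Module.Basis.repr_self]
    simp [Finsupp.single_apply]
  -- membership of the graph in the bisector
  have hdiff : ∀ (s t : ℝ), x + (s • e + t • d) - x = s • e + t • d :=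
    fun s t => add_sub_cancel_left _ _
  have hdiff' : ∀ (s t : ℝ), x + (s • e + t • d) - y = s • e + (t - 1) • d := by
    intro s t
    rw [hd_def]
    module
  have hmem : ∀ s : ℝ, x + (s • e + F s • d) ∈ bisector x y := by
    intro s
    have h := hF s
    unfold ff at h
    simp only [bisector, Set.mem_setOf_eq, hdiff, hdiff']
    linarith
  -- the homeomorphism
  refine ⟨{ toFun := fun z => B.repr ((z : V) - x) 0,
            invFun := fun s => ⟨x + (s • e + F s • d), hmem s⟩,
            left_inv := ?_, right_inv := ?_,
            continuous_toFun := ?_, continuous_invFun := ?_ }⟩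
  · rintro ⟨z, hz⟩
    set s' := B.repr (z - x) 0 with hs'
    set t' := B.repr (z - x) 1 with ht'
    have hzd : s' • e + t' • d = z - x := hdecomp (z - x)
    have hzx : z = x + (s' • e + t' • d) := by rw [hzd]; abel
    have hzero : ff e d s' t' = 0 := by
      unfold ff
      have h1 : ‖z - x‖ = ‖z - y‖ := hz
      rw [hzx, hdiff, hdiff'] at h1
      linarith
    have ht'F : t' = F s' := hFu s' t' hzero
    apply Subtype.ext
    simp only
    rw [← ht'F, ← hzx]
  · intro s
    simp only [hdiff]
    exact hrepr0 s (F s)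
  · have hcoord : Continuous fun z : V => B.repr z 0 := by
      have := LinearMap.continuous_of_finiteDimensional (B.coord 0)
      exact this
    exact (hcoord.comp (continuous_subtype_val.sub continuous_const))
  · apply Continuous.subtype_mk
    exact continuous_const.add ((continuous_id.smul continuous_const).add
      (hFcont.smul continuous_const))
end

section
/- Let (V, ‖·‖) be a Minkowski plane and let x, y ∈ V be distinct points such that the segment [x,y] is parallel to a nondegenerate segment of the unit circle. Let p ∈ V and r > 0 be such that [x,y] is a maximal segment contained in the circle {v ∈ V : ‖v − p‖ = r}. Let l be any affine line parallel to the line ⟨xy⟩ such that p lies in the interior of the strip bounded by l and ⟨xy⟩. Then l ∩ bis(x,y) is exactly the segment [x₁, y₁], where x₁ is the intersection of the ray [x p⟩ with l and y₁ is the intersection of the ray [y p⟩ with l. In particular, bis(x,y) contains the cone conv([p (2p−x)⟩ ∪ [p (2p−y)⟩), and consequently bis(x,y) has nonempty interior. -/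
open Metric

/-- The ray with origin `z` passing through `x`: `{z + t (x - z) : t ≥ 0}`. -/
def rayFrom {V : Type*} [AddCommGroup V] [Module ℝ V] (z x : V) : Set V :=
  {w : V | ∃ t : ℝ, 0 ≤ t ∧ w = z + t • (x - z)}

/-- `[x,y]` is a maximal segment of the circle with center `p` and radius `r`. -/
def IsMaximalSegmentOfCircle {V : Type*} [NormedAddCommGroup V] [NormedSpace ℝ V]
    (x y p : V) (r : ℝ) : Prop :=
  segment ℝ x y ⊆ sphere p r ∧
    ∀ x' y' : V, segment ℝ x y ⊆ segment ℝ x' y' → segment ℝ x' y' ⊆ sphere p r →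
      segment ℝ x' y' = segment ℝ x y

section AuxLemmas
variable {V : Type*} [NormedAddCommGroup V] [NormedSpace ℝ V]
variable {x y p : V} {r : ℝ}

lemma seg_norm_aux (hS : segment ℝ x y ⊆ sphere p r)
    {c d : ℝ} (hc : 0 ≤ c) (hd : 0 ≤ d) (hcd : c + d = 1) :
    ‖c • (p - x) + d • (p - y)‖ = r := by
  have hmem : c • x + d • y ∈ segment ℝ x y := ⟨c, d, hc, hd, hcd, rfl⟩
  have hs := hS hmem
  rw [mem_sphere_iff_norm] at hs
  have h1 : c • (p - x) + d • (p - y) = -(c • x + d • y - p) := by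
    have h2 : c • (p - x) + d • (p - y) = (c + d) • p - (c • x + d • y) := by module
    rw [h2, hcd, one_smul]; abel
  rw [h1, norm_neg, hs]

lemma f_eq_aux (hS : segment ℝ x y ⊆ sphere p r) {ε : ℝ} (h1 : -1 ≤ ε) (h0 : ε ≤ 0) :
    ‖(1 + ε) • (p - x) - ε • (p - y)‖ = r := by
  have h := seg_norm_aux hS (c := 1 + ε) (d := -ε) (by linarith) (by linarith) (by ring)
  rw [neg_smul, ← sub_eq_add_neg] at h
  exact h

lemma f_ge_aux (hS : segment ℝ x y ⊆ sphere p r) {ε : ℝ} (h : 0 ≤ ε) :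
    r ≤ ‖(1 + ε) • (p - x) - ε • (p - y)‖ := by
  have hu : ‖p - x‖ = r := by
    have := seg_norm_aux hS (c := 1) (d := 0) zero_le_one le_rfl (by norm_num)
    simpa using this
  have hv : ‖p - y‖ = r := by
    have := seg_norm_aux hS (c := 0) (d := 1) le_rfl zero_le_one (by norm_num)
    simpa using this
  have h2 : (1 + ε) * r ≤ ‖(1 + ε) • (p - x) - ε • (p - y)‖ + ε * r := by
    calc (1 + ε) * r = ‖(1 + ε) • (p - x)‖ := by
          rw [norm_smul, Real.norm_eq_abs, abs_of_nonneg (by linarith), hu]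
      _ = ‖((1 + ε) • (p - x) - ε • (p - y)) + ε • (p - y)‖ := by congr 1; abel
      _ ≤ ‖(1 + ε) • (p - x) - ε • (p - y)‖ + ‖ε • (p - y)‖ := norm_add_le _ _
      _ = ‖(1 + ε) • (p - x) - ε • (p - y)‖ + ε * r := by
          rw [norm_smul, Real.norm_eq_abs, abs_of_nonneg h, hv]
  linarith

lemma isMax_symm (h : IsMaximalSegmentOfCircle x y p r) :
    IsMaximalSegmentOfCircle y x p r := by
  constructor
  · rw [segment_symm]; exact h.1
  · intro x' y' hsub hsph
    rw [segment_symm] at hsub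
    rw [h.2 x' y' hsub hsph, segment_symm]

lemma f_gt_aux (hxy : x ≠ y) (hr : 0 < r)
    (hmax : IsMaximalSegmentOfCircle x y p r) {ε : ℝ} (hε : 0 < ε) :
    r < ‖(1 + ε) • (p - x) - ε • (p - y)‖ := by
  have hS := hmax.1
  have hv : ‖p - y‖ = r := by
    have := seg_norm_aux hS (c := 0) (d := 1) le_rfl zero_le_one (by norm_num)
    simpa using this
  have hge := f_ge_aux hS hε.le
  rcases lt_or_eq_of_le hge with hlt | heqr
  · exact hlt
  exfalso
  set x' := x - ε • (y - x) with hx'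
  have hsph : segment ℝ x' y ⊆ sphere p r := by
    rintro z ⟨c, d, hc, hd, hcd, rfl⟩
    rw [mem_sphere_iff_norm]
    have hd' : d = 1 - c := by linarith
    subst hd'
    set ε' := c * (1 + ε) - 1 with hε'
    have hz : c • x' + (1 - c) • y - p = -((1 + ε') • (p - x) - ε' • (p - y)) := by
      rw [hx', hε']; module
    rw [hz, norm_neg]
    rcases le_or_gt ε' 0 with h0 | h0
    · refine f_eq_aux hS ?_ h0
      rw [hε']
      nlinarith [mul_nonneg hc (by linarith : (0:ℝ) ≤ 1 + ε)]
    · have hge2 := f_ge_aux hS h0.le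
      have hid : (1 + ε') • (p - x) - ε' • (p - y)
          = c • ((1 + ε) • (p - x) - ε • (p - y)) + (1 - c) • (p - y) := by
        rw [hε']; module
      have hle : ‖(1 + ε') • (p - x) - ε' • (p - y)‖ ≤ r := by
        calc ‖(1 + ε') • (p - x) - ε' • (p - y)‖
            = ‖c • ((1 + ε) • (p - x) - ε • (p - y)) + (1 - c) • (p - y)‖ := by rw [hid]
          _ ≤ ‖c • ((1 + ε) • (p - x) - ε • (p - y))‖ + ‖(1 - c) • (p - y)‖ :=
              norm_add_le _ _
          _ = c * ‖(1 + ε) • (p - x) - ε • (p - y)‖ + (1 - c) * ‖p - y‖ := by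
              rw [norm_smul, norm_smul, Real.norm_eq_abs, Real.norm_eq_abs,
                abs_of_nonneg hc, abs_of_nonneg (by linarith)]
          _ = r := by rw [← heqr, hv]; ring
      linarith
  have h1ε : (0:ℝ) < 1 + ε := by linarith
  have hxmem : x ∈ segment ℝ x' y := by
    refine ⟨1 / (1 + ε), ε / (1 + ε), by positivity, by positivity, by field_simp, ?_⟩
    have hinj := smul_right_injective V (ne_of_gt h1ε)
    apply hinj
    show (1 + ε) • ((1 / (1 + ε)) • x' + (ε / (1 + ε)) • y) = (1 + ε) • x
    have e1 : (1 + ε) * (1 / (1 + ε)) = 1 := by field_simp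
    have e2 : (1 + ε) * (ε / (1 + ε)) = ε := by field_simp
    rw [smul_add, smul_smul, smul_smul, e1, e2, one_smul, hx']
    module
  have hsub : segment ℝ x y ⊆ segment ℝ x' y :=
    (convex_segment x' y).segment_subset hxmem (right_mem_segment ℝ x' y)
  have heq := hmax.2 x' y hsub hsph
  have hx'mem : x' ∈ segment ℝ x y := heq ▸ left_mem_segment ℝ x' y
  obtain ⟨c, d, hc, hd, hcd, hzz⟩ := hx'mem
  have hrel : (d + ε) • (y - x) = 0 := by
    have hc' : c = 1 - d := by linarith
    rw [hc', hx'] at hzz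
    have h2 := sub_eq_zero_of_eq hzz
    rw [← h2]; module
  rcases smul_eq_zero.mp hrel with h3 | h3
  · linarith
  · exact hxy (sub_eq_zero.mp h3).symm

lemma f_mono_aux (hxy : x ≠ y) (hr : 0 < r)
    (hmax : IsMaximalSegmentOfCircle x y p r) {ε₁ ε₂ : ℝ}
    (h1 : 0 ≤ ε₁) (h12 : ε₁ < ε₂) :
    ‖(1 + ε₁) • (p - x) - ε₁ • (p - y)‖ < ‖(1 + ε₂) • (p - x) - ε₂ • (p - y)‖ := by
  have hS := hmax.1
  have hu : ‖p - x‖ = r := by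
    have := seg_norm_aux hS (c := 1) (d := 0) zero_le_one le_rfl (by norm_num)
    simpa using this
  have hε₂ : 0 < ε₂ := lt_of_le_of_lt h1 h12
  have hgt2 := f_gt_aux hxy hr hmax hε₂
  rcases eq_or_lt_of_le h1 with h0 | h0
  · rw [f_eq_aux hS (by linarith) (le_of_eq h0.symm)]
    exact hgt2
  · set lam := ε₁ / ε₂ with hlam
    have hl0 : 0 ≤ lam := le_of_lt (div_pos h0 hε₂)
    have hl1 : lam < 1 := (div_lt_one hε₂).mpr h12
    have e1 : lam * ε₂ = ε₁ := div_mul_cancel₀ _ (ne_of_gt hε₂)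
    have hid : (1 + ε₁) • (p - x) - ε₁ • (p - y)
        = (1 - lam) • (p - x) + lam • ((1 + ε₂) • (p - x) - ε₂ • (p - y)) := by
      rw [← e1]; module
    have hb : ‖(1 + ε₁) • (p - x) - ε₁ • (p - y)‖
        ≤ (1 - lam) * r + lam * ‖(1 + ε₂) • (p - x) - ε₂ • (p - y)‖ := by
      rw [hid]
      refine (norm_add_le _ _).trans ?_
      rw [norm_smul, norm_smul, Real.norm_eq_abs, Real.norm_eq_abs,
        abs_of_nonneg (by linarith), abs_of_nonneg hl0, hu]
    have hmul : (1 - lam) * r < (1 - lam) * ‖(1 + ε₂) • (p - x) - ε₂ • (p - y)‖ :=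
      mul_lt_mul_of_pos_left hgt2 (by linarith)
    linarith

end AuxLemmas

lemma cone_norm_aux {V : Type*} [NormedAddCommGroup V] [NormedSpace ℝ V]
    {x y p : V} {r : ℝ} (hS : segment ℝ x y ⊆ sphere p r) {c d : ℝ}
    (hc : 0 ≤ c) (hd : 0 ≤ d) (hcd : 0 < c + d) :
    ‖c • (p - x) + d • (p - y)‖ = (c + d) * r := by
  have hne : c + d ≠ 0 := ne_of_gt hcd
  have e1 : (c + d) * (c / (c + d)) = c := by field_simp
  have e2 : (c + d) * (d / (c + d)) = d := by field_simp
  have h1 : c • (p - x) + d • (p - y)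
      = (c + d) • ((c / (c + d)) • (p - x) + (d / (c + d)) • (p - y)) := by
    rw [smul_add, smul_smul, smul_smul, e1, e2]
  rw [h1, norm_smul, Real.norm_eq_abs, abs_of_pos hcd,
    seg_norm_aux hS (div_nonneg hc hcd.le) (div_nonneg hd hcd.le) (by field_simp)]

set_option maxHeartbeats 2000000 in
/-- **Proposition.** Let `[x,y]` be parallel to a nondegenerate segment of the unit circle
and let it be a maximal segment of the circle with center `p` and radius `r`.  Let `l` be
an affine line parallel to `⟨xy⟩` such that `p` lies in the interior of the strip bounded
by `l` and `⟨xy⟩` (here `l` is the line through `x + a (p - x)` in direction `y - x`, with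
`a > 1`).  If `x₁` is the intersection of the ray `[x p⟩` with `l` and `y₁` that of
`[y p⟩` with `l`, then `l ∩ bis(x,y) = [x₁, y₁]`.  In particular `bis(x,y)` contains the
cone `conv([p (2p-x)⟩ ∪ [p (2p-y)⟩)` and has nonempty interior. -/
theorem bisector_of_nonstrict_pair_contains_cone
    (V : Type*) [NormedAddCommGroup V] [NormedSpace ℝ V]
    (hdim : Module.finrank ℝ V = 2)
    (x y : V) (hxy : x ≠ y)
    (hpar : ∃ a b : V, a ≠ b ∧ segment ℝ a b ⊆ sphere (0 : V) 1 ∧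
      ∃ t : ℝ, b - a = t • (y - x))
    (p : V) (r : ℝ) (hr : 0 < r)
    (hmax : IsMaximalSegmentOfCircle x y p r)
    (a : ℝ) (ha : 1 < a)
    (l : Set V) (hl : l = lineThrough (x + a • (p - x)) (y - x))
    (x₁ y₁ : V)
    (hx₁ : x₁ ∈ rayFrom x p ∩ l) (hy₁ : y₁ ∈ rayFrom y p ∩ l) :
    l ∩ bisector x y = segment ℝ x₁ y₁ ∧
    convexHull ℝ (rayFrom p ((2 : ℝ) • p - x) ∪ rayFrom p ((2 : ℝ) • p - y)) ⊆
      bisector x y ∧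
    (interior (bisector x y)).Nonempty := by

  have hS := hmax.1
  have hmaxY := isMax_symm hmax
  have hSy := hmaxY.1
  have hap : (0:ℝ) < a := by linarith
  have hane : (a:ℝ) ≠ 0 := ne_of_gt hap
  have hu : ‖p - x‖ = r := by
    have := seg_norm_aux hS (c := 1) (d := 0) zero_le_one le_rfl (by norm_num)
    simpa using this
  have hv : ‖p - y‖ = r := by
    have := seg_norm_aux hS (c := 0) (d := 1) le_rfl zero_le_one (by norm_num)
    simpa using this
  have hmid := seg_norm_aux hS (c := 1/2) (d := 1/2) (by norm_num) (by norm_num) (by norm_num)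
  -- linear independence of (p - x) and (p - y)
  have hindep : ∀ c d : ℝ, c • (p - x) + d • (p - y) = 0 → c = 0 ∧ d = 0 := by
    intro c d hcd0
    have habs : |c| * r = |d| * r := by
      have h1 : c • (p - x) = -(d • (p - y)) := eq_neg_of_add_eq_zero_left hcd0
      have h2 := congrArg norm h1
      rwa [norm_neg, norm_smul, norm_smul, Real.norm_eq_abs, Real.norm_eq_abs, hu, hv] at h2
    have habs' : |c| = |d| := mul_right_cancel₀ (ne_of_gt hr) habs
    rcases abs_eq_abs.mp habs' with h | h
    · subst h
      have h2 : c • ((p - x) + (p - y)) = 0 := by rw [smul_add]; exact hcd0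
      rcases smul_eq_zero.mp h2 with h3 | h3
      · exact ⟨h3, h3⟩
      · exfalso
        have h4 : (1/2 : ℝ) • (p - x) + (1/2 : ℝ) • (p - y) = 0 := by
          rw [← smul_add, h3, smul_zero]
        rw [h4, norm_zero] at hmid; linarith
    · subst h
      have h2 : d • (x - y) = 0 := by
        have h3 : d • (x - y) = (-d) • (p - x) + d • (p - y) := by module
        rw [h3]; exact hcd0
      rcases smul_eq_zero.mp h2 with h3 | h3
      · simp [h3]
      · exact absurd (sub_eq_zero.mp h3) hxy
  have hindep' : ∀ c d : ℝ, c • (p - x) + d • (y - x) = 0 → c = 0 ∧ d = 0 := by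
    intro c d h
    have h2 : (c + d) • (p - x) + (-d) • (p - y) = 0 := by
      have h3 : (c + d) • (p - x) + (-d) • (p - y) = c • (p - x) + d • (y - x) := by module
      rw [h3]; exact h
    obtain ⟨h3, h4⟩ := hindep _ _ h2
    have h5 : d = 0 := by linarith [neg_eq_zero.mp h4]
    exact ⟨by linarith, h5⟩
  -- identification of x₁ and y₁
  obtain ⟨⟨t₁, ht₁, hx₁e⟩, hx₁l⟩ := hx₁
  rw [hl] at hx₁l
  obtain ⟨s₁, hs₁⟩ := hx₁l
  have hx1 : x₁ = x + a • (p - x) := by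
    have h0 : (t₁ - a) • (p - x) + (-s₁) • (y - x) = 0 := by
      have h := sub_eq_zero_of_eq (hx₁e.symm.trans hs₁)
      rw [← h]; module
    obtain ⟨h1, _⟩ := hindep' _ _ h0
    have ht : t₁ = a := by linarith
    rw [hx₁e, ht]
  obtain ⟨⟨t₂, ht₂, hy₁e⟩, hy₁l⟩ := hy₁
  rw [hl] at hy₁l
  obtain ⟨s₂, hs₂⟩ := hy₁l
  have hy1 : y₁ = y + a • (p - y) := by
    have h0 : (t₂ - a) • (p - x) + (1 - t₂ - s₂) • (y - x) = 0 := by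
      have h := sub_eq_zero_of_eq (hy₁e.symm.trans hs₂)
      rw [← h]; module
    obtain ⟨h1, _⟩ := hindep' _ _ h0
    have ht : t₂ = a := by linarith
    rw [hy₁e, ht]
  have hdir : y₁ - x₁ = (1 - a) • (y - x) := by rw [hx1, hy1]; module
  -- segment x₁ y₁ ⊆ l ∩ bisector
  have hseg_sub : segment ℝ x₁ y₁ ⊆ l ∩ bisector x y := by
    rintro z hz
    rw [segment_eq_image'] at hz
    obtain ⟨θ, hθmem, rfl⟩ := hz
    obtain ⟨hθ0, hθ1⟩ := Set.mem_Icc.mp hθmem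
    set s := θ * (1 - a) with hsdef
    have hzeq : x₁ + θ • (y₁ - x₁) = x + a • (p - x) + s • (y - x) := by
      rw [hdir, hx1, smul_smul]
    constructor
    · rw [hl]; exact ⟨s, hzeq⟩
    · simp only [bisector, Set.mem_setOf_eq]
      have hsle : s ≤ 0 := by nlinarith
      have hsge : 1 - a ≤ s := by nlinarith
      have hzx : x₁ + θ • (y₁ - x₁) - x = (a + s) • (p - x) + (-s) • (p - y) := by
        rw [hzeq]; module
      have hzy : x₁ + θ • (y₁ - x₁) - y = (a + s - 1) • (p - x) + (1 - s) • (p - y) := by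
        rw [hzeq]; module
      rw [hzx, hzy, cone_norm_aux hS (by linarith) (by linarith) (by linarith),
        cone_norm_aux hS (by linarith) (by linarith) (by linarith)]
      ring
  -- l ∩ bisector ⊆ segment x₁ y₁
  have hkey : ∀ c : ℝ, ‖(a + c) • (p - x) - c • (p - y)‖
      = a * ‖(1 + c / a) • (p - x) - (c / a) • (p - y)‖ := by
    intro c
    have e1 : a * (1 + c / a) = a + c := by field_simp
    have e2 : a * (c / a) = c := by field_simp
    have e : a • ((1 + c / a) • (p - x) - (c / a) • (p - y))
        = (a + c) • (p - x) - c • (p - y) := by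
      rw [smul_sub, smul_smul, smul_smul, e1, e2]
    rw [← e, norm_smul, Real.norm_eq_abs, abs_of_pos hap]
  have hkey2 : ∀ c : ℝ, ‖(a + c) • (p - x) - c • (p - y)‖
      = a * ‖(1 + (-(c + a) / a)) • (p - y) - (-(c + a) / a) • (p - x)‖ := by
    intro c
    have e1 : a * (1 + -(c + a) / a) = -c := by field_simp; ring
    have e2 : a * (-(c + a) / a) = -(c + a) := by field_simp
    have e : a • ((1 + -(c + a) / a) • (p - y) - (-(c + a) / a) • (p - x))
        = (a + c) • (p - x) - c • (p - y) := by
      rw [smul_sub, smul_smul, smul_smul, e1, e2]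
      module
    rw [← e, norm_smul, Real.norm_eq_abs, abs_of_pos hap]
  have hlb_sub : l ∩ bisector x y ⊆ segment ℝ x₁ y₁ := by
    rintro z ⟨hzl, hzb⟩
    rw [hl] at hzl
    obtain ⟨s, hzeq⟩ := hzl
    have hb : ‖z - x‖ = ‖z - y‖ := hzb
    have hzx : z - x = (a + s) • (p - x) - s • (p - y) := by rw [hzeq]; module
    have hzy : z - y = (a + (s - 1)) • (p - x) - (s - 1) • (p - y) := by rw [hzeq]; module
    have hsle : s ≤ 0 := by
      by_contra hpos
      push_neg at hpos
      have hεx : (0:ℝ) < s / a := div_pos hpos hap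
      have hgtx : r < ‖(1 + s / a) • (p - x) - (s / a) • (p - y)‖ :=
        f_gt_aux hxy hr hmax hεx
      rw [hzx, hzy, hkey s, hkey (s - 1)] at hb
      rcases le_or_gt s 1 with hs1 | hs1
      · have heqr : ‖(1 + (s - 1) / a) • (p - x) - ((s - 1) / a) • (p - y)‖ = r :=
          f_eq_aux hS (by rw [le_div_iff₀ hap]; linarith)
            (by rw [div_le_iff₀ hap]; linarith)
        rw [heqr] at hb
        have := mul_lt_mul_of_pos_left hgtx hap
        linarith
      · have hdlt : (s - 1) / a < s / a := by
          have h2 : s / a - (s - 1) / a = 1 / a := by rw [div_sub_div_same]; ring_nf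
          have h3 : (0:ℝ) < 1 / a := by positivity
          linarith
        have hmono := f_mono_aux hxy hr hmax
          (div_nonneg (by linarith) hap.le) hdlt
        have := mul_lt_mul_of_pos_left hmono hap
        linarith
    have hsge : 1 - a ≤ s := by
      by_contra hneg
      push_neg at hneg
      rw [hzx, hzy, hkey2 s, hkey2 (s - 1)] at hb
      have hδy : (0:ℝ) < -((s - 1) + a) / a := div_pos (by linarith) hap
      have hgty : r < ‖(1 + -((s - 1) + a) / a) • (p - y) - (-((s - 1) + a) / a) • (p - x)‖ :=
        f_gt_aux hxy.symm hr hmaxY hδy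
      rcases le_or_gt (-(s + a) / a) 0 with hδx | hδx
      · have heqr : ‖(1 + -(s + a) / a) • (p - y) - (-(s + a) / a) • (p - x)‖ = r :=
          f_eq_aux hSy (by rw [le_div_iff₀ hap]; linarith) hδx
        rw [heqr] at hb
        have := mul_lt_mul_of_pos_left hgty hap
        linarith
      · have hdlt : -(s + a) / a < -((s - 1) + a) / a := by
          have h2 : -((s - 1) + a) / a - -(s + a) / a = 1 / a := by
            rw [div_sub_div_same]; ring_nf
          have h3 : (0:ℝ) < 1 / a := by positivity
          linarith
        have hmono := f_mono_aux hxy.symm hr hmaxY hδx.le hdlt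
        have := mul_lt_mul_of_pos_left hmono hap
        linarith
    rw [segment_eq_image']
    have h1a : (1:ℝ) - a < 0 := by linarith
    have hne1a : (1:ℝ) - a ≠ 0 := ne_of_lt h1a
    refine ⟨s / (1 - a), Set.mem_Icc.mpr ⟨?_, ?_⟩, ?_⟩
    · rw [le_div_iff_of_neg h1a]; linarith
    · rw [div_le_iff_of_neg h1a]; linarith
    · show x₁ + (s / (1 - a)) • (y₁ - x₁) = z
      rw [hdir, smul_smul, div_mul_cancel₀ s hne1a, hx1]
      exact hzeq.symm
  -- the cone is contained in the bisector
  have coneSub : ∀ s t : ℝ, 0 ≤ s → 0 ≤ t →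
      p + s • (p - x) + t • (p - y) ∈ bisector x y := by
    intro s t hs ht
    simp only [bisector, Set.mem_setOf_eq]
    have h1 : p + s • (p - x) + t • (p - y) - x = (1 + s) • (p - x) + t • (p - y) := by
      module
    have h2 : p + s • (p - x) + t • (p - y) - y = s • (p - x) + (1 + t) • (p - y) := by
      module
    rw [h1, h2, cone_norm_aux hS (by linarith) ht (by linarith),
      cone_norm_aux hS hs (by linarith) (by linarith)]
    ring
  have hC : convexHull ℝ (rayFrom p ((2 : ℝ) • p - x) ∪ rayFrom p ((2 : ℝ) • p - y)) ⊆
      bisector x y := by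
    set C : Set V := {z | ∃ s t : ℝ, 0 ≤ s ∧ 0 ≤ t ∧ z = p + s • (p - x) + t • (p - y)}
      with hCdef
    have hCconv : Convex ℝ C := by
      rintro z₁ ⟨s₁', t₁', hs₁', ht₁', rfl⟩ z₂ ⟨s₂', t₂', hs₂', ht₂', rfl⟩ c d hc hd hcd
      refine ⟨c * s₁' + d * s₂', c * t₁' + d * t₂', by positivity, by positivity, ?_⟩
      have hd' : d = 1 - c := by linarith
      subst hd'
      module
    have hsub : rayFrom p ((2 : ℝ) • p - x) ∪ rayFrom p ((2 : ℝ) • p - y) ⊆ C := by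
      rintro z (⟨t, ht, rfl⟩ | ⟨t, ht, rfl⟩)
      · exact ⟨t, 0, ht, le_rfl, by module⟩
      · exact ⟨0, t, le_rfl, ht, by module⟩
    refine (convexHull_min hsub hCconv).trans ?_
    rintro z ⟨s, t, hs, ht, rfl⟩
    exact coneSub s t hs ht
  -- nonempty interior
  haveI : FiniteDimensional ℝ V := Module.finite_of_finrank_pos (by rw [hdim]; norm_num)
  have hLI : LinearIndependent ℝ ![p - x, p - y] :=
    LinearIndependent.pair_iff.mpr fun s t h => hindep s t h
  let B : Module.Basis (Fin 2) ℝ V := basisOfLinearIndependentOfCardEqFinrank hLI (by simp [hdim])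
  have hB : (B : Fin 2 → V) = ![p - x, p - y] :=
    coe_basisOfLinearIndependentOfCardEqFinrank hLI _
  have hB0 : B 0 = p - x := by rw [hB]; rfl
  have hB1 : B 1 = p - y := by rw [hB]; rfl
  have hcont : Continuous fun z : V => B.equivFun (z - p) :=
    (LinearMap.continuous_of_finiteDimensional
      (B.equivFun : V →ₗ[ℝ] (Fin 2 → ℝ))).comp (continuous_id.sub continuous_const)
  set U : Set V := (fun z : V => B.equivFun (z - p)) ⁻¹' {c | 0 < c 0 ∧ 0 < c 1} with hUdef
  have hUopen : IsOpen U := by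
    have h0 : IsOpen {c : Fin 2 → ℝ | 0 < c 0} := isOpen_lt continuous_const (continuous_apply 0)
    have h1 : IsOpen {c : Fin 2 → ℝ | 0 < c 1} := isOpen_lt continuous_const (continuous_apply 1)
    exact (h0.inter h1).preimage hcont
  have hUsub : U ⊆ bisector x y := by
    intro z hz
    obtain ⟨h0, h1⟩ := hz
    have hsum := B.sum_equivFun (z - p)
    rw [Fin.sum_univ_two, hB0, hB1] at hsum
    have hz' : z = p + (B.equivFun (z - p) 0) • (p - x) + (B.equivFun (z - p) 1) • (p - y) := by
      calc z = p + (z - p) := by abel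
        _ = p + (B.equivFun (z - p) 0 • (p - x) + B.equivFun (z - p) 1 • (p - y)) := by
            rw [hsum]
        _ = _ := by rw [← add_assoc]
    rw [hz']
    exact coneSub _ _ h0.le h1.le
  have hUne : (p + (p - x) + (p - y)) ∈ U := by
    show 0 < B.equivFun (p + (p - x) + (p - y) - p) 0 ∧
      0 < B.equivFun (p + (p - x) + (p - y) - p) 1
    rw [show p + (p - x) + (p - y) - p = B 0 + B 1 by rw [hB0, hB1]; abel]
    rw [map_add]
    have hself : ∀ i : Fin 2, B.equivFun (B i) = Pi.single i 1 := fun i => by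
      simp [Module.Basis.equivFun_apply, Module.Basis.repr_self, Finsupp.single_eq_pi_single]
    rw [hself 0, hself 1]
    norm_num [Pi.single_apply]
  exact ⟨Set.Subset.antisymm hlb_sub hseg_sub, hC,
    ⟨p + (p - x) + (p - y), interior_maximal hUsub hUopen hUne⟩⟩
end

section
/- Let (V, ‖·‖) be a Minkowski plane, let x, y ∈ V be distinct points, and assume that an affine line l is contained in bis(x,y). Then for any nondegenerate segment [z,w] ⊆ l centered at (x+y)/2 (i.e., with z + w = x + y and z ≠ w), the entire line ⟨xy⟩ through x and y is contained in bis(z,w). -/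
/-- **Lemma.** If an affine line `l` is contained in `bis(x,y)`, then for any
nondegenerate segment `[z,w] ⊆ l` centered at `(x+y)/2`, the whole line `⟨xy⟩` is
contained in `bis(z,w)`. -/
theorem line_in_bisector_symmetric
    (V : Type*) [NormedAddCommGroup V] [NormedSpace ℝ V]
    (hdim : Module.finrank ℝ V = 2)
    (x y : V) (hxy : x ≠ y)
    (l : Set V) (hl : IsAffineLine l) (hlbis : l ⊆ bisector x y)
    (z w : V) (hzw : z ≠ w) (hseg : segment ℝ z w ⊆ l) (hmid : z + w = x + y) :
    {v : V | ∃ t : ℝ, v = x + t • (y - x)} ⊆ bisector z w := by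
  obtain ⟨p₀, v, hv, hleq⟩ := hl
  have hzl : z ∈ l := hseg (left_mem_segment ℝ z w)
  have hwl : w ∈ l := hseg (right_mem_segment ℝ z w)
  rw [hleq] at hzl hwl
  obtain ⟨t₁, ht₁⟩ := hzl
  obtain ⟨t₂, ht₂⟩ := hwl
  have hw2 : w = x + y - z := by rw [← hmid]; abel
  set u : V := w - z with hu
  set a : V := (1/2 : ℝ) • (y - x) with ha
  have key : ∀ s : ℝ, ‖s • u + a‖ = ‖s • u - a‖ := by
    intro s
    have hmem : (1/2 : ℝ) • (x + y) + s • u ∈ bisector x y := by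
      apply hlbis
      rw [hleq]
      refine ⟨(t₁ + t₂)/2 + s * (t₂ - t₁), ?_⟩
      rw [← hmid, hu, ht₁, ht₂]
      module
    simp only [bisector, Set.mem_setOf_eq] at hmem
    have h1 : (1/2 : ℝ) • (x + y) + s • u - x = s • u + a := by rw [ha]; module
    have h2 : (1/2 : ℝ) • (x + y) + s • u - y = s • u - a := by rw [ha]; module
    rw [h1, h2] at hmem
    exact hmem
  rintro p ⟨t, rfl⟩
  simp only [bisector, Set.mem_setOf_eq]
  set c : ℝ := 2 * t - 1 with hc
  have hpz : x + t • (y - x) - z = c • a + (1/2 : ℝ) • u := by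
    rw [hc, ha, hu, hw2]; module
  have hpw : x + t • (y - x) - w = c • a - (1/2 : ℝ) • u := by
    rw [hc, ha, hu, hw2]; module
  rw [hpz, hpw]
  rcases eq_or_ne c 0 with h0 | h0
  · rw [h0]
    simp only [zero_smul, zero_add, zero_sub, norm_neg]
  · have hcc : c * (1/(2*c)) = 1/2 := by field_simp
    have hs : c • a + (1/2 : ℝ) • u = c • ((1/(2*c)) • u + a) := by
      match_scalars <;> (field_simp; try ring)
    have hs2 : c • a - (1/2 : ℝ) • u = c • (-((1/(2*c)) • u - a)) := by
      match_scalars <;> (field_simp; try ring)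
    rw [hs, hs2, norm_smul, norm_smul, norm_neg, key]
end

section
/- Let (V, ‖·‖) be a Minkowski plane and let x ∈ S be a unit vector. Then the inner bisector bis_I(−x,x) = bis(−x,x) ∩ B, equipped with the subspace topology, is homeomorphic to the compact interval [0,1]. -/
open Metric

section Aux

variable {V : Type*} [NormedAddCommGroup V] [NormedSpace ℝ V]

set_option linter.unusedSectionVars false
set_option linter.unusedVariables false

lemma norm_combo {α β : ℝ} (hα : 0 ≤ α) (hβ : 0 ≤ β) (u v w : V)
    (h : w = α • u + β • v) : ‖w‖ ≤ α * ‖u‖ + β * ‖v‖ := by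
  subst h
  calc ‖α • u + β • v‖ ≤ ‖α • u‖ + ‖β • v‖ := norm_add_le _ _
    _ = α * ‖u‖ + β * ‖v‖ := by
        rw [norm_smul, norm_smul, Real.norm_eq_abs, abs_of_nonneg hα,
          Real.norm_eq_abs, abs_of_nonneg hβ]

lemma norm_add_ge (u v : V) : ‖u‖ - ‖v‖ ≤ ‖u + v‖ := by
  simpa using norm_sub_norm_le u (-v)

lemma inj_aux (x z : V) (hx : ‖x‖ = 1) {s : ℝ} (hs : 0 < s)
    (h1 : ‖z + x‖ = ‖z - x‖) (h2 : ‖(z + s • x) + x‖ = ‖(z + s • x) - x‖)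
    (hz : ‖z‖ ≤ 1) (hz' : ‖z + s • x‖ ≤ 1) : False := by
  have hs2 : (0:ℝ) < s + 2 := by linarith
  have hs1 : (0:ℝ) < s + 1 := by linarith
  set r := ‖z + x‖ with hr
  set rp := ‖z + (s+1) • x‖ with hrp
  have e1 : z + s • x + x = z + (s+1) • x := by module
  have e2 : z + s • x - x = z + (s-1) • x := by module
  have h2' : rp = ‖z + (s-1) • x‖ := by rw [hrp, ← e1, ← e2, h2]
  -- (1) r ≤ rp
  have c1 : z + x = (s/(s+2)) • (z - x) + (2/(s+2)) • (z + (s+1) • x) := by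
    match_scalars <;> (field_simp; try ring)
  have i1 : r ≤ (s/(s+2)) * ‖z - x‖ + (2/(s+2)) * rp :=
    norm_combo (by positivity) (by positivity) _ _ _ c1
  rw [← h1] at i1
  have hrrp : r ≤ rp := by
    have h' : r * (s+2) ≤ s * r + 2 * rp := by
      have := mul_le_mul_of_nonneg_right i1 hs2.le
      calc r * (s+2) ≤ ((s/(s+2)) * r + (2/(s+2)) * rp) * (s+2) := this
        _ = s * r + 2 * rp := by field_simp; try ring
    linarith
  -- (2) rp ≤ r
  have c2 : z + (s-1) • x = (2/(s+2)) • (z - x) + (s/(s+2)) • (z + (s+1) • x) := by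
    match_scalars <;> (field_simp; try ring)
  have i2 : ‖z + (s-1) • x‖ ≤ (2/(s+2)) * ‖z - x‖ + (s/(s+2)) * rp :=
    norm_combo (by positivity) (by positivity) _ _ _ c2
  rw [← h1, ← h2'] at i2
  have hrpr : rp ≤ r := by
    have h' : rp * (s+2) ≤ 2 * r + s * rp := by
      have := mul_le_mul_of_nonneg_right i2 hs2.le
      calc rp * (s+2) ≤ ((2/(s+2)) * r + (s/(s+2)) * rp) * (s+2) := this
        _ = 2 * r + s * rp := by field_simp; try ring
    linarith
  have hre : rp = r := le_antisymm hrpr hrrp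
  -- (3) r ≤ ‖z‖
  have c3 : z + x = (s/(s+1)) • z + (1/(s+1)) • (z + (s+1) • x) := by
    match_scalars <;> (field_simp; try ring)
  have i3 : r ≤ (s/(s+1)) * ‖z‖ + (1/(s+1)) * rp :=
    norm_combo (by positivity) (by positivity) _ _ _ c3
  have hr1 : r ≤ 1 := by
    rw [hre] at i3
    have h' : r * (s+1) ≤ s * ‖z‖ + r := by
      have := mul_le_mul_of_nonneg_right i3 hs1.le
      calc r * (s+1) ≤ ((s/(s+1)) * ‖z‖ + (1/(s+1)) * r) * (s+1) := this
        _ = s * ‖z‖ + r := by field_simp; try ring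
    nlinarith
  -- (4) contradiction
  have c4 : (z + (s+1) • x) - (z - x) = (s+2) • x := by module
  have i4 : s + 2 ≤ rp + r := by
    have h' : ‖(z + (s+1) • x) - (z - x)‖ ≤ rp + ‖z - x‖ := norm_sub_le _ _
    rw [c4, norm_smul, hx, Real.norm_eq_abs, abs_of_nonneg hs2.le, ← h1] at h'
    simpa using h'
  rw [hre] at i4
  linarith


lemma right_aux (x z1 : V) (hx : ‖x‖ = 1) (hb : ‖z1 + x‖ = ‖z1 - x‖)
    (hz : ‖z1‖ ≤ 1) {t : ℝ} (ht0 : 0 < t) (ht1 : t < 1) {σp : ℝ}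
    (hσp : IsGreatest {σ : ℝ | ‖t • z1 + σ • x‖ ≤ 1} σp) :
    ‖(t • z1 + σp • x) - x‖ ≤ ‖(t • z1 + σp • x) + x‖ := by
  by_contra hcon
  push_neg at hcon
  have hw : ‖t • z1‖ ≤ t := by
    rw [norm_smul, Real.norm_eq_abs, abs_of_nonneg ht0.le]
    nlinarith [norm_nonneg z1]
  set FF : ℝ → ℝ := fun σ => ‖t • z1 + σ • x - x‖ - ‖t • z1 + σ • x + x‖ with hFF
  have hFFcont : Continuous FF := by fun_prop
  have hFFneg : ∀ σ : ℝ, 1 ≤ σ → FF σ < 0 := by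
    intro σ hσ
    have e1 : t • z1 + σ • x - x = t • z1 + (σ-1) • x := by module
    have e2 : t • z1 + σ • x + x = t • z1 + (σ+1) • x := by module
    have h1 : ‖t • z1 + σ • x - x‖ ≤ t + (σ - 1) := by
      rw [e1]
      have h4 : ‖(σ-1) • x‖ = σ - 1 := by
        rw [norm_smul, hx, Real.norm_eq_abs, abs_of_nonneg (by linarith : (0:ℝ) ≤ σ - 1), mul_one]
      calc ‖t • z1 + (σ-1) • x‖ ≤ ‖t • z1‖ + ‖(σ-1) • x‖ := norm_add_le _ _
        _ ≤ t + (σ - 1) := by rw [h4]; linarith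
    have h2 : (σ + 1) - t ≤ ‖t • z1 + σ • x + x‖ := by
      rw [e2]
      have h3 : ‖(σ+1) • x‖ - ‖t • z1‖ ≤ ‖(σ+1) • x + t • z1‖ := by
        simpa using norm_sub_norm_le ((σ+1) • x) (-(t • z1))
      rw [norm_smul, hx, Real.norm_eq_abs, abs_of_nonneg (by linarith : (0:ℝ) ≤ σ + 1)] at h3
      calc (σ + 1) - t ≤ (σ+1) * 1 - ‖t • z1‖ := by linarith
        _ ≤ ‖(σ+1) • x + t • z1‖ := h3
        _ = ‖t • z1 + (σ+1) • x‖ := by rw [add_comm]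
    simp only [hFF]
    linarith
  have hσp2 : σp ≤ 2 := by
    have h : ‖t • z1 + σp • x‖ ≤ 1 := hσp.1
    have e : (t • z1 + σp • x) - t • z1 = σp • x := by module
    have hn := norm_sub_le (t • z1 + σp • x) (t • z1)
    rw [e, norm_smul, hx, Real.norm_eq_abs, mul_one] at hn
    have := le_abs_self σp
    linarith
  have h0mem : (0:ℝ) ∈ Set.Icc (FF 2) (FF σp) :=
    ⟨(hFFneg 2 one_le_two).le, by simp only [hFF]; linarith⟩
  obtain ⟨A, hAmem, hA0⟩ := intermediate_value_Icc' hσp2 hFFcont.continuousOn h0mem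
  have hAgt : σp < A := by
    rcases lt_or_eq_of_le hAmem.1 with h|h
    · exact h
    · exfalso; rw [← h] at hA0; simp only [hFF] at hA0; linarith
  have hA1 : A < 1 := by
    by_contra h
    push_neg at h
    exact absurd hA0 (hFFneg A h).ne
  have hσplb : 1 - ‖t • z1‖ ≤ σp := by
    apply hσp.2
    show ‖t • z1 + (1 - ‖t • z1‖) • x‖ ≤ 1
    have h4 : ‖(1 - ‖t • z1‖) • x‖ = 1 - ‖t • z1‖ := by
      rw [norm_smul, hx, Real.norm_eq_abs,
        abs_of_nonneg (by linarith : (0:ℝ) ≤ 1 - ‖t • z1‖), mul_one]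
    calc ‖t • z1 + (1 - ‖t • z1‖) • x‖ ≤ ‖t • z1‖ + ‖(1 - ‖t • z1‖) • x‖ := norm_add_le _ _
      _ = 1 := by rw [h4]; ring
  have hAlb : 1 - t < A := by linarith
  have hA0' : 0 < A := by linarith
  have hgA : 1 < ‖t • z1 + A • x‖ := by
    by_contra h
    push_neg at h
    exact absurd (hσp.2 h) (not_le.2 hAgt)
  -- pass to the function u ↦ ‖z1 + u • x‖
  have keyg : ∀ σ : ℝ, ‖t • z1 + σ • x‖ = t * ‖z1 + (σ/t) • x‖ := by
    intro σ
    have e : t • z1 + σ • x = t • (z1 + (σ/t) • x) := by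
      rw [smul_add, smul_smul]
      congr 2
      field_simp
    rw [e, norm_smul, Real.norm_eq_abs, abs_of_nonneg ht0.le]
  have hab : ‖z1 + ((A-1)/t) • x‖ = ‖z1 + ((A+1)/t) • x‖ := by
    have e1 : t • z1 + A • x - x = t • z1 + (A-1) • x := by module
    have e2 : t • z1 + A • x + x = t • z1 + (A+1) • x := by module
    have h' : ‖t • z1 + (A-1) • x‖ = ‖t • z1 + (A+1) • x‖ := by
      have := sub_eq_zero.1 hA0
      rw [e1, e2] at this
      exact this
    rw [keyg, keyg] at h'
    exact mul_left_cancel₀ ht0.ne' h'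
  set R := ‖z1 + x‖ with hR
  have hR1 : 1 ≤ R := by
    have c4 : (z1 + x) - (z1 - x) = (2:ℝ) • x := by module
    have h' : ‖(z1 + x) - (z1 - x)‖ ≤ ‖z1 + x‖ + ‖z1 - x‖ := norm_sub_le _ _
    rw [c4, norm_smul, hx, ← hb] at h'
    simp only [Real.norm_eq_abs] at h'
    rw [abs_of_nonneg (by norm_num : (0:ℝ) ≤ 2)] at h'
    linarith
  set B := (A+1)/t with hB
  have hB1 : 1 < B := by
    rw [hB, lt_div_iff₀ ht0]
    linarith
  -- R ≤ ‖z1 + B • x‖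
  have hRB : R ≤ ‖z1 + B • x‖ := by
    set l := (B-1)/(B+1) with hl
    have hB1' : (0:ℝ) < B + 1 := by linarith
    have hl0 : 0 ≤ l := div_nonneg (by linarith) (by linarith)
    have hl1 : 1 - l = 2/(B+1) := by rw [hl]; field_simp; ring
    have hl1' : 0 < 1 - l := by rw [hl1]; positivity
    have c : z1 + (1:ℝ) • x = l • (z1 - x) + (1-l) • (z1 + B • x) := by
      rw [hl]
      match_scalars <;> (field_simp; try ring)
    have i : ‖z1 + (1:ℝ) • x‖ ≤ l * ‖z1 - x‖ + (1-l) * ‖z1 + B • x‖ :=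
      norm_combo hl0 hl1'.le _ _ _ c
    rw [one_smul, ← hR, ← hb] at i
    nlinarith
  set μ := (1-A)/t with hμ
  have hμ0 : 0 < μ := div_pos (by linarith) ht0
  have hμ1 : μ < 1 := by rw [hμ, div_lt_one ht0]; linarith
  have hRa : ‖z1 + ((A-1)/t) • x‖ ≤ μ * R + (1-μ) * ‖z1‖ := by
    have c : z1 + ((A-1)/t) • x = μ • (z1 - x) + (1-μ) • z1 := by
      rw [hμ]
      match_scalars <;> (field_simp; try ring)
    have i : ‖z1 + ((A-1)/t) • x‖ ≤ μ * ‖z1 - x‖ + (1-μ) * ‖z1‖ :=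
      norm_combo hμ0.le (by linarith) _ _ _ c
    rw [← hb] at i
    exact i
  -- chain
  have hchain : R ≤ μ * R + (1-μ) * ‖z1‖ := by
    calc R ≤ ‖z1 + B • x‖ := hRB
      _ = ‖z1 + ((A-1)/t) • x‖ := by rw [hB, ← hab]
      _ ≤ μ * R + (1-μ) * ‖z1‖ := hRa
  have hRz : R ≤ ‖z1‖ := by nlinarith
  have hReq : R = 1 := le_antisymm (hRz.trans hz) hR1
  have hz1eq : ‖z1‖ = 1 := le_antisymm hz (hReq ▸ hRz)
  have hnb : ‖z1 + B • x‖ = 1 := by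
    have h1 : ‖z1 + B • x‖ ≤ 1 := by
      rw [← hab]
      calc ‖z1 + ((A-1)/t) • x‖ ≤ μ * R + (1-μ) * ‖z1‖ := hRa
        _ = 1 := by rw [hReq, hz1eq]; ring
    linarith [hReq ▸ hRB]
  have hna : ‖z1 + ((A-1)/t) • x‖ = 1 := hab.trans hnb
  -- midpoint
  have hmidc : z1 + (A/t) • x =
      (1/2 : ℝ) • (z1 + ((A-1)/t) • x) + (1/2 : ℝ) • (z1 + ((A+1)/t) • x) := by
    match_scalars <;> (field_simp; try ring)
  have hmid : ‖z1 + (A/t) • x‖ ≤ 1 := by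
    have i := norm_combo (by norm_num : (0:ℝ) ≤ 1/2) (by norm_num : (0:ℝ) ≤ 1/2) _ _ _ hmidc
    rw [hna, ← hB, hnb] at i
    linarith
  have h9 : t * ‖z1 + (A/t) • x‖ ≤ t * 1 := mul_le_mul_of_nonneg_left hmid ht0.le
  rw [mul_one] at h9
  have h10 : ‖t • z1 + A • x‖ ≤ t := by rw [keyg A]; exact h9
  linarith


lemma fiber_exists (x z1 : V) (hx : ‖x‖ = 1) (hb : ‖z1 + x‖ = ‖z1 - x‖)
    (hz : ‖z1‖ ≤ 1) {t : ℝ} (ht0 : 0 ≤ t) (ht1 : t ≤ 1) :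
    ∃ σ : ℝ, ‖(t • z1 + σ • x) + x‖ = ‖(t • z1 + σ • x) - x‖ ∧ ‖t • z1 + σ • x‖ ≤ 1 := by
  rcases eq_or_lt_of_le ht0 with h0|h0
  · refine ⟨0, ?_, ?_⟩
    · rw [← h0]
      simp only [zero_smul, add_zero, zero_add, zero_sub, norm_neg]
    · rw [← h0]; simp [hx]
  rcases eq_or_lt_of_le ht1 with h1|h1
  · refine ⟨0, ?_, ?_⟩
    · rw [h1]; simpa using hb
    · rw [h1]; simpa using hz
  have hw : ‖t • z1‖ ≤ t := by
    rw [norm_smul, Real.norm_eq_abs, abs_of_nonneg h0.le]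
    nlinarith [norm_nonneg z1]
  set C := {σ : ℝ | ‖t • z1 + σ • x‖ ≤ 1} with hC
  have hCclosed : IsClosed C := isClosed_le (by fun_prop) continuous_const
  have hCsub : C ⊆ Set.Icc (-2 : ℝ) 2 := by
    intro σ hσ
    have h : ‖t • z1 + σ • x‖ ≤ 1 := hσ
    have e : (t • z1 + σ • x) - t • z1 = σ • x := by module
    have hn := norm_sub_le (t • z1 + σ • x) (t • z1)
    rw [e, norm_smul, hx, Real.norm_eq_abs, mul_one] at hn
    have h2 := abs_le.1 (by linarith : |σ| ≤ 2)
    exact ⟨h2.1, h2.2⟩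
  have hCcomp : IsCompact C := isCompact_Icc.of_isClosed_subset hCclosed hCsub
  have hC0 : (0:ℝ) ∈ C := by
    show ‖t • z1 + (0:ℝ) • x‖ ≤ 1
    rw [zero_smul, add_zero]
    linarith
  obtain ⟨σp, hσp⟩ := hCcomp.exists_isGreatest ⟨0, hC0⟩
  obtain ⟨σm, hσm⟩ := hCcomp.exists_isLeast ⟨0, hC0⟩
  have hrt := right_aux x z1 hx hb hz h0 h1 hσp
  have hbneg : ‖(-z1) + x‖ = ‖(-z1) - x‖ := by
    rw [show -z1 + x = -(z1 - x) by abel, show -z1 - x = -(z1 + x) by abel,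
      norm_neg, norm_neg, hb]
  have hσm' : IsGreatest {σ : ℝ | ‖t • (-z1) + σ • x‖ ≤ 1} (-σm) := by
    constructor
    · show ‖t • (-z1) + (-σm) • x‖ ≤ 1
      rw [show t • (-z1) + (-σm) • x = -(t • z1 + σm • x) by module, norm_neg]
      exact hσm.1
    · intro σ hσ
      have hσ' : ‖t • (-z1) + σ • x‖ ≤ 1 := hσ
      have : (-σ) ∈ C := by
        show ‖t • z1 + (-σ) • x‖ ≤ 1
        rw [show t • z1 + (-σ) • x = -(t • (-z1) + σ • x) by module, norm_neg]
        exact hσ'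
      have := hσm.2 this
      linarith
  have hlt := right_aux x (-z1) hx hbneg (by rwa [norm_neg]) h0 h1 hσm'
  have hlt2 : ‖t • z1 + σm • x + x‖ ≤ ‖t • z1 + σm • x - x‖ := by
    rw [show t • (-z1) + (-σm) • x - x = -(t • z1 + σm • x + x) by module,
      show t • (-z1) + (-σm) • x + x = -(t • z1 + σm • x - x) by module,
      norm_neg, norm_neg] at hlt
    exact hlt
  set D : ℝ → ℝ := fun σ => ‖t • z1 + σ • x + x‖ - ‖t • z1 + σ • x - x‖ with hD
  have hDcont : Continuous D := by fun_prop
  have hms : σm ≤ σp := hσm.2 hσp.1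
  have h0mem : (0:ℝ) ∈ Set.Icc (D σm) (D σp) := by
    constructor
    · simp only [hD]; linarith
    · simp only [hD]; linarith
  obtain ⟨σ, hσIcc, hσ0⟩ := intermediate_value_Icc hms hDcont.continuousOn h0mem
  refine ⟨σ, ?_, ?_⟩
  · have : D σ = 0 := hσ0
    simp only [hD] at this
    linarith [this]
  · rcases eq_or_lt_of_le hms with he|hlt3
    · have hσeq : σ = σm := le_antisymm (he ▸ hσIcc.2) hσIcc.1
      rw [hσeq]; exact hσm.1
    · set ν := (σp - σ)/(σp - σm) with hν
      have hd : (0:ℝ) < σp - σm := by linarith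
      have hν0 : 0 ≤ ν := div_nonneg (by linarith [hσIcc.2]) hd.le
      have hν1 : 0 ≤ 1 - ν := by
        rw [hν]
        rw [sub_nonneg, div_le_one hd]
        linarith [hσIcc.1]
      have hcomb : t • z1 + σ • x = ν • (t • z1 + σm • x) + (1-ν) • (t • z1 + σp • x) := by
        rw [hν]
        match_scalars <;> (field_simp; try ring)
      calc ‖t • z1 + σ • x‖ ≤ ν * ‖t • z1 + σm • x‖ + (1-ν) * ‖t • z1 + σp • x‖ :=
            norm_combo hν0 hν1 _ _ _ hcomb
        _ ≤ ν * 1 + (1-ν) * 1 := by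
            have := hσm.1
            have := hσp.1
            gcongr
            · exact hσm.1
            · exact hσp.1
        _ = 1 := by ring

end Aux

set_option maxHeartbeats 2000000 in
/-- **Proposition.** For any unit vector `x` in a Minkowski plane, the inner bisector
`bis(-x,x) ∩ B` is homeomorphic to the compact interval `[0,1]`. -/
theorem inner_bisector_homeomorphic_to_interval
    (V : Type*) [NormedAddCommGroup V] [NormedSpace ℝ V]
    (hdim : Module.finrank ℝ V = 2)
    (x : V) (hx : ‖x‖ = 1) :
    Nonempty (↥(bisector (-x) x ∩ closedBall (0 : V) 1) ≃ₜ Set.Icc (0 : ℝ) 1) := by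
  haveI hfd : FiniteDimensional ℝ V := FiniteDimensional.of_finrank_pos (by rw [hdim]; norm_num)
  have hx0 : x ≠ 0 := by
    intro h; rw [h, norm_zero] at hx; norm_num at hx
  -- find y making a basis
  have hspan : (Submodule.span ℝ {x} : Submodule ℝ V) ≠ ⊤ := by
    intro h
    have h1 := finrank_span_singleton (K := ℝ) hx0
    rw [h, finrank_top, hdim] at h1
    norm_num at h1
  obtain ⟨y, hy⟩ : ∃ y, y ∉ Submodule.span ℝ ({x} : Set V) := by
    by_contra h
    push_neg at h
    exact hspan (Submodule.eq_top_iff'.2 h)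
  have hy0 : y ≠ 0 := fun h => hy (h ▸ Submodule.zero_mem _)
  have hli : LinearIndependent ℝ ![x, y] := by
    rw [linearIndependent_fin2]
    refine ⟨by simpa using hy0, fun a ha => ?_⟩
    simp only [Matrix.cons_val_one, Matrix.head_cons, Matrix.cons_val_zero] at ha
    apply hy
    have ha0 : a ≠ 0 := by
      intro h; rw [h, zero_smul] at ha; exact hx0 ha.symm
    rw [Submodule.mem_span_singleton]
    exact ⟨a⁻¹, by rw [← ha, smul_smul, inv_mul_cancel₀ ha0, one_smul]⟩
  let bV : Module.Basis (Fin 2) ℝ V :=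
    basisOfLinearIndependentOfCardEqFinrank hli (by rw [hdim]; simp)
  have hbV : ⇑bV = ![x, y] := coe_basisOfLinearIndependentOfCardEqFinrank hli _
  have hb0 : bV 0 = x := by rw [hbV]; simp
  have hb1 : bV 1 = y := by rw [hbV]; simp
  set ℓ : V →ₗ[ℝ] ℝ := bV.coord 1 with hℓ
  have hℓcont : Continuous ℓ := ℓ.continuous_of_finiteDimensional
  have hℓx : ℓ x = 0 := by
    rw [hℓ, ← hb0, Module.Basis.coord_apply, Module.Basis.repr_self]
    simp
  have hℓy : ℓ y = 1 := by
    rw [hℓ, ← hb1, Module.Basis.coord_apply, Module.Basis.repr_self]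
    simp
  -- membership reformulation
  set S := bisector (-x) x ∩ closedBall (0:V) 1 with hS
  have hmem : ∀ z : V, z ∈ S ↔ (‖z + x‖ = ‖z - x‖ ∧ ‖z‖ ≤ 1) := by
    intro z
    constructor
    · rintro ⟨h1, h2⟩
      refine ⟨?_, ?_⟩
      · have := h1
        simp only [bisector, Set.mem_setOf_eq, sub_neg_eq_add] at this
        exact this
      · simpa [dist_eq_norm] using h2
    · rintro ⟨h1, h2⟩
      constructor
      · simp only [bisector, Set.mem_setOf_eq, sub_neg_eq_add]
        exact h1
      · simpa [dist_eq_norm] using h2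
  have hSclosed : IsClosed S := by
    apply IsClosed.inter
    · exact isClosed_eq (by fun_prop) (by fun_prop)
    · exact isClosed_closedBall
  have hScomp : IsCompact S :=
    (isCompact_closedBall (0:V) 1).of_isClosed_subset hSclosed Set.inter_subset_right
  have h0S : (0:V) ∈ S := by
    rw [hmem]
    constructor
    · rw [zero_add, zero_sub, norm_neg]
    · simp
  have hnegS : ∀ z ∈ S, -z ∈ S := by
    intro z hz
    rw [hmem] at hz ⊢
    refine ⟨?_, by rw [norm_neg]; exact hz.2⟩
    rw [show -z + x = -(z - x) by abel, show -z - x = -(z + x) by abel, norm_neg, norm_neg,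
      hz.1]
  -- injectivity of ℓ on S
  have hinj : Set.InjOn ℓ S := by
    intro z1 h1 z2 h2 he
    have hc1 : bV.repr (z2 - z1) 1 = 0 := by
      have : ℓ (z2 - z1) = 0 := by rw [map_sub, he, sub_self]
      rwa [hℓ, Module.Basis.coord_apply] at this
    have hrep := bV.sum_repr (z2 - z1)
    rw [Fin.sum_univ_two, hc1, zero_smul, add_zero, hb0] at hrep
    set s := bV.repr (z2 - z1) 0 with hs
    have hz2 : z2 = z1 + s • x := by rw [hrep]; abel
    have e1 := ((hmem z1).1 h1).1
    have e2 := ((hmem z2).1 h2).1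
    have n1 := ((hmem z1).1 h1).2
    have n2 := ((hmem z2).1 h2).2
    rcases lt_trichotomy s 0 with hsn|hsn|hsn
    · exfalso
      have hz1 : z1 = z2 + (-s) • x := by rw [hz2]; module
      refine inj_aux x z2 hx (s := -s) (by linarith) e2 ?_ n2 ?_
      · rw [← hz1]; exact e1
      · rw [← hz1]; exact n1
    · rw [hz2, hsn, zero_smul, add_zero]
    · exfalso
      refine inj_aux x z1 hx hsn e1 ?_ n1 ?_
      · rw [← hz2]; exact e2
      · rw [← hz2]; exact n2
  -- image is an interval
  set K := ℓ '' S with hK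
  have hKcomp : IsCompact K := hScomp.image hℓcont
  have h0K : (0:ℝ) ∈ K := ⟨0, h0S, map_zero ℓ⟩
  have hKneg : ∀ v ∈ K, -v ∈ K := by
    rintro v ⟨z, hzS, rfl⟩
    exact ⟨-z, hnegS z hzS, by rw [map_neg]⟩
  have hKscale : ∀ v ∈ K, ∀ u : ℝ, 0 ≤ u → u ≤ 1 → u * v ∈ K := by
    rintro v ⟨z, hzS, rfl⟩ u hu0 hu1
    obtain ⟨σ, hσb, hσn⟩ :=
      fiber_exists x z hx ((hmem z).1 hzS).1 ((hmem z).1 hzS).2 hu0 hu1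
    refine ⟨u • z + σ • x, (hmem _).2 ⟨hσb, hσn⟩, ?_⟩
    rw [map_add, map_smul, map_smul, hℓx, smul_eq_mul, smul_eq_mul, mul_zero, add_zero]
  obtain ⟨c, hcK, hcub⟩ := hKcomp.exists_isGreatest ⟨0, h0K⟩
  -- c is positive : find a bisector point with ℓ ≠ 0
  have hy2pos : 0 < ‖y‖ := norm_pos_iff.2 hy0
  set y2 : V := (1/(2*‖y‖)) • y with hy2
  have hy2n : ‖y2‖ = 1/2 := by
    rw [hy2, norm_smul, Real.norm_eq_abs, abs_of_pos (by positivity)]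
    field_simp
  have hℓy2 : ℓ y2 = 1/(2*‖y‖) := by
    rw [hy2, map_smul, hℓy, smul_eq_mul, mul_one]
  have hℓy2pos : 0 < ℓ y2 := by rw [hℓy2]; positivity
  set Df : V → ℝ := fun z => ‖z + x‖ - ‖z - x‖ with hDf
  have hseg : ∀ u v : V, ‖u‖ ≤ 1 → ‖v‖ ≤ 1 → 0 ≤ Df u → Df v ≤ 0 →
      ∃ lam : ℝ, lam ∈ Set.Icc (0:ℝ) 1 ∧ Df ((1-lam) • u + lam • v) = 0 ∧
        ‖(1-lam) • u + lam • v‖ ≤ 1 := by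
    intro u v hu hv hDu hDv
    have hcont : Continuous fun lam : ℝ => Df ((1-lam) • u + lam • v) := by
      simp only [hDf]
      fun_prop
    have h0m : (0:ℝ) ∈ Set.Icc (Df ((1-(1:ℝ)) • u + (1:ℝ) • v)) (Df ((1-(0:ℝ)) • u + (0:ℝ) • v)) := by
      constructor
      · simpa using hDv
      · simpa using hDu
    obtain ⟨lam, hlam, hlam0⟩ :=
      intermediate_value_Icc' (by norm_num : (0:ℝ) ≤ 1) hcont.continuousOn h0m
    refine ⟨lam, hlam, hlam0, ?_⟩
    calc ‖(1-lam) • u + lam • v‖ ≤ ‖(1-lam) • u‖ + ‖lam • v‖ := norm_add_le _ _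
      _ ≤ (1-lam) * 1 + lam * 1 := by
          rw [norm_smul, norm_smul, Real.norm_eq_abs, Real.norm_eq_abs,
            abs_of_nonneg (by linarith [hlam.2] : (0:ℝ) ≤ 1 - lam),
            abs_of_nonneg hlam.1]
          nlinarith [hlam.1, hlam.2, hu, hv, norm_nonneg u, norm_nonneg v]
      _ = 1 := by ring
  have hzstar : ∃ z ∈ S, 0 < ℓ z := by
    have hDfx : Df x = 2 := by
      rw [hDf]
      simp only [sub_self, norm_zero]
      rw [show x + x = (2:ℝ) • x by module, norm_smul, hx]
      norm_num
    have hDfnx : Df (-x) = -2 := by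
      rw [hDf]
      simp only [neg_add_cancel, norm_zero]
      rw [show -x - x = (-2:ℝ) • x by module, norm_smul, hx]
      norm_num
    rcases lt_trichotomy (Df y2) 0 with hcase|hcase|hcase
    · -- segment from x to y2
      obtain ⟨lam, hlam, hz0, hzn⟩ := hseg x y2 (le_of_eq hx) (by rw [hy2n]; norm_num)
        (by rw [hDfx]; norm_num) hcase.le
      refine ⟨(1-lam) • x + lam • y2, (hmem _).2 ⟨?_, hzn⟩, ?_⟩
      · simp only [hDf] at hz0; linarith
      · simp only [map_add, map_smul, smul_eq_mul, hℓx, hℓy2, mul_zero, zero_add]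
        have hlamne : lam ≠ 0 := by
          intro h
          rw [h] at hz0
          simp only [sub_zero, one_smul, zero_smul, add_zero] at hz0
          rw [hDfx] at hz0
          norm_num at hz0
        have hlp : 0 < lam := lt_of_le_of_ne hlam.1 (Ne.symm hlamne)
        have : (0:ℝ) < 1/(2*‖y‖) := by positivity
        positivity
    · exact ⟨y2, (hmem _).2 ⟨by simp only [hDf] at hcase; linarith, by rw [hy2n]; norm_num⟩,
        hℓy2pos⟩
    · -- segment from y2 to -x
      obtain ⟨lam, hlam, hz0, hzn⟩ := hseg y2 (-x) (by rw [hy2n]; norm_num)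
        (by rw [norm_neg, hx]) hcase.le (by rw [hDfnx]; norm_num)
      refine ⟨(1-lam) • y2 + lam • (-x), (hmem _).2 ⟨?_, hzn⟩, ?_⟩
      · simp only [hDf] at hz0; linarith
      · simp only [map_add, map_smul, map_neg, smul_eq_mul, hℓx, hℓy2, mul_zero, neg_zero,
          add_zero]
        have hlamne : lam ≠ 1 := by
          intro h
          rw [h] at hz0
          simp only [sub_self, zero_smul, one_smul, zero_add] at hz0
          rw [hDfnx] at hz0
          norm_num at hz0
        have hlp : lam < 1 := lt_of_le_of_ne hlam.2 hlamne
        have h1l : (0:ℝ) < 1 - lam := by linarith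
        have : (0:ℝ) < 1/(2*‖y‖) := by positivity
        positivity
  obtain ⟨zs, hzsS, hzspos⟩ := hzstar
  have hc0 : 0 < c := lt_of_lt_of_le hzspos (hcub ⟨zs, hzsS, rfl⟩)
  have hKIcc : K = Set.Icc (-c) c := by
    apply Set.Subset.antisymm
    · intro v hv
      exact ⟨by have := hcub (hKneg v hv); linarith, hcub hv⟩
    · rintro v ⟨hv1, hv2⟩
      rcases le_total 0 v with hv0|hv0
      · have hveq : v = (v/c) * c := by field_simp
        rw [hveq]
        exact hKscale c hcK (v/c) (div_nonneg hv0 hc0.le) ((div_le_one hc0).2 hv2)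
      · have hmv : -v ∈ K := by
          have hveq : -v = ((-v)/c) * c := by field_simp
          rw [hveq]
          exact hKscale c hcK ((-v)/c) (div_nonneg (by linarith) hc0.le)
            ((div_le_one hc0).2 (by linarith))
        simpa using hKneg _ hmv
  -- assemble the homeomorphism
  haveI : CompactSpace ↥S := isCompact_iff_compactSpace.1 hScomp
  let f : ↥S → ↥K := fun z => ⟨ℓ z, ⟨(z : V), z.2, rfl⟩⟩
  have hfbij : Function.Bijective f := by
    constructor
    · intro z1 z2 h
      apply Subtype.ext
      exact hinj z1.2 z2.2 (congrArg Subtype.val h)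
    · rintro ⟨v, z, hzS, rfl⟩
      exact ⟨⟨z, hzS⟩, rfl⟩
  have hfcont : Continuous f :=
    Continuous.subtype_mk (hℓcont.comp continuous_subtype_val) _
  let e1 : ↥S ≃ₜ ↥K :=
    Continuous.homeoOfEquivCompactToT2 (f := Equiv.ofBijective f hfbij) hfcont
  let e2 : ↥K ≃ₜ ↥(Set.Icc (-c) c) := Homeomorph.setCongr hKIcc
  let e3 : ↥(Set.Icc (-c) c) ≃ₜ ↥(Set.Icc (0:ℝ) 1) := iccHomeoI (-c) c (by linarith)
  exact ⟨(e1.trans e2).trans e3⟩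
end

section
/- Let (V, ‖·‖) be a rectilinear Minkowski plane, i.e., a Minkowski plane whose unit ball is a parallelogram. Then c_B(‖·‖) = 1/2. -/
open Metric

/-- The generalized sine function `s(x,y) = inf_{t ∈ ℝ} ‖x + t y‖`. -/
noncomputable def sine {V : Type*} [NormedAddCommGroup V] [NormedSpace ℝ V] (x y : V) : ℝ :=
  ⨅ t : ℝ, ‖x + t • y‖

/-- The inner projection of the bisector of `[-x, x]`. -/
noncomputable def innerProjection {V : Type*} [NormedAddCommGroup V] [NormedSpace ℝ V]
    (x : V) : Set V :=
  {w : V | ∃ z ∈ (bisector (-x) x ∩ closedBall (0 : V) 1) \ {0}, w = ‖z‖⁻¹ • z}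

/-- The constant `c_B = inf_{x ∈ S} inf_{w ∈ P_I(x)} s(w, x)`. -/
noncomputable def cB (V : Type*) [NormedAddCommGroup V] [NormedSpace ℝ V] : ℝ :=
  sInf {r : ℝ | ∃ x ∈ sphere (0 : V) 1, ∃ w ∈ innerProjection x, r = sine w x}

lemma norm_fin2 (y : Fin 2 → ℝ) : ‖y‖ = max |y 0| |y 1| := by
  apply le_antisymm
  · apply pi_norm_le_iff_of_nonneg (le_trans (abs_nonneg _) (le_max_left _ _)) |>.2
    intro i
    fin_cases i
    · simpa [Real.norm_eq_abs] using le_max_left |y 0| |y 1|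
    · simpa [Real.norm_eq_abs] using le_max_right |y 0| |y 1|
  · refine max_le ?_ ?_
    · simpa [Real.norm_eq_abs] using norm_le_pi_norm y 0
    · simpa [Real.norm_eq_abs] using norm_le_pi_norm y 1

lemma core1 (p u v : ℝ) (hp : |p| ≤ 1) (hu : 0 ≤ u) (hv : 0 ≤ v)
    (huv : max |u| |v| ≤ 1)
    (hb : max |u+p| |v+1| = max |u-p| |v-1|) (t : ℝ) :
    max |u| |v| / 2 ≤ max |u + t*p| |v + t| := by
  rw [abs_of_nonneg hu, abs_of_nonneg hv] at huv ⊢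
  have hu1 : u ≤ 1 := le_trans (le_max_left _ _) huv
  have hv1 : v ≤ 1 := le_trans (le_max_right _ _) huv
  obtain ⟨hp1, hp2⟩ := abs_le.mp hp
  rcases eq_or_lt_of_le hv with hv0 | hv0
  · -- v = 0
    have hv0 : v = 0 := hv0.symm
    subst hv0
    rw [max_eq_left hu]
    rcases le_or_gt (u/2) |0 + t| with h | h
    · exact le_trans h (le_max_right _ _)
    · refine le_trans ?_ (le_max_left _ _)
      rw [zero_add] at h
      have h1 : |t*p| ≤ |t| := by
        rw [abs_mul]; nlinarith [abs_nonneg t]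
      have h2 : u - |t*p| ≤ |u + t*p| := by
        nlinarith [neg_abs_le (t*p), le_abs_self (u + t*p)]
      linarith
  · -- v > 0
    have hvp1 : |v+1| = v + 1 := abs_of_nonneg (by linarith)
    have hvm1 : |v-1| = 1 - v := by rw [abs_sub_comm]; exact abs_of_nonneg (by linarith)
    rw [hvp1, hvm1] at hb
    have key : v + 1 ≤ |u - p| := by
      have h1 : v + 1 ≤ max |u-p| (1-v) := by
        rw [← hb]; exact le_max_right _ _
      rcases le_max_iff.mp h1 with h | h
      · exact h
      · linarith
    have hup : v + 1 ≤ u - p := by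
      rcases abs_cases (u - p) with ⟨he, _⟩ | ⟨he, _⟩
      · linarith [he ▸ key]
      · exfalso; rw [he] at key; linarith
    have hpneg : p < 0 := by linarith
    have huv' : v ≤ u := by linarith
    rw [max_eq_left huv']
    rcases le_or_gt (u/2) |v + t| with h | h
    · exact le_trans h (le_max_right _ _)
    · refine le_trans ?_ (le_max_left _ _)
      refine le_trans ?_ (le_abs_self _)
      have ht : t < u/2 - v := by
        have := le_abs_self (v + t); linarith
      nlinarith [mul_pos (sub_pos.2 ht) (neg_pos.2 hpneg),
        mul_nonneg (by linarith : (0:ℝ) ≤ 1 + p) hu,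
        mul_nonneg hv (by linarith : (0:ℝ) ≤ -p)]

lemma core2 (p u v : ℝ) (hp : |p| ≤ 1) (hv : 0 ≤ v)
    (huv : max |u| |v| ≤ 1)
    (hb : max |u+p| |v+1| = max |u-p| |v-1|) (t : ℝ) :
    max |u| |v| / 2 ≤ max |u + t*p| |v + t| := by
  rcases le_or_gt 0 u with hu | hu
  · exact core1 p u v hp hu hv huv hb t
  · have h := core1 (-p) (-u) v (by rwa [abs_neg]) (by linarith) hv
      (by rwa [abs_neg])
      (by rw [show (-u) + (-p) = -(u+p) by ring, show (-u) - (-p) = -(u-p) by ring,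
            abs_neg, abs_neg]; exact hb) t
    rw [show (-u) + t*(-p) = -(u + t*p) by ring, abs_neg, abs_neg] at h
    exact h

lemma core3 (p u v : ℝ) (hp : |p| ≤ 1)
    (huv : max |u| |v| ≤ 1)
    (hb : max |u+p| |v+1| = max |u-p| |v-1|) (t : ℝ) :
    max |u| |v| / 2 ≤ max |u + t*p| |v + t| := by
  rcases le_or_gt 0 v with hv | hv
  · exact core2 p u v hp hv huv hb t
  · have h := core2 p (-u) (-v) hp (by linarith)
      (by rwa [abs_neg, abs_neg])
      (by rw [show (-u) + p = -(u-p) by ring, show (-v) + 1 = -(v-1) by ring,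
            show (-u) - p = -(u+p) by ring, show (-v) - 1 = -(v+1) by ring,
            abs_neg, abs_neg, abs_neg, abs_neg]; exact hb.symm) (-t)
    rw [show (-u) + (-t)*p = -(u + t*p) by ring, show (-v) + (-t) = -(v + t) by ring,
      abs_neg, abs_neg, abs_neg, abs_neg] at h
    exact h

lemma core4 (p q u v : ℝ) (hq : |q| = 1) (hp : |p| ≤ 1)
    (huv : max |u| |v| ≤ 1)
    (hb : max |u+p| |v+q| = max |u-p| |v-q|) (t : ℝ) :
    max |u| |v| / 2 ≤ max |u + t*p| |v + t*q| := by
  rcases abs_eq (by norm_num : (0:ℝ) ≤ 1) |>.mp hq with h1 | h1 <;> subst h1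
  · simpa using core3 p u v hp huv hb t
  · have h := core3 p u (-v) hp (by rwa [abs_neg])
      (by rw [show (-v) + 1 = -(v + (-1)) by ring, show (-v) - 1 = -(v - (-1)) by ring,
            abs_neg, abs_neg]; exact hb) t
    rw [show (-v) + t = -(v + t*(-1)) by ring, abs_neg, abs_neg] at h
    exact h

lemma core (p q u v : ℝ) (hx : max |p| |q| = 1)
    (huv : max |u| |v| ≤ 1)
    (hb : max |u+p| |v+q| = max |u-p| |v-q|) (t : ℝ) :
    max |u| |v| / 2 ≤ max |u + t*p| |v + t*q| := by
  rcases max_eq_iff.mp hx with ⟨h1, h2⟩ | ⟨h1, h2⟩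
  · have h := core4 q p v u h1 (h1 ▸ h2) (by rwa [max_comm])
      (by rw [max_comm |v+q|, max_comm |v-q|]; exact hb) t
    rwa [max_comm |v + t*q|, max_comm |v|] at h
  · exact core4 p q u v h1 (h1 ▸ h2) huv hb t

lemma lower_bound (x w : Fin 2 → ℝ) (hx : x ∈ sphere (0 : Fin 2 → ℝ) 1)
    (hw : w ∈ innerProjection x) : 1/2 ≤ sine w x := by
  rw [mem_sphere_zero_iff_norm] at hx
  obtain ⟨z, ⟨⟨hzb, hzball⟩, hz0⟩, hwz⟩ := hw
  rw [Set.mem_singleton_iff] at hz0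
  rw [mem_closedBall_zero_iff] at hzball
  have hzn : 0 < ‖z‖ := norm_pos_iff.2 hz0
  have hbis : ‖z + x‖ = ‖z - x‖ := by
    have := hzb
    rwa [bisector, Set.mem_setOf_eq, sub_neg_eq_add] at this
  -- key: for all s, ‖z‖/2 ≤ ‖z + s • x‖
  have key : ∀ s : ℝ, ‖z‖ / 2 ≤ ‖z + s • x‖ := by
    intro s
    have hx' : max |x 0| |x 1| = 1 := by rw [← norm_fin2]; exact hx
    have hz' : max |z 0| |z 1| ≤ 1 := by rw [← norm_fin2]; exact hzball
    have hb' : max |z 0 + x 0| |z 1 + x 1| = max |z 0 - x 0| |z 1 - x 1| := by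
      have h1 : ‖z + x‖ = max |z 0 + x 0| |z 1 + x 1| := by
        rw [norm_fin2]; simp [Pi.add_apply]
      have h2 : ‖z - x‖ = max |z 0 - x 0| |z 1 - x 1| := by
        rw [norm_fin2]; simp [Pi.sub_apply]
      rw [← h1, ← h2]; exact hbis
    have h := core (x 0) (x 1) (z 0) (z 1) hx' hz' hb' s
    rw [norm_fin2 z, norm_fin2 (z + s • x)]
    simpa [Pi.add_apply, Pi.smul_apply, smul_eq_mul] using h
  rw [sine]
  apply le_ciInf
  intro t
  have hrw : w + t • x = ‖z‖⁻¹ • (z + (t * ‖z‖) • x) := by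
    rw [hwz, smul_add, smul_smul]
    congr 2
    field_simp
  rw [hrw, norm_smul, norm_inv, norm_norm]
  calc (1:ℝ)/2 = ‖z‖⁻¹ * (‖z‖/2) := by field_simp
  _ ≤ ‖z‖⁻¹ * ‖z + (t * ‖z‖) • x‖ := by
      apply mul_le_mul_of_nonneg_left (key _) (by positivity)

lemma upper_bound (a : ℝ) (ha0 : 0 < a) (ha1 : a < 1) :
    ∃ x ∈ sphere (0 : Fin 2 → ℝ) 1, ∃ w ∈ innerProjection x,
      sine w x ≤ 1/(1+a) := by
  set x : Fin 2 → ℝ := ![1, a] with hxdef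
  set z : Fin 2 → ℝ := ![0, 1-a] with hzdef
  set w : Fin 2 → ℝ := ![0, 1] with hwdef
  have hx0 : x 0 = 1 := rfl
  have hx1 : x 1 = a := rfl
  have hz0 : z 0 = 0 := rfl
  have hz1 : z 1 = 1 - a := rfl
  have hnx : ‖x‖ = 1 := by
    rw [norm_fin2, hx0, hx1, abs_one, abs_of_pos ha0]
    exact max_eq_left ha1.le
  have hnz : ‖z‖ = 1 - a := by
    rw [norm_fin2, hz0, hz1, abs_zero, abs_of_pos (by linarith)]
    exact max_eq_right (by linarith)
  refine ⟨x, mem_sphere_zero_iff_norm.mpr hnx, w, ⟨z, ⟨⟨?_, ?_⟩, ?_⟩, ?_⟩, ?_⟩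
  · -- bisector
    show ‖z - (-x)‖ = ‖z - x‖
    rw [sub_neg_eq_add, norm_fin2, norm_fin2]
    have e1 : (z + x) 0 = 1 := by simp [hz0, hx0]
    have e2 : (z + x) 1 = 1 := by simp [hz1, hx1]
    have e3 : (z - x) 0 = -1 := by simp [hz0, hx0]
    have e4 : (z - x) 1 = 1 - 2*a := by simp [hz1, hx1]; ring
    rw [e1, e2, e3, e4]
    rw [abs_one, abs_neg, abs_one, max_self]
    symm
    refine max_eq_left (abs_le.mpr ⟨by linarith, by linarith⟩)
  · rw [mem_closedBall_zero_iff, hnz]; linarith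
  · -- z ≠ 0
    intro h
    rw [Set.mem_singleton_iff] at h
    have := congrFun h 1
    rw [hz1] at this
    simp at this
    linarith
  · -- w = ‖z‖⁻¹ • z
    funext i
    fin_cases i
    · show w 0 = ‖z‖⁻¹ * z 0
      rw [hz0, mul_zero]; rfl
    · show w 1 = ‖z‖⁻¹ * z 1
      rw [hz1, hnz]
      show (1:ℝ) = _
      rw [inv_mul_cancel₀ (by linarith : (1:ℝ) - a ≠ 0)]
  · -- sine ≤ 1/(1+a)
    have ha1' : (0:ℝ) < 1 + a := by linarith
    have hb : BddBelow (Set.range fun t : ℝ => ‖w + t • x‖) := by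
      refine ⟨0, ?_⟩
      rintro r ⟨t, rfl⟩
      exact norm_nonneg _
    refine le_trans (ciInf_le hb (-(1+a)⁻¹)) ?_
    rw [norm_fin2]
    have e1 : (w + (-(1+a)⁻¹) • x) 0 = -(1+a)⁻¹ := by
      show (0:ℝ) + (-(1+a)⁻¹) * 1 = _; ring
    have e2 : (w + (-(1+a)⁻¹) • x) 1 = (1+a)⁻¹ := by
      show (1:ℝ) + (-(1+a)⁻¹) * a = _
      field_simp
      ring
    rw [e1, e2, abs_neg, abs_of_pos (by positivity), max_self, one_div]

lemma cB_set_subset {V W : Type*} [NormedAddCommGroup V] [NormedSpace ℝ V]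
    [NormedAddCommGroup W] [NormedSpace ℝ W] (e : V ≃ₗᵢ[ℝ] W) :
    {r : ℝ | ∃ x ∈ sphere (0 : V) 1, ∃ w ∈ innerProjection x, r = sine w x} ⊆
    {r : ℝ | ∃ x ∈ sphere (0 : W) 1, ∃ w ∈ innerProjection x, r = sine w x} := by
  rintro r ⟨x, hx, w, ⟨z, ⟨⟨hzb, hzc⟩, hz0⟩, hwz⟩, rfl⟩
  rw [Set.mem_singleton_iff] at hz0
  refine ⟨e x, ?_, e w, ⟨e z, ⟨⟨?_, ?_⟩, ?_⟩, ?_⟩, ?_⟩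
  · rw [mem_sphere_zero_iff_norm, e.norm_map]
    exact mem_sphere_zero_iff_norm.mp hx
  · show ‖e z - (-(e x))‖ = ‖e z - e x‖
    rw [show -e x = e (-x) from (map_neg e x).symm, ← map_sub e, ← map_sub e,
      e.norm_map, e.norm_map]
    exact hzb
  · rw [mem_closedBall_zero_iff, e.norm_map]
    exact mem_closedBall_zero_iff.mp hzc
  · simp only [Set.mem_singleton_iff, Set.mem_setOf_eq]
    intro h
    exact hz0 (e.injective (by simpa using h))
  · rw [hwz, map_smul e, e.norm_map]
  · rw [sine, sine]
    congr 1
    funext t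
    rw [← map_smul e, ← map_add e, e.norm_map]

lemma cB_congr {V W : Type*} [NormedAddCommGroup V] [NormedSpace ℝ V]
    [NormedAddCommGroup W] [NormedSpace ℝ W] (e : V ≃ₗᵢ[ℝ] W) :
    cB V = cB W := by
  rw [cB, cB]
  congr 1
  exact Set.Subset.antisymm (cB_set_subset e) (cB_set_subset e.symm)

/-- **Example.** In a rectilinear Minkowski plane (one whose unit ball is a
parallelogram, i.e., which is linearly isometric to `ℝ²` with the maximum norm),
`c_B = 1/2`. -/
theorem cB_of_rectilinear
    (V : Type*) [NormedAddCommGroup V] [NormedSpace ℝ V]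
    (hrect : Nonempty (V ≃ₗᵢ[ℝ] (Fin 2 → ℝ))) :
    cB V = 1/2 := by
  obtain ⟨e⟩ := hrect
  rw [cB_congr e]
  set S := {r : ℝ | ∃ x ∈ sphere (0 : Fin 2 → ℝ) 1, ∃ w ∈ innerProjection x, r = sine w x}
    with hS
  have hlb : ∀ r ∈ S, 1/2 ≤ r := by
    rintro r ⟨x, hx, w, hw, rfl⟩
    exact lower_bound x w hx hw
  have hbdd : BddBelow S := ⟨1/2, hlb⟩
  have hne : S.Nonempty := by
    obtain ⟨x, hx, w, hw, _⟩ := upper_bound (1/2) (by norm_num) (by norm_num)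
    exact ⟨sine w x, x, hx, w, hw, rfl⟩
  rw [cB, ← hS]
  apply le_antisymm
  · apply le_of_forall_pos_le_add
    intro ε hε
    have hmin : 0 < min ε 1 := lt_min hε one_pos
    set δ := min ε 1 / 2 with hδ
    have hδ0 : 0 < δ := by positivity
    have hδ1 : δ ≤ 1/2 := by
      have := min_le_right ε 1; rw [hδ]; linarith
    have hδε : δ ≤ ε/2 := by
      have := min_le_left ε 1; rw [hδ]; linarith
    obtain ⟨x, hx, w, hw, hs⟩ := upper_bound (1 - δ) (by linarith) (by linarith)
    have hmem : sine w x ∈ S := ⟨x, hx, w, hw, rfl⟩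
    have h1 : sInf S ≤ sine w x := csInf_le hbdd hmem
    have h2 : 1/(1+(1-δ)) ≤ 1/2 + ε := by
      rw [div_le_iff₀ (by linarith)]
      nlinarith
    linarith
  · exact le_csInf hne hlb
end

section
/- Let (V, ‖·‖) be a Minkowski plane and let x, y ∈ V be linearly independent vectors with x ⊣_B y. Let T_{xy} : V → V be the linear map with T_{xy}(x) = x and T_{xy}(y) = −y. Then ‖T_{xy}(z)‖ ≤ 3 for every z ∈ S. Moreover, if ‖T_{xy}(z)‖ = 3 for some z ∈ S, then the plane is rectilinear (its unit ball is a parallelogram). -/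
open Metric

/-- Birkhoff orthogonality: `‖x + t y‖ ≥ ‖x‖` for all real `t`. -/
def BirkhoffOrth {V : Type*} [NormedAddCommGroup V] [NormedSpace ℝ V] (x y : V) : Prop :=
  ∀ t : ℝ, ‖x + t • y‖ ≥ ‖x‖

/-- A Minkowski plane is rectilinear if it is linearly isometric to `ℝ²` with the
maximum norm (equivalently, its unit ball is a parallelogram). -/
def Rectilinear (V : Type*) [NormedAddCommGroup V] [NormedSpace ℝ V] : Prop :=
  Nonempty (V ≃ₗᵢ[ℝ] (Fin 2 → ℝ))

private lemma abs_add_abs_le_max (α β : ℝ) : |α| + |β| ≤ max |α + β| |α - β| := by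
  have h1 := le_abs_self (α + β)
  have h2 := neg_abs_le (α + β)
  have h3 := le_abs_self (α - β)
  have h4 := neg_abs_le (α - β)
  have h5 := le_max_left |α + β| |α - β|
  have h6 := le_max_right |α + β| |α - β|
  rcases abs_cases α with ⟨e1, _⟩ | ⟨e1, _⟩ <;> rcases abs_cases β with ⟨e2, _⟩ | ⟨e2, _⟩ <;>
    linarith

/-- **Lemma.** Let `x ⊣_B y` be linearly independent vectors in a Minkowski plane, and
let `T_{xy}` be the linear map with `T_{xy} x = x` and `T_{xy} y = -y`.  Then
`‖T_{xy} z‖ ≤ 3` for every unit vector `z`, and if equality holds for some unit vector,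
then the plane is rectilinear. -/
theorem norm_reflection_le_three
    (V : Type*) [NormedAddCommGroup V] [NormedSpace ℝ V]
    (hdim : Module.finrank ℝ V = 2)
    (x y : V) (hind : LinearIndependent ℝ ![x, y]) (hB : BirkhoffOrth x y)
    (T : V →ₗ[ℝ] V) (hTx : T x = x) (hTy : T y = -y) :
    (∀ z ∈ sphere (0 : V) 1, ‖T z‖ ≤ 3) ∧
    ((∃ z ∈ sphere (0 : V) 1, ‖T z‖ = 3) → Rectilinear V) := by
  haveI : FiniteDimensional ℝ V := FiniteDimensional.of_finrank_eq_succ hdim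
  -- Birkhoff, scaled
  have key : ∀ p q : ℝ, |p| * ‖x‖ ≤ ‖p • x + q • y‖ := by
    intro p q
    rcases eq_or_ne p 0 with hp | hp
    · simp [hp, norm_nonneg]
    · have hrw : p • x + q • y = p • (x + (q / p) • y) := by
        rw [smul_add, smul_smul, mul_div_cancel₀ _ hp]
      rw [hrw, norm_smul, Real.norm_eq_abs]
      exact mul_le_mul_of_nonneg_left (hB (q / p)) (abs_nonneg p)
  -- basis
  have hcard : Fintype.card (Fin 2) = Module.finrank ℝ V := by simp [hdim]
  set b : Module.Basis (Fin 2) ℝ V := basisOfLinearIndependentOfCardEqFinrank hind hcard with hbdef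
  have hb0 : b 0 = x := by
    rw [hbdef, coe_basisOfLinearIndependentOfCardEqFinrank]; rfl
  have hb1 : b 1 = y := by
    rw [hbdef, coe_basisOfLinearIndependentOfCardEqFinrank]; rfl
  have hrepr : ∀ w : V, (b.repr w 0) • x + (b.repr w 1) • y = w := by
    intro w
    have h := b.sum_repr w
    rwa [Fin.sum_univ_two, hb0, hb1] at h
  -- the key norm computation for T z
  have main : ∀ z : V, ‖z‖ = 1 →
      T z = (2 * b.repr z 0) • x - z ∧ |b.repr z 0| * ‖x‖ ≤ 1 := by
    intro z hz1
    set p := b.repr z 0 with hp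
    set q := b.repr z 1 with hq
    have hz : p • x + q • y = z := hrepr z
    constructor
    · conv_lhs => rw [← hz]
      rw [map_add, map_smul, map_smul, hTx, hTy, ← hz]
      module
    · calc |p| * ‖x‖ ≤ ‖p • x + q • y‖ := key p q
        _ = 1 := by rw [hz, hz1]
  have bound : ∀ z : V, ‖z‖ = 1 → ‖T z‖ ≤ 3 := by
    intro z hz1
    obtain ⟨hTz, hple⟩ := main z hz1
    calc ‖T z‖ = ‖(2 * b.repr z 0) • x - z‖ := by rw [hTz]
      _ ≤ ‖(2 * b.repr z 0) • x‖ + ‖z‖ := norm_sub_le _ _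
      _ = |2 * b.repr z 0| * ‖x‖ + 1 := by rw [norm_smul, Real.norm_eq_abs, hz1]
      _ ≤ 3 := by
          rw [abs_mul, abs_two]
          nlinarith [hple, abs_nonneg (b.repr z 0), norm_nonneg x]
  constructor
  · intro z hzs
    exact bound z (mem_sphere_zero_iff_norm.mp hzs)
  · rintro ⟨z, hzs, hz3⟩
    have hz1 : ‖z‖ = 1 := mem_sphere_zero_iff_norm.mp hzs
    obtain ⟨hTz, hple⟩ := main z hz1
    set p := b.repr z 0 with hpdef
    set q := b.repr z 1 with hqdef
    have hz : p • x + q • y = z := hrepr z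
    -- equality forces |p| * ‖x‖ = 1
    have hpeq : |p| * ‖x‖ = 1 := by
      by_contra hne
      have hlt : |p| * ‖x‖ < 1 := lt_of_le_of_ne hple hne
      have : ‖T z‖ < 3 := by
        calc ‖T z‖ = ‖(2 * p) • x - z‖ := by rw [hTz]
          _ ≤ ‖(2 * p) • x‖ + ‖z‖ := norm_sub_le _ _
          _ = |2 * p| * ‖x‖ + 1 := by rw [norm_smul, Real.norm_eq_abs, hz1]
          _ < 3 := by rw [abs_mul, abs_two]; nlinarith
      linarith [this, hz3.ge]
    have hp0 : p ≠ 0 := by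
      intro h; rw [h] at hpeq; simp at hpeq
    have hxnorm : ‖x‖ = |p|⁻¹ := by
      field_simp
      linarith [hpeq, mul_comm |p| ‖x‖]
    -- the element where triangle equality holds
    have hu0norm : ‖p • x‖ = 1 := by rw [norm_smul, Real.norm_eq_abs, hpeq]
    have hw0norm : ‖(2 * p) • x - z‖ = 3 := by rw [← hTz, hz3]
    have hw0ne : (2 * p) • x - z ≠ 0 := by
      intro h; rw [h, norm_zero] at hw0norm; norm_num at hw0norm
    obtain ⟨f, hfnorm, hfw0⟩ := exists_dual_vector ℝ ((2 * p) • x - z) (norm_ne_zero_iff.mpr hw0ne)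
    rw [hw0norm] at hfw0
    have hfw0' : 2 * (p * f x) - f z = 3 := by
      have h2 : f ((2 * p) • x - z) = 2 * (p * f x) - f z := by
        simp only [map_sub, map_smul, smul_eq_mul]; ring
      rw [h2] at hfw0
      exact_mod_cast hfw0
    have hfu0le : p * f x ≤ 1 := by
      calc p * f x = f (p • x) := by simp [map_smul]
        _ ≤ |f (p • x)| := le_abs_self _
        _ ≤ ‖f‖ * ‖p • x‖ := f.le_opNorm _
        _ = 1 := by rw [hfnorm, hu0norm, one_mul]
    have hfzle : -f z ≤ 1 := by
      calc -f z ≤ |f z| := neg_le_abs _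
        _ ≤ ‖f‖ * ‖z‖ := f.le_opNorm z
        _ = 1 := by rw [hfnorm, hz1, one_mul]
    have hfx : p * f x = 1 := by linarith
    have hfz : f z = -1 := by linarith
    have hq0 : q ≠ 0 := by
      intro h
      have hzu : z = p • x := by rw [← hz, h]; simp
      have : f z = p * f x := by rw [hzu]; simp [map_smul]
      rw [hfz, hfx] at this; norm_num at this
    -- the second functional
    set g : V →ₗ[ℝ] ℝ := p⁻¹ • b.coord 0 with hgdef
    have hgval : ∀ w : V, g w = p⁻¹ * b.repr w 0 := by
      intro w; rw [hgdef]; simp [Module.Basis.coord_apply]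
    have hgx : p * g x = 1 := by
      have hx0 : b.repr x 0 = 1 := by rw [← hb0, b.repr_self]; simp
      rw [hgval, hx0]; field_simp
    have hgz : g z = 1 := by
      rw [hgval, ← hpdef]; field_simp
    have hgbound : ∀ w : V, |g w| ≤ ‖w‖ := by
      intro w
      rw [hgval, abs_mul, abs_inv]
      calc |p|⁻¹ * |b.repr w 0| = |b.repr w 0| * ‖x‖ := by rw [hxnorm]; ring
        _ ≤ ‖(b.repr w 0) • x + (b.repr w 1) • y‖ := key _ _
        _ = ‖w‖ := by rw [hrepr w]
    -- the norm is the max of the two functionals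
    have hnorm : ∀ w : V, ‖w‖ = max |f w| |g w| := by
      intro w
      apply le_antisymm
      · set r := b.repr w 0 with hr
        set s := b.repr w 1 with hs
        set β : ℝ := -s / q with hβ
        set α : ℝ := r / p + β with hα
        have hw : α • (p • x) + β • (-z) = w := by
          rw [← hz, ← hrepr w, ← hr, ← hs]
          match_scalars
          · rw [hα]; linear_combination mul_div_cancel₀ r hp0
          · rw [hβ]; linear_combination div_mul_cancel₀ s hq0
        have h1 : ‖w‖ ≤ |α| + |β| := by
          rw [← hw]
          calc ‖α • (p • x) + β • (-z)‖ ≤ ‖α • (p • x)‖ + ‖β • (-z)‖ := norm_add_le _ _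
            _ = |α| * ‖p • x‖ + |β| * ‖z‖ := by
                rw [norm_smul α (p • x), norm_smul β (-z), norm_neg,
                  Real.norm_eq_abs, Real.norm_eq_abs]
            _ = |α| + |β| := by rw [hu0norm, hz1]; ring
        have hf : f w = α + β := by
          rw [← hw]
          simp only [map_add, map_smul, map_neg, smul_eq_mul]
          linear_combination α * hfx - β * hfz
        have hg : g w = α - β := by
          rw [← hw]
          simp only [map_add, map_smul, map_neg, smul_eq_mul]
          linear_combination α * hgx - β * hgz
        rw [hf, hg]
        exact h1.trans (abs_add_abs_le_max α β)
      · apply max_le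
        · calc |f w| ≤ ‖f‖ * ‖w‖ := f.le_opNorm w
            _ = ‖w‖ := by rw [hfnorm, one_mul]
        · exact hgbound w
    -- build the isometry
    set L : V →ₗ[ℝ] (Fin 2 → ℝ) :=
      LinearMap.pi (fun i => ![(f : V →ₗ[ℝ] ℝ), g] i) with hLdef
    have hL0 : ∀ w : V, L w 0 = f w := fun w => rfl
    have hL1 : ∀ w : V, L w 1 = g w := fun w => rfl
    have hLnorm : ∀ w : V, ‖L w‖ = ‖w‖ := by
      intro w
      apply le_antisymm
      · rw [pi_norm_le_iff_of_nonneg (norm_nonneg w)]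
        intro i
        fin_cases i
        · show ‖L w 0‖ ≤ ‖w‖
          rw [hL0, Real.norm_eq_abs, hnorm w]; exact le_max_left _ _
        · show ‖L w 1‖ ≤ ‖w‖
          rw [hL1, Real.norm_eq_abs, hnorm w]; exact le_max_right _ _
      · rw [hnorm w]
        apply max_le
        · calc |f w| = ‖L w 0‖ := by rw [hL0, Real.norm_eq_abs]
            _ ≤ ‖L w‖ := norm_le_pi_norm (L w) 0
        · calc |g w| = ‖L w 1‖ := by rw [hL1, Real.norm_eq_abs]
            _ ≤ ‖L w‖ := norm_le_pi_norm (L w) 1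
    have hinj : Function.Injective L := by
      intro w w' h
      have h0 : ‖w - w'‖ = 0 := by
        rw [← hLnorm, map_sub, h, sub_self, norm_zero]
      exact sub_eq_zero.mp (norm_eq_zero.mp h0)
    have hfr : Module.finrank ℝ V = Module.finrank ℝ (Fin 2 → ℝ) := by
      simp [hdim]
    exact ⟨{ toLinearEquiv := L.linearEquivOfInjective hinj hfr,
             norm_map' := fun w => by
               simpa [LinearMap.linearEquivOfInjective_apply] using hLnorm w }⟩
end

section
/- Let (V, ‖·‖) be a Minkowski plane and let x, y ∈ V be linearly independent vectors with x ⊣_B y. Let T_{xy} : V → V be the linear map with T_{xy}(x) = x and T_{xy}(y) = −y. Then sup_{z ∈ S} ‖T_{xy}(z)‖ ≤ 3 and inf_{w ∈ S} ‖T_{xy}(w)‖ ≥ 1/3; moreover sup_{z ∈ S} ‖T_{xy}(z)‖ = (inf_{w ∈ S} ‖T_{xy}(w)‖)^{−1}, and if equality holds in either bound then the plane is rectilinear (its unit ball is a parallelogram). -/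
open Metric

section Helpers

variable {V : Type*} [NormedAddCommGroup V] [NormedSpace ℝ V]

lemma birk_smul {x y : V} (hB : BirkhoffOrth x y) (a b : ℝ) :
    ‖a • x‖ ≤ ‖a • x + b • y‖ := by
  rcases eq_or_ne a 0 with h | h
  · simp [h]
  · have hab : a * (b / a) = b := by field_simp
    have : a • x + b • y = a • (x + (b / a) • y) := by
      rw [smul_add, smul_smul, hab]
    rw [this, norm_smul, norm_smul]
    exact mul_le_mul_of_nonneg_left (hB (b / a)) (norm_nonneg a)

lemma pi_fin2_norm (f : Fin 2 → ℝ) : ‖f‖ = max |f 0| |f 1| := by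
  apply le_antisymm
  · refine (pi_norm_le_iff_of_nonneg (le_max_iff.2 (Or.inl (abs_nonneg _)))).2 ?_
    intro i
    fin_cases i
    · exact le_max_left _ _
    · exact le_max_right _ _
  · exact max_le (by simpa [Real.norm_eq_abs] using norm_le_pi_norm f 0)
      (by simpa [Real.norm_eq_abs] using norm_le_pi_norm f 1)

lemma abs_sub_add_abs_add (a b : ℝ) : |a - b| + |a + b| = 2 * max |a| |b| := by
  rcases abs_cases (a - b) with ⟨h1, _⟩ | ⟨h1, _⟩ <;>
    rcases abs_cases (a + b) with ⟨h2, _⟩ | ⟨h2, _⟩ <;>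
    rcases max_cases |a| |b| with ⟨h3, _⟩ | ⟨h3, _⟩ <;>
    rcases abs_cases a with ⟨h4, _⟩ | ⟨h4, _⟩ <;>
    rcases abs_cases b with ⟨h5, _⟩ | ⟨h5, _⟩ <;>
    linarith

lemma rectilinear_of_config (hdim : Module.finrank ℝ V = 2) (u w : V)
    (hindep : LinearIndependent ℝ ![u, w])
    (hu : ‖u‖ = 1) (hw : ‖w‖ = 1) (hc : ‖u + (2:ℝ) • w‖ = 1)
    (hbirk : ∀ t : ℝ, 1 ≤ ‖u + t • w‖) : Rectilinear V := by
  -- the segment from -u to u + 2w lies on the unit sphere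
  have hseg : ∀ τ : ℝ, 0 ≤ τ → τ ≤ 1 → ‖(2*τ-1) • u + (2*τ) • w‖ = 1 := by
    intro τ h0 h1
    have hs_le : ‖(2*τ-1) • u + (2*τ) • w‖ ≤ 1 := by
      have hid : (2*τ-1) • u + (2*τ) • w = (1-τ) • (-u) + τ • (u + (2:ℝ) • w) := by
        module
      rw [hid]
      calc ‖(1-τ) • (-u) + τ • (u + (2:ℝ) • w)‖
          ≤ ‖(1-τ) • (-u)‖ + ‖τ • (u + (2:ℝ) • w)‖ := norm_add_le _ _
        _ = |1-τ| * 1 + |τ| * 1 := by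
            rw [norm_smul, norm_smul, norm_neg, hu, hc, Real.norm_eq_abs, Real.norm_eq_abs]
        _ = 1 := by rw [abs_of_nonneg (by linarith), abs_of_nonneg h0]; ring
    have hs_ge : 1 ≤ ‖(2*τ-1) • u + (2*τ) • w‖ := by
      rcases le_total τ (1/2) with hτ | hτ
      · have hid : (2*(1-τ)) • w = ((2*τ-1) • u + (2*τ) • w) + (1-2*τ) • (u + (2:ℝ) • w) := by
          module
        have h2 : 2*(1-τ) = ‖(2*(1-τ)) • w‖ := by
          rw [norm_smul, hw, Real.norm_eq_abs, abs_of_nonneg (by linarith), mul_one]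
        have h3 : ‖(2*(1-τ)) • w‖ ≤ ‖(2*τ-1) • u + (2*τ) • w‖ + (1-2*τ) := by
          rw [hid]
          calc ‖((2*τ-1) • u + (2*τ) • w) + (1-2*τ) • (u + (2:ℝ) • w)‖
              ≤ ‖(2*τ-1) • u + (2*τ) • w‖ + ‖(1-2*τ) • (u + (2:ℝ) • w)‖ := norm_add_le _ _
            _ = ‖(2*τ-1) • u + (2*τ) • w‖ + (1-2*τ) := by
                rw [norm_smul, hc, Real.norm_eq_abs, abs_of_nonneg (by linarith), mul_one]
        linarith
      · have hid : (2*τ) • w = ((2*τ-1) • u + (2*τ) • w) + (2*τ-1) • (-u) := by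
          module
        have h2 : 2*τ = ‖(2*τ) • w‖ := by
          rw [norm_smul, hw, Real.norm_eq_abs, abs_of_nonneg (by linarith), mul_one]
        have h3 := norm_add_le ((2*τ-1) • u + (2*τ) • w) ((2*τ-1) • (-u))
        rw [← hid, ← h2] at h3
        have h4 : ‖(2*τ-1) • (-u)‖ = 2*τ-1 := by
          rw [norm_smul, norm_neg, hu, mul_one, Real.norm_eq_abs]
          exact abs_of_nonneg (by linarith)
        rw [h4] at h3
        linarith
    linarith
  -- first coordinate bound from Birkhoff orthogonality
  have halpha : ∀ α β : ℝ, |α| ≤ ‖α • u + β • w‖ := by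
    intro α β
    rcases eq_or_ne α 0 with h | h
    · simp [h]
    · have hab : α * (β / α) = β := by field_simp
      have hid : α • u + β • w = α • (u + (β/α) • w) := by rw [smul_add, smul_smul, hab]
      rw [hid, norm_smul, Real.norm_eq_abs]
      calc |α| = |α| * 1 := by ring
        _ ≤ |α| * ‖u + (β/α) • w‖ := mul_le_mul_of_nonneg_left (hbirk (β/α)) (abs_nonneg α)
  -- second coordinate bound from the segment
  have hg1 : ∀ α β : ℝ, ‖α • u + β • w‖ ≤ 1 → β - α ≤ 1 := by
    intro α β hz
    have hα : |α| ≤ 1 := le_trans (halpha α β) hz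
    obtain ⟨hα1, hα2⟩ := abs_le.1 hα
    have hseg' := hseg ((1-α)/2) (by linarith) (by linarith)
    rw [show 2*((1-α)/2)-1 = -α from by ring, show 2*((1-α)/2) = 1-α from by ring] at hseg'
    have hsum : (α • u + β • w) + ((-α) • u + (1-α) • w) = (β + 1 - α) • w := by module
    have hb : |β + 1 - α| ≤ 2 := by
      have h4 := norm_add_le (α • u + β • w) ((-α) • u + (1-α) • w)
      rw [hsum, norm_smul, hw, mul_one, Real.norm_eq_abs] at h4
      linarith
    linarith [le_abs_self (β + 1 - α), (abs_le.1 hb).2]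
  have hgb : ∀ α β : ℝ, |β - α| ≤ ‖α • u + β • w‖ := by
    intro α β
    have hn0 : (0:ℝ) ≤ ‖α • u + β • w‖ := norm_nonneg _
    rcases eq_or_lt_of_le hn0 with h0 | hpos
    · have hz0 : α • u + β • w = 0 := norm_eq_zero.1 h0.symm
      obtain ⟨hα, hβ⟩ := (LinearIndependent.pair_iff.1 hindep) α β hz0
      simp [hα, hβ]
    · set n := ‖α • u + β • w‖ with hn
      have hne : n ≠ 0 := ne_of_gt hpos
      have hid : (α/n) • u + (β/n) • w = n⁻¹ • (α • u + β • w) := by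
        rw [smul_add, smul_smul, smul_smul, div_eq_inv_mul, div_eq_inv_mul]
      have hzn : ‖(α/n) • u + (β/n) • w‖ = 1 := by
        rw [hid, norm_smul, Real.norm_eq_abs, abs_inv, abs_of_nonneg hn0, ← hn,
          inv_mul_cancel₀ hne]
      have h1 := hg1 (α/n) (β/n) (le_of_eq hzn)
      have hidneg : (-(α/n)) • u + (-(β/n)) • w = -((α/n) • u + (β/n) • w) := by module
      have h2 := hg1 (-(α/n)) (-(β/n)) (by rw [hidneg, norm_neg]; exact le_of_eq hzn)
      rw [div_sub_div_same] at h1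
      have h1' : β - α ≤ n := by
        have := (div_le_one hpos).1 h1
        linarith
      have h2' : α - β ≤ n := by
        have h2'' : (α - β)/n ≤ 1 := by
          have : -(β/n) - -(α/n) = (α - β)/n := by ring
          linarith [this ▸ h2]
        have := (div_le_one hpos).1 h2''
        linarith
      exact abs_le.2 ⟨by linarith, h1'⟩
  -- upper bound
  have hub : ∀ α β : ℝ, ‖α • u + β • w‖ ≤ max |α| |β - α| := by
    intro α β
    have hid : α • u + β • w
        = ((α-(β-α))/2) • u + ((α+(β-α))/2) • (u + (2:ℝ) • w) := by module
    have habs := abs_sub_add_abs_add α (β - α)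
    calc ‖α • u + β • w‖
        = ‖((α-(β-α))/2) • u + ((α+(β-α))/2) • (u + (2:ℝ) • w)‖ := by rw [hid]
      _ ≤ ‖((α-(β-α))/2) • u‖ + ‖((α+(β-α))/2) • (u + (2:ℝ) • w)‖ := norm_add_le _ _
      _ = |α-(β-α)|/2 + |α+(β-α)|/2 := by
          rw [norm_smul, norm_smul, hu, hc, mul_one, mul_one, Real.norm_eq_abs,
            Real.norm_eq_abs, abs_div, abs_div]
          norm_num
      _ ≤ max |α| |β - α| := by linarith
  have hnorm : ∀ α β : ℝ, ‖α • u + β • w‖ = max |α| |β - α| := fun α β =>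
    le_antisymm (hub α β) (max_le (halpha α β) (hgb α β))
  -- basis for the isometry
  have hindep2 : LinearIndependent ℝ ![u + w, w] := by
    rw [LinearIndependent.pair_iff] at hindep ⊢
    intro s t hst
    have hid : s • u + (s + t) • w = s • (u + w) + t • w := by module
    obtain ⟨h1, h2⟩ := hindep s (s + t) (hid.trans hst)
    exact ⟨h1, by linarith⟩
  let e : Module.Basis (Fin 2) ℝ V := basisOfLinearIndependentOfCardEqFinrank hindep2 (by simp [hdim])
  have he : ⇑e = ![u + w, w] := coe_basisOfLinearIndependentOfCardEqFinrank _ _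
  refine ⟨{ e.equivFun with norm_map' := ?_ }⟩
  intro z
  have hz := e.sum_repr z
  rw [Fin.sum_univ_two, he] at hz
  simp only [Matrix.cons_val_zero, Matrix.cons_val_one, Matrix.head_cons] at hz
  set A := e.repr z 0 with hA
  set B := e.repr z 1 with hB
  have hzid : z = A • u + (A + B) • w := by rw [← hz]; module
  have hval : ‖z‖ = max |A| |B| := by
    rw [hzid, hnorm, show A + B - A = B from by ring]
  have : ‖e.equivFun z‖ = max |A| |B| := by
    rw [pi_fin2_norm]
    simp [Module.Basis.equivFun_apply, hA, hB]
  rw [this, hval]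

end Helpers

/-- **Corollary.** Let `x ⊣_B y` be linearly independent vectors in a Minkowski plane and
let `T_{xy}` be the linear map with `T_{xy} x = x`, `T_{xy} y = -y`.  Then
`sup_{z ∈ S} ‖T_{xy} z‖ ≤ 3` and `inf_{w ∈ S} ‖T_{xy} w‖ ≥ 1/3`; moreover the supremum is
the inverse of the infimum, and if equality holds in either bound then the plane is
rectilinear. -/
theorem sup_inf_reflection_bounds
    (V : Type*) [NormedAddCommGroup V] [NormedSpace ℝ V]
    (hdim : Module.finrank ℝ V = 2)
    (x y : V) (hind : LinearIndependent ℝ ![x, y]) (hB : BirkhoffOrth x y)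
    (T : V →ₗ[ℝ] V) (hTx : T x = x) (hTy : T y = -y) :
    sSup ((fun z => ‖T z‖) '' sphere (0 : V) 1) ≤ 3 ∧
    (1/3 : ℝ) ≤ sInf ((fun z => ‖T z‖) '' sphere (0 : V) 1) ∧
    sSup ((fun z => ‖T z‖) '' sphere (0 : V) 1) =
      (sInf ((fun z => ‖T z‖) '' sphere (0 : V) 1))⁻¹ ∧
    ((sSup ((fun z => ‖T z‖) '' sphere (0 : V) 1) = 3 ∨
      sInf ((fun z => ‖T z‖) '' sphere (0 : V) 1) = 1/3) → Rectilinear V) := by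
  haveI : FiniteDimensional ℝ V := FiniteDimensional.of_finrank_eq_succ hdim
  have hx : x ≠ 0 := by have := hind.ne_zero 0; simpa using this
  haveI : Nontrivial V := ⟨⟨x, 0, hx⟩⟩
  let b0 : Module.Basis (Fin 2) ℝ V := basisOfLinearIndependentOfCardEqFinrank hind (by simp [hdim])
  have hb0c : ⇑b0 = ![x, y] := coe_basisOfLinearIndependentOfCardEqFinrank _ _
  have hb0 : ∀ z : V, z = (b0.repr z 0) • x + (b0.repr z 1) • y := by
    intro z
    have hz := b0.sum_repr z
    rw [Fin.sum_univ_two, hb0c] at hz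
    simp only [Matrix.cons_val_zero, Matrix.cons_val_one, Matrix.head_cons] at hz
    exact hz.symm
  have hT : ∀ z : V, T z = (b0.repr z 0) • x - (b0.repr z 1) • y := by
    intro z
    conv_lhs => rw [hb0 z]
    rw [map_add, map_smul, map_smul, hTx, hTy, smul_neg, ← sub_eq_add_neg]
  have hTbound : ∀ z : V, ‖T z‖ ≤ 3 * ‖z‖ := by
    intro z
    set a := b0.repr z 0 with ha
    set b := b0.repr z 1 with hbb
    have key : ‖a • x‖ ≤ ‖z‖ := by
      calc ‖a • x‖ ≤ ‖a • x + b • y‖ := birk_smul hB a b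
        _ = ‖z‖ := by rw [← hb0 z]
    have hid : a • x - b • y = (2:ℝ) • (a • x) - (a • x + b • y) := by module
    calc ‖T z‖ = ‖(2:ℝ) • (a • x) - (a • x + b • y)‖ := by rw [hT z, hid]
      _ ≤ ‖(2:ℝ) • (a • x)‖ + ‖a • x + b • y‖ := norm_sub_le _ _
      _ = 2 * ‖a • x‖ + ‖z‖ := by
          rw [norm_smul, ← hb0 z, Real.norm_eq_abs]
          norm_num
      _ ≤ 2 * ‖z‖ + ‖z‖ := by linarith
      _ = 3 * ‖z‖ := by ring
  have hTT : ∀ z : V, T (T z) = z := by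
    intro z
    conv_lhs => rw [hT z]
    rw [map_sub, map_smul, map_smul, hTx, hTy, smul_neg, sub_neg_eq_add, ← hb0 z]
  have hTlow : ∀ z : V, ‖z‖ ≤ 3 * ‖T z‖ := by
    intro z
    calc ‖z‖ = ‖T (T z)‖ := by rw [hTT]
      _ ≤ 3 * ‖T z‖ := hTbound _
  set S : Set ℝ := (fun z => ‖T z‖) '' sphere (0 : V) 1 with hS
  have hmemS : ∀ z ∈ sphere (0:V) 1, ‖z‖ = 1 := by
    intro z hz
    simpa using mem_sphere_zero_iff_norm.1 hz
  have hSele : ∀ r ∈ S, 1/3 ≤ r ∧ r ≤ 3 := by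
    rintro r ⟨z, hz, rfl⟩
    have h1 := hTbound z
    have h2 := hTlow z
    rw [hmemS z hz] at h1 h2
    constructor <;> linarith
  have hNE : S.Nonempty := (NormedSpace.sphere_nonempty.2 zero_le_one).image _
  have hBddA : BddAbove S := ⟨3, fun r hr => (hSele r hr).2⟩
  have hBddB : BddBelow S := ⟨1/3, fun r hr => (hSele r hr).1⟩
  have hsup3 : sSup S ≤ 3 := csSup_le hNE fun r hr => (hSele r hr).2
  have hinf3 : 1/3 ≤ sInf S := le_csInf hNE fun r hr => (hSele r hr).1
  have hinv : ∀ r ∈ S, r⁻¹ ∈ S := by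
    rintro r ⟨z, hz, rfl⟩
    have hz1 : ‖z‖ = 1 := hmemS z hz
    have hr0 : 0 < ‖T z‖ := by
      have := hTlow z; rw [hz1] at this; linarith
    refine ⟨(‖T z‖)⁻¹ • T z, ?_, ?_⟩
    · rw [mem_sphere_zero_iff_norm, norm_smul, Real.norm_eq_abs, abs_inv,
        abs_of_pos hr0, inv_mul_cancel₀ (ne_of_gt hr0)]
    · show ‖T ((‖T z‖)⁻¹ • T z)‖ = (‖T z‖)⁻¹
      rw [map_smul, hTT z, norm_smul, hz1, Real.norm_eq_abs, abs_inv, abs_of_pos hr0, mul_one]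
  have hsuppos : 0 < sSup S := by
    obtain ⟨r, hr⟩ := hNE
    have := (hSele r hr).1
    have := le_csSup hBddA hr
    linarith
  have hinfpos : 0 < sInf S := lt_of_lt_of_le (by norm_num) hinf3
  have hsupinf : sSup S = (sInf S)⁻¹ := by
    apply le_antisymm
    · apply csSup_le hNE
      intro r hr
      have h1 : sInf S ≤ r⁻¹ := csInf_le hBddB (hinv r hr)
      have hrpos : 0 < r := lt_of_lt_of_le (by norm_num) (hSele r hr).1
      calc r = (r⁻¹)⁻¹ := (inv_inv r).symm
        _ ≤ (sInf S)⁻¹ := by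
            apply inv_anti₀ hinfpos h1
    · have hkey : (sSup S)⁻¹ ≤ sInf S := by
        apply le_csInf hNE
        intro r hr
        have h1 : r⁻¹ ≤ sSup S := le_csSup hBddA (hinv r hr)
        have hrpos : 0 < r := lt_of_lt_of_le (by norm_num) (hSele r hr).1
        calc (sSup S)⁻¹ ≤ (r⁻¹)⁻¹ := inv_anti₀ (inv_pos.2 hrpos) h1
          _ = r := inv_inv r
      calc (sInf S)⁻¹ ≤ ((sSup S)⁻¹)⁻¹ := inv_anti₀ (inv_pos.2 hsuppos) hkey
        _ = sSup S := inv_inv _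
  refine ⟨hsup3, hinf3, hsupinf, ?_⟩
  intro hcase
  have hsup_eq : sSup S = 3 := by
    rcases hcase with h | h
    · exact h
    · rw [hsupinf, h]; norm_num
  have hcont : Continuous fun z : V => ‖T z‖ := T.continuous_of_finiteDimensional.norm
  obtain ⟨z0, hz0S, hz0max⟩ := (isCompact_sphere (0:V) 1).exists_isMaxOn
    (NormedSpace.sphere_nonempty.2 zero_le_one) hcont.continuousOn
  have hz0val : ‖T z0‖ = 3 := by
    have h1 : sSup S ≤ ‖T z0‖ := csSup_le hNE (by rintro r ⟨z, hz, rfl⟩; exact hz0max hz)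
    have h2 : ‖T z0‖ ≤ 3 := (hSele _ ⟨z0, hz0S, rfl⟩).2
    rw [hsup_eq] at h1
    linarith
  -- geometry of the equality case
  set a := b0.repr z0 0 with ha
  set b := b0.repr z0 1 with hbb
  have hz01 : ‖z0‖ = 1 := hmemS z0 hz0S
  have hzdecomp : z0 = a • x + b • y := hb0 z0
  have hz1' : ‖a • x + b • y‖ = 1 := by rw [← hzdecomp]; exact hz01
  have huv3 : ‖a • x - b • y‖ = 3 := by rw [← hT z0]; exact hz0val
  have key : ‖a • x‖ ≤ 1 := by
    calc ‖a • x‖ ≤ ‖a • x + b • y‖ := birk_smul hB a b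
      _ = 1 := hz1'
  have hu1 : ‖a • x‖ = 1 := by
    have hid : a • x - b • y = (2:ℝ) • (a • x) - (a • x + b • y) := by module
    have h4 : ‖a • x - b • y‖ ≤ ‖(2:ℝ) • (a • x)‖ + ‖a • x + b • y‖ := by
      rw [hid]; exact norm_sub_le _ _
    rw [huv3, hz1', norm_smul, Real.norm_eq_abs] at h4
    have : (3:ℝ) ≤ 2 * ‖a • x‖ + 1 := by
      have habs : |(2:ℝ)| = 2 := by norm_num
      rw [habs] at h4
      linarith
    linarith
  have hv2 : ‖b • y‖ = 2 := by
    have hge : 2 ≤ ‖b • y‖ := by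
      have := norm_sub_le (a • x) (b • y)
      rw [huv3, hu1] at this
      linarith
    have hid : b • y = (a • x + b • y) - a • x := by module
    have hle : ‖b • y‖ ≤ 2 := by
      rw [hid]
      have := norm_sub_le (a • x + b • y) (a • x)
      rw [hz1', hu1] at this
      linarith
    linarith
  set u := a • x with hud
  set w := (b/2) • y with hwd
  have hw2 : (2:ℝ) • w = b • y := by
    rw [hwd, smul_smul]
    congr 1
    ring
  have hw1 : ‖w‖ = 1 := by
    have h2 : ‖(2:ℝ) • w‖ = 2 := by rw [hw2, hv2]
    rw [norm_smul, Real.norm_eq_abs] at h2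
    have : |(2:ℝ)| = 2 := by norm_num
    rw [this] at h2
    linarith
  have hc1 : ‖u + (2:ℝ) • w‖ = 1 := by rw [hw2]; exact hz1'
  have hbirkuw : ∀ t : ℝ, 1 ≤ ‖u + t • w‖ := by
    intro t
    have hid : u + t • w = a • x + (t * (b/2)) • y := by
      rw [hud, hwd, smul_smul]
    rw [hid]
    calc (1:ℝ) = ‖a • x‖ := hu1.symm
      _ ≤ ‖a • x + (t * (b/2)) • y‖ := birk_smul hB _ _
  have ha0 : a ≠ 0 := by
    intro h
    rw [hud, h, zero_smul, norm_zero] at hu1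
    norm_num at hu1
  have hb0' : b ≠ 0 := by
    intro h
    rw [h, zero_smul, norm_zero] at hv2
    norm_num at hv2
  have hindep_uw : LinearIndependent ℝ ![u, w] := by
    rw [LinearIndependent.pair_iff] at hind ⊢
    intro s t hst
    have hid : (s * a) • x + (t * (b/2)) • y = s • u + t • w := by
      rw [hud, hwd, smul_smul, smul_smul]
    obtain ⟨h1, h2⟩ := hind _ _ (hid.trans hst)
    constructor
    · rcases mul_eq_zero.1 h1 with h | h
      · exact h
      · exact absurd h ha0
    · rcases mul_eq_zero.1 h2 with h | h
      · exact h
      · exact absurd h (by simp [hb0'])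
  exact rectilinear_of_config hdim u w hindep_uw hu1 hw1 hc1 hbirkuw
end
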